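/- arXiv:1311.3044 — 6 statements merged into one kernel-verified Lean document; each statement's English description precedes it below -/
import Mathlib

section
/- Euler's pentagonal number theorem: for |q|<1, the infinite product ∏_{n≥1}(1−q^n) equals the sum ∑_{n∈ℤ} (−1)^n q^{n(3n+1)/2}. -/
open Finset Filter Topology

namespace Pentagonal

/-- `pentQ q a k = ∏_{i<k} (1 - q^(a+i))`, i.e. the q-Pochhammer `(q^a; q)_k`. -/
noncomputable def pentQ (q : ℂ) (a k : ℕ) : ℂ := ∏ i ∈ range k, (1 - q ^ (a + i))

/-- `pentG q a b = ∑_{k≥0} q^(b k) (q^a;q)_k`. -/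
noncomputable def pentG (q : ℂ) (a b : ℕ) : ℂ := ∑' k : ℕ, q ^ (b * k) * pentQ q a k

variable {q : ℂ}

lemma normQ_le (hq : ‖q‖ < 1) (a k : ℕ) (ha : 1 ≤ a) :
    ‖pentQ q a k‖ ≤ Real.exp (1 - ‖q‖)⁻¹ := by
  have h0 : (0:ℝ) ≤ ‖q‖ := norm_nonneg q
  have h1 : (0:ℝ) < 1 - ‖q‖ := by linarith
  calc ‖pentQ q a k‖ = ∏ i ∈ range k, ‖1 - q ^ (a + i)‖ := by
        rw [pentQ, norm_prod]
    _ ≤ ∏ i ∈ range k, Real.exp (‖q‖ ^ (a + i)) := by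
        refine Finset.prod_le_prod (fun i _ => norm_nonneg _) (fun i _ => ?_)
        calc ‖1 - q ^ (a + i)‖ ≤ ‖(1:ℂ)‖ + ‖q ^ (a + i)‖ := norm_sub_le _ _
          _ = ‖q‖ ^ (a + i) + 1 := by rw [norm_one, norm_pow]; ring
          _ ≤ Real.exp (‖q‖ ^ (a + i)) := Real.add_one_le_exp _
    _ = Real.exp (∑ i ∈ range k, ‖q‖ ^ (a + i)) := by rw [Real.exp_sum]
    _ ≤ Real.exp (1 - ‖q‖)⁻¹ := by
        refine Real.exp_le_exp.mpr ?_
        calc ∑ i ∈ range k, ‖q‖ ^ (a + i) ≤ ∑ i ∈ range k, ‖q‖ ^ i := by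
              refine Finset.sum_le_sum (fun i _ => ?_)
              exact pow_le_pow_of_le_one h0 hq.le (by omega)
          _ ≤ (1 - ‖q‖)⁻¹ := by
              refine Summable.sum_le_tsum (L := SummationFilter.unconditional ℕ) (range k) (fun i _ => by positivity) ?_ |>.trans ?_
              · exact summable_geometric_of_lt_one h0 hq
              · rw [tsum_geometric_of_lt_one h0 hq]

lemma summable_main (hq : ‖q‖ < 1) {a b : ℕ} (ha : 1 ≤ a) (hb : 1 ≤ b) :
    Summable (fun k : ℕ => q ^ (b * k) * pentQ q a k) := by
  have h0 : (0:ℝ) ≤ ‖q‖ := norm_nonneg q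
  refine Summable.of_norm_bounded (g := fun k => Real.exp (1 - ‖q‖)⁻¹ * ‖q‖ ^ k)
    ((summable_geometric_of_lt_one h0 hq).mul_left _) (fun k => ?_)
  rw [norm_mul, norm_pow]
  calc ‖q‖ ^ (b * k) * ‖pentQ q a k‖ ≤ ‖q‖ ^ k * Real.exp (1 - ‖q‖)⁻¹ := by
        refine mul_le_mul ?_ (normQ_le hq a k ha) (norm_nonneg _) (by positivity)
        exact pow_le_pow_of_le_one h0 hq.le (Nat.le_mul_of_pos_left k hb)
    _ = Real.exp (1 - ‖q‖)⁻¹ * ‖q‖ ^ k := by ring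

lemma normG_le (hq : ‖q‖ < 1) {a b : ℕ} (ha : 1 ≤ a) (hb : 1 ≤ b) :
    ‖pentG q a b‖ ≤ Real.exp (1 - ‖q‖)⁻¹ * (1 - ‖q‖)⁻¹ := by
  have h0 : (0:ℝ) ≤ ‖q‖ := norm_nonneg q
  have hsum : Summable (fun k : ℕ => Real.exp (1 - ‖q‖)⁻¹ * ‖q‖ ^ k) :=
    (summable_geometric_of_lt_one h0 hq).mul_left _
  calc ‖pentG q a b‖ ≤ ∑' k : ℕ, Real.exp (1 - ‖q‖)⁻¹ * ‖q‖ ^ k := by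
        refine tsum_of_norm_bounded hsum.hasSum (fun k => ?_)
        rw [norm_mul, norm_pow]
        calc ‖q‖ ^ (b * k) * ‖pentQ q a k‖ ≤ ‖q‖ ^ k * Real.exp (1 - ‖q‖)⁻¹ := by
              refine mul_le_mul ?_ (normQ_le hq a k ha) (norm_nonneg _) (by positivity)
              exact pow_le_pow_of_le_one h0 hq.le (Nat.le_mul_of_pos_left k hb)
          _ = Real.exp (1 - ‖q‖)⁻¹ * ‖q‖ ^ k := by ring
    _ = Real.exp (1 - ‖q‖)⁻¹ * (1 - ‖q‖)⁻¹ := by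
        rw [tsum_mul_left, tsum_geometric_of_lt_one h0 hq]

lemma pentQ_succ_left (a k : ℕ) : pentQ q a (k + 1) = (1 - q ^ a) * pentQ q (a + 1) k := by
  rw [pentQ, Finset.prod_range_succ', pentQ, add_zero, mul_comm]
  congr 1
  refine Finset.prod_congr rfl (fun i _ => ?_)
  congr 2
  omega

lemma pentQ_succ_right (a k : ℕ) : pentQ q a (k + 1) = pentQ q a k * (1 - q ^ (a + k)) := by
  rw [pentQ, Finset.prod_range_succ, pentQ]

/-- Relation (2): `G(a,b) = 1 + q^b (1-q^a) G(a+1,b)`. -/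
lemma rel2 (hq : ‖q‖ < 1) {a b : ℕ} (ha : 1 ≤ a) (hb : 1 ≤ b) :
    pentG q a b = 1 + q ^ b * (1 - q ^ a) * pentG q (a + 1) b := by
  have hs : Summable (fun k : ℕ => q ^ (b * k) * pentQ q a k) := summable_main hq ha hb
  rw [pentG, Summable.tsum_eq_zero_add hs]
  have h0 : q ^ (b * 0) * pentQ q a 0 = 1 := by simp [pentQ]
  rw [h0]
  congr 1
  have : ∀ k : ℕ, q ^ (b * (k + 1)) * pentQ q a (k + 1)
      = q ^ b * (1 - q ^ a) * (q ^ (b * k) * pentQ q (a + 1) k) := by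
    intro k
    rw [pentQ_succ_left, mul_add b k 1, pow_add]
    ring
  rw [tsum_congr this, tsum_mul_left, pentG]

/-- Relation (1): `(1 - q^b) G(a,b) = 1 - q^(a+b) G(a,b+1)`. -/
lemma rel1 (hq : ‖q‖ < 1) {a b : ℕ} (ha : 1 ≤ a) (hb : 1 ≤ b) :
    (1 - q ^ b) * pentG q a b = 1 - q ^ (a + b) * pentG q a (b + 1) := by
  have hs : Summable (fun k : ℕ => q ^ (b * k) * pentQ q a k) := summable_main hq ha hb
  have hs' : Summable (fun k : ℕ => q ^ ((b + 1) * k) * pentQ q a k) :=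
    summable_main hq ha (by omega)
  have key : (∑' k : ℕ, q ^ (b * k) * pentQ q a k)
      = 1 + (q ^ b * (∑' k : ℕ, q ^ (b * k) * pentQ q a k)
        - q ^ (a + b) * (∑' k : ℕ, q ^ ((b + 1) * k) * pentQ q a k)) := by
    conv_lhs => rw [Summable.tsum_eq_zero_add hs]
    have h0 : q ^ (b * 0) * pentQ q a 0 = 1 := by simp [pentQ]
    rw [h0]
    congr 1
    have hcong : ∀ k : ℕ, q ^ (b * (k + 1)) * pentQ q a (k + 1)
        = q ^ b * (q ^ (b * k) * pentQ q a k)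
          - q ^ (a + b) * (q ^ ((b + 1) * k) * pentQ q a k) := by
      intro k
      rw [pentQ_succ_right, mul_add b k 1, pow_add, pow_add, add_mul b 1 k, pow_add, pow_add]
      ring
    rw [tsum_congr hcong, Summable.tsum_sub ((hs.mul_left _)) ((hs'.mul_left _)),
      tsum_mul_left, tsum_mul_left]
  rw [pentG, pentG]
  linear_combination key

/-- `K m = (1-q^m) G(m+1, m)`. -/
noncomputable def pentK (q : ℂ) (m : ℕ) : ℂ := (1 - q ^ m) * pentG q (m + 1) m

lemma relK (hq : ‖q‖ < 1) {m : ℕ} (hm : 1 ≤ m) :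
    pentK q m = 1 - q ^ (2 * m + 1) - q ^ (3 * m + 2) * pentK q (m + 1) := by
  have h1 := rel1 hq (a := m + 1) (b := m) (by omega) hm
  have h2 := rel2 hq (a := m + 1) (b := m + 1) (by omega) (by omega)
  rw [pentK, h1, h2]
  rw [show m + 1 + m = 2 * m + 1 by omega]
  rw [pentK]
  rw [show m + 1 + 1 = m + 2 from rfl]
  rw [show (3 * m + 2) = (2 * m + 1) + (m + 1) by omega, pow_add]
  ring
/-- Pentagonal exponent accumulator: `pentE j = (3j²+7j)/2`. -/
def pentE : ℕ → ℕ
  | 0 => 0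
  | j + 1 => pentE j + (3 * j + 5)

lemma le_pentE (n : ℕ) : n ≤ pentE n := by
  induction n with
  | zero => simp [pentE]
  | succ j ih => rw [pentE]; omega

lemma normK_le (hq : ‖q‖ < 1) {m : ℕ} (hm : 1 ≤ m) :
    ‖pentK q m‖ ≤ 2 * (Real.exp (1 - ‖q‖)⁻¹ * (1 - ‖q‖)⁻¹) := by
  rw [pentK, norm_mul]
  have h1 : ‖1 - q ^ m‖ ≤ 2 := by
    calc ‖1 - q ^ m‖ ≤ ‖(1:ℂ)‖ + ‖q ^ m‖ := norm_sub_le _ _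
      _ ≤ 1 + 1 := by
          rw [norm_one, norm_pow]
          have := pow_le_one₀ (norm_nonneg q) hq.le (n := m)
          linarith
      _ = 2 := by norm_num
  have h2 := normG_le hq (a := m + 1) (b := m) (by omega) hm
  calc ‖1 - q ^ m‖ * ‖pentG q (m + 1) m‖ ≤ 2 * (Real.exp (1 - ‖q‖)⁻¹ * (1 - ‖q‖)⁻¹) := by
        refine mul_le_mul h1 h2 (norm_nonneg _) (by norm_num)

lemma unroll (hq : ‖q‖ < 1) (N : ℕ) :
    pentK q 1 = (∑ j ∈ range N, (-1 : ℂ) ^ j * q ^ pentE j * (1 - q ^ (2 * j + 3)))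
      + (-1 : ℂ) ^ N * q ^ pentE N * pentK q (N + 1) := by
  induction N with
  | zero => simp [pentE]
  | succ n ih =>
    rw [ih, Finset.sum_range_succ, relK hq (m := n + 1) (by omega)]
    rw [show 2 * (n + 1) + 1 = 2 * n + 3 by omega, show 3 * (n + 1) + 2 = 3 * n + 5 by omega,
      show pentE (n + 1) = pentE n + (3 * n + 5) from rfl, pow_add, pow_succ]
    ring

lemma hasSum_K1 (hq : ‖q‖ < 1) :
    HasSum (fun j : ℕ => (-1 : ℂ) ^ j * q ^ pentE j * (1 - q ^ (2 * j + 3))) (pentK q 1) := by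
  have h0 : (0:ℝ) ≤ ‖q‖ := norm_nonneg q
  have hb : ∀ j : ℕ, ‖(-1 : ℂ) ^ j * q ^ pentE j * (1 - q ^ (2 * j + 3))‖ ≤ 2 * ‖q‖ ^ j := by
    intro j
    rw [norm_mul, norm_mul, norm_pow, norm_pow, norm_neg, norm_one, one_pow, one_mul]
    have e1 : ‖q‖ ^ pentE j ≤ ‖q‖ ^ j := pow_le_pow_of_le_one h0 hq.le (le_pentE j)
    have e2 : ‖1 - q ^ (2 * j + 3)‖ ≤ 2 := by
      calc ‖1 - q ^ (2 * j + 3)‖ ≤ ‖(1:ℂ)‖ + ‖q ^ (2 * j + 3)‖ := norm_sub_le _ _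
        _ ≤ 1 + 1 := by
            rw [norm_one, norm_pow]
            have := pow_le_one₀ h0 hq.le (n := 2 * j + 3)
            linarith
        _ = 2 := by norm_num
    calc ‖q‖ ^ pentE j * ‖1 - q ^ (2 * j + 3)‖ ≤ ‖q‖ ^ j * 2 :=
          mul_le_mul e1 e2 (norm_nonneg _) (by positivity)
      _ = 2 * ‖q‖ ^ j := by ring
  have hsum : Summable (fun j : ℕ => (-1 : ℂ) ^ j * q ^ pentE j * (1 - q ^ (2 * j + 3))) :=
    Summable.of_norm_bounded ((summable_geometric_of_lt_one h0 hq).mul_left 2) hb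
  have ht := hsum.hasSum.tendsto_sum_nat
  have ht2 : Tendsto
      (fun N => (∑ j ∈ range N, (-1 : ℂ) ^ j * q ^ pentE j * (1 - q ^ (2 * j + 3))))
      atTop (𝓝 (pentK q 1)) := by
    have heq : ∀ N, (∑ j ∈ range N, (-1 : ℂ) ^ j * q ^ pentE j * (1 - q ^ (2 * j + 3)))
        = pentK q 1 - (-1 : ℂ) ^ N * q ^ pentE N * pentK q (N + 1) := by
      intro N
      have := unroll hq N
      linear_combination -this
    rw [funext heq]
    have hz : Tendsto (fun N : ℕ => (-1 : ℂ) ^ N * q ^ pentE N * pentK q (N + 1))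
        atTop (𝓝 0) := by
      apply squeeze_zero_norm (a := fun N => (2 * (Real.exp (1 - ‖q‖)⁻¹ * (1 - ‖q‖)⁻¹)) * ‖q‖ ^ N)
      · intro N
        rw [norm_mul, norm_mul, norm_pow, norm_pow, norm_neg, norm_one, one_pow, one_mul]
        have e1 : ‖q‖ ^ pentE N ≤ ‖q‖ ^ N := pow_le_pow_of_le_one h0 hq.le (le_pentE N)
        have e2 := normK_le hq (m := N + 1) (by omega)
        calc ‖q‖ ^ pentE N * ‖pentK q (N + 1)‖
            ≤ ‖q‖ ^ N * (2 * (Real.exp (1 - ‖q‖)⁻¹ * (1 - ‖q‖)⁻¹)) :=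
              mul_le_mul e1 e2 (norm_nonneg _) (by positivity)
          _ = (2 * (Real.exp (1 - ‖q‖)⁻¹ * (1 - ‖q‖)⁻¹)) * ‖q‖ ^ N := by ring
      · simpa using (tendsto_pow_atTop_nhds_zero_of_lt_one h0 hq).const_mul
          (2 * (Real.exp (1 - ‖q‖)⁻¹ * (1 - ‖q‖)⁻¹))
    simpa using tendsto_const_nhds.sub hz
  exact (tendsto_nhds_unique ht ht2) ▸ hsum.hasSum
lemma pentQ_one (N : ℕ) : pentQ q 1 N = ∏ n ∈ range N, (1 - q ^ (n + 1)) := by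
  rw [pentQ]
  exact Finset.prod_congr rfl (fun i _ => by rw [add_comm 1 i])

lemma prod_partial (N : ℕ) :
    ∏ n ∈ range N, (1 - q ^ (n + 1)) = 1 - ∑ k ∈ range N, q ^ (k + 1) * pentQ q 1 k := by
  induction N with
  | zero => simp
  | succ n ih =>
    rw [Finset.prod_range_succ, Finset.sum_range_succ, ih, pentQ_one, ih]
    ring

lemma factor_ne_zero (hq : ‖q‖ < 1) (n : ℕ) : 1 - q ^ (n + 1) ≠ 0 := by
  intro h
  have h1 : q ^ (n + 1) = 1 := by linear_combination -h
  have h2 : ‖q ^ (n + 1)‖ < 1 := by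
    rw [norm_pow]
    exact pow_lt_one₀ (norm_nonneg q) hq (Nat.succ_ne_zero n)
  rw [h1, norm_one] at h2
  exact lt_irrefl _ h2

lemma multipliable_factors (hq : ‖q‖ < 1) : Multipliable (fun n : ℕ => 1 - q ^ (n + 1)) := by
  have h0 : (0:ℝ) ≤ ‖q‖ := norm_nonneg q
  have h1 : (0:ℝ) < 1 - ‖q‖ := by linarith
  refine Complex.multipliable_of_summable_log ?_
  refine Summable.of_norm_bounded
    (g := fun n => ((1 - ‖q‖)⁻¹ / 2 + 1) * ‖q‖ ^ n)
    ((summable_geometric_of_lt_one h0 hq).mul_left _) (fun n => ?_)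
  have hz : ‖-(q ^ (n + 1))‖ < 1 := by
    rw [norm_neg, norm_pow]
    exact pow_lt_one₀ h0 hq (Nat.succ_ne_zero n)
  have hb := Complex.norm_log_one_add_le hz
  rw [show (1 : ℂ) + -(q ^ (n + 1)) = 1 - q ^ (n + 1) by ring] at hb
  rw [norm_neg, norm_pow] at hb
  have e1 : ‖q‖ ^ (n + 1) ≤ ‖q‖ ^ n := pow_le_pow_of_le_one h0 hq.le (by omega)
  have e2 : ‖q‖ ^ (n + 1) ≤ 1 := pow_le_one₀ h0 hq.le
  have hpos : (0:ℝ) < 1 - ‖q‖ ^ (n + 1) := by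
    have h6 : ‖q‖ ^ (n + 1) < 1 := pow_lt_one₀ h0 hq (by omega)
    linarith
  have e3 : (1 - ‖q‖ ^ (n + 1))⁻¹ ≤ (1 - ‖q‖)⁻¹ := by
    have e5 : ‖q‖ ^ (n + 1) ≤ ‖q‖ := pow_le_of_le_one h0 hq.le (Nat.succ_ne_zero n)
    exact inv_anti₀ h1 (by linarith)
  have hp : (0:ℝ) ≤ ‖q‖ ^ (n + 1) := by positivity
  calc ‖Complex.log (1 - q ^ (n + 1))‖
      ≤ (‖q‖ ^ (n + 1)) ^ 2 * (1 - ‖q‖ ^ (n + 1))⁻¹ / 2 + ‖q‖ ^ (n + 1) := hb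
    _ ≤ ‖q‖ ^ n * (1 - ‖q‖)⁻¹ / 2 + ‖q‖ ^ n := by
        have s2 : (‖q‖ ^ (n + 1)) ^ 2 ≤ ‖q‖ ^ n := by nlinarith
        have t1 : (‖q‖ ^ (n + 1)) ^ 2 * (1 - ‖q‖ ^ (n + 1))⁻¹ ≤ ‖q‖ ^ n * (1 - ‖q‖)⁻¹ :=
          mul_le_mul s2 e3 (inv_nonneg.mpr hpos.le) (by positivity)
        linarith
    _ = ((1 - ‖q‖)⁻¹ / 2 + 1) * ‖q‖ ^ n := by ring

lemma hasProd_eq (hq : ‖q‖ < 1) :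
    HasProd (fun n : ℕ => 1 - q ^ (n + 1)) (1 - q * pentG q 1 1) := by
  refine (multipliable_factors hq).hasProd_iff_tendsto_nat.mpr ?_
  have hs : Summable (fun k : ℕ => q ^ (1 * k) * pentQ q 1 k) :=
    summable_main hq le_rfl le_rfl
  have hs2 : HasSum (fun k : ℕ => q ^ (k + 1) * pentQ q 1 k) (q * pentG q 1 1) := by
    have h := hs.hasSum.mul_left q
    have hfun : (fun k : ℕ => q ^ (k + 1) * pentQ q 1 k)
        = fun k : ℕ => q * (q ^ (1 * k) * pentQ q 1 k) := by
      funext k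
      rw [one_mul, pow_succ]
      ring
    rw [pentG, hfun]
    exact h
  have ht := hs2.tendsto_sum_nat
  have heq : ∀ N : ℕ, ∏ n ∈ range N, (1 - q ^ (n + 1))
      = 1 - ∑ k ∈ range N, q ^ (k + 1) * pentQ q 1 k := prod_partial
  rw [funext heq]
  simpa using tendsto_const_nhds.sub ht
/-- `gA n = n(3n+1)/2`. -/
def gA : ℕ → ℕ
  | 0 => 0
  | n + 1 => gA n + (3 * n + 2)

/-- `gB n = (n+1)(3n+2)/2`. -/
def gB : ℕ → ℕ
  | 0 => 1
  | n + 1 => gB n + (3 * n + 4)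

lemma gA_cast (n : ℕ) : 2 * (gA n : ℤ) = n * (3 * n + 1) := by
  induction n with
  | zero => simp [gA]
  | succ m ih =>
    rw [show gA (m + 1) = gA m + (3 * m + 2) from rfl]
    push_cast
    push_cast at ih
    ring_nf
    ring_nf at ih
    linarith

lemma gB_cast (n : ℕ) : 2 * (gB n : ℤ) = (n + 1) * (3 * n + 2) := by
  induction n with
  | zero => simp [gB]
  | succ m ih =>
    rw [show gB (m + 1) = gB m + (3 * m + 4) from rfl]
    push_cast
    push_cast at ih
    ring_nf
    ring_nf at ih
    linarith

lemma toNat_pos (n : ℕ) : ((n : ℤ) * (3 * n + 1) / 2).toNat = gA n := by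
  rw [← gA_cast, Int.mul_ediv_cancel_left _ (by norm_num : (2:ℤ) ≠ 0), Int.toNat_natCast]

lemma toNat_neg (n : ℕ) : ((-(n + 1) : ℤ) * (3 * (-(n + 1) : ℤ) + 1) / 2).toNat = gB n := by
  have h : (-(n + 1) : ℤ) * (3 * (-(n + 1) : ℤ) + 1) = 2 * (gB n : ℤ) := by
    rw [gB_cast]
    ring
  rw [h, Int.mul_ediv_cancel_left _ (by norm_num : (2:ℤ) ≠ 0), Int.toNat_natCast]

lemma gA_succ_eq (j : ℕ) : gA (j + 1) = pentE j + 2 := by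
  induction j with
  | zero => rfl
  | succ m ih =>
    rw [show gA (m + 1 + 1) = gA (m + 1) + (3 * (m + 1) + 2) from rfl, ih,
      show pentE (m + 1) = pentE m + (3 * m + 5) from rfl]
    omega

lemma gB_succ_eq (j : ℕ) : gB (j + 1) = pentE j + (2 * j + 5) := by
  induction j with
  | zero => rfl
  | succ m ih =>
    rw [show gB (m + 1 + 1) = gB (m + 1) + (3 * (m + 1) + 4) from rfl, ih,
      show pentE (m + 1) = pentE m + (3 * m + 5) from rfl]
    omega

lemma summable_sign_pow (hq : ‖q‖ < 1) (c : ℕ → ℕ) (hc : ∀ j, j ≤ c j) :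
    Summable (fun j : ℕ => (-1 : ℂ) ^ j * q ^ c j) := by
  have h0 : (0:ℝ) ≤ ‖q‖ := norm_nonneg q
  refine Summable.of_norm_bounded (g := fun j => ‖q‖ ^ j)
    (summable_geometric_of_lt_one h0 hq) (fun j => ?_)
  rw [norm_mul, norm_pow, norm_pow, norm_neg, norm_one, one_pow, one_mul]
  exact pow_le_pow_of_le_one h0 hq.le (hc j)

theorem main (hq : ‖q‖ < 1) :
    (∏' n : ℕ, (1 - q ^ (n + 1))) =
      ∑' n : ℤ, (-1 : ℂ) ^ n * q ^ ((n * (3 * n + 1) / 2).toNat) := by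
  -- the two halves of the bilateral series
  have hSc : HasSum (fun j : ℕ => (-1 : ℂ) ^ j * q ^ pentE j)
      (∑' j : ℕ, (-1 : ℂ) ^ j * q ^ pentE j) :=
    (summable_sign_pow hq pentE le_pentE).hasSum
  have hSd : HasSum (fun j : ℕ => (-1 : ℂ) ^ j * q ^ (pentE j + (2 * j + 3)))
      (∑' j : ℕ, (-1 : ℂ) ^ j * q ^ (pentE j + (2 * j + 3))) :=
    (summable_sign_pow hq _ (fun j => by have := le_pentE j; omega)).hasSum
  set Sc := ∑' j : ℕ, (-1 : ℂ) ^ j * q ^ pentE j with hScdef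
  set Sd := ∑' j : ℕ, (-1 : ℂ) ^ j * q ^ (pentE j + (2 * j + 3)) with hSddef
  -- K1 = Sc - Sd
  have hK1 : pentK q 1 = Sc - Sd := by
    have hsub := hSc.sub hSd
    have hfun : (fun j : ℕ => (-1 : ℂ) ^ j * q ^ pentE j
          - (-1 : ℂ) ^ j * q ^ (pentE j + (2 * j + 3)))
        = fun j : ℕ => (-1 : ℂ) ^ j * q ^ pentE j * (1 - q ^ (2 * j + 3)) := by
      funext j
      rw [pow_add]
      ring
    rw [hfun] at hsub
    exact hasSum_K1 hq |>.unique hsub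
  -- positive side
  have hA : HasSum (fun n : ℕ => (-1 : ℂ) ^ n * q ^ gA n) (-(q ^ 2 * Sc) + 1) := by
    have hshift : HasSum (fun j : ℕ => (-1 : ℂ) ^ (j + 1) * q ^ gA (j + 1)) (-(q ^ 2 * Sc)) := by
      have h := hSc.mul_left (-(q ^ 2))
      have hfun : (fun j : ℕ => (-(q ^ 2)) * ((-1 : ℂ) ^ j * q ^ pentE j))
          = fun j : ℕ => (-1 : ℂ) ^ (j + 1) * q ^ gA (j + 1) := by
        funext j
        rw [gA_succ_eq, pow_add, pow_succ]
        ring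
      rw [hfun] at h
      simpa using h
    have := (hasSum_nat_add_iff (f := fun n : ℕ => (-1 : ℂ) ^ n * q ^ gA n) 1).mp hshift
    simpa [gA] using this
  -- negative side
  have hB : HasSum (fun n : ℕ => (-1 : ℂ) ^ (n + 1) * q ^ gB n) (q ^ 2 * Sd + (-q)) := by
    have hshift : HasSum (fun j : ℕ => (-1 : ℂ) ^ (j + 1 + 1) * q ^ gB (j + 1)) (q ^ 2 * Sd) := by
      have h := hSd.mul_left (q ^ 2)
      have hfun : (fun j : ℕ => (q ^ 2) * ((-1 : ℂ) ^ j * q ^ (pentE j + (2 * j + 3))))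
          = fun j : ℕ => (-1 : ℂ) ^ (j + 1 + 1) * q ^ gB (j + 1) := by
        funext j
        rw [gB_succ_eq, show pentE j + (2 * j + 5) = (pentE j + (2 * j + 3)) + 2 by omega,
          pow_add]
        ring
      rw [hfun] at h
      exact h
    have := (hasSum_nat_add_iff
      (f := fun n : ℕ => (-1 : ℂ) ^ (n + 1) * q ^ gB n) 1).mp hshift
    simpa [gB] using this
  -- assemble the bilateral sum
  have hZ : HasSum (fun n : ℤ => (-1 : ℂ) ^ n * q ^ ((n * (3 * n + 1) / 2).toNat))
      ((-(q ^ 2 * Sc) + 1) + (q ^ 2 * Sd + (-q))) := by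
    refine HasSum.of_nat_of_neg_add_one ?_ ?_
    · have hfun : (fun n : ℕ => (-1 : ℂ) ^ (n : ℤ) * q ^ (((n : ℤ) * (3 * n + 1) / 2).toNat))
          = fun n : ℕ => (-1 : ℂ) ^ n * q ^ gA n := by
        funext n
        rw [zpow_natCast, toNat_pos]
      rw [hfun]
      exact hA
    · have hfun : (fun n : ℕ =>
            (-1 : ℂ) ^ (-(n + 1) : ℤ) * q ^ (((-(n + 1) : ℤ) * (3 * (-(n + 1) : ℤ) + 1) / 2).toNat))
          = fun n : ℕ => (-1 : ℂ) ^ (n + 1) * q ^ gB n := by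
        funext n
        rw [toNat_neg]
        congr 1
        have hcast : (-(n + 1) : ℤ) = -(((n + 1) : ℕ) : ℤ) := by push_cast; ring
        rw [hcast, zpow_neg, zpow_natCast, ← inv_pow, inv_neg, inv_one]
      rw [hfun]
      exact hB
  -- conclude
  have hP := hasProd_eq hq
  rw [hP.tprod_eq, hZ.tsum_eq]
  have hG : pentG q 1 1 = 1 + q * pentK q 1 := by
    have h2 := rel2 hq (a := 1) (b := 1) le_rfl le_rfl
    rw [h2, pentK]
    ring_nf
  rw [hG, hK1]
  ring

end Pentagonal

/-- Euler's pentagonal number theorem: for `‖q‖ < 1`,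
`∏_{n≥1} (1 - q^n) = ∑_{n ∈ ℤ} (-1)^n q^{n(3n+1)/2}`. -/
theorem pentagonal_number_theorem (q : ℂ) (hq : ‖q‖ < 1) :
    (∏' n : ℕ, (1 - q ^ (n + 1))) =
      ∑' n : ℤ, (-1 : ℂ) ^ n * q ^ (n * (3 * n + 1) / 2).toNat := by
  exact Pentagonal.main hq
end

section
/- For |q|<1, the q-hypergeometric series ∑_{n=0}^∞ (−1)^n q^{n(n+1)/2} / (q;q)_n equals ∑_{n∈ℤ} (−1)^n q^{n(3n+1)/2}. -/
open Finset Filter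

namespace QPent

noncomputable def P (x : ℂ) (n : ℕ) : ℂ := ∏ j ∈ Finset.range n, (1 - x ^ (j + 1))

noncomputable def g (x : ℂ) : ℕ → ℕ → ℂ
  | 0, 0 => 1
  | 0, _ + 1 => 0
  | M + 1, 0 => g x M 0
  | M + 1, n + 1 => g x M (n + 1) + x ^ (M - n) * g x M n

lemma g_zero_of_lt (x : ℂ) : ∀ M n, M < n → g x M n = 0 := by
  intro M
  induction M with
  | zero => intro n hn; match n, hn with
    | n + 1, _ => rfl
  | succ M ih =>
    intro n hn
    match n, hn with
    | n + 1, hn =>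
      show g x M (n + 1) + x ^ (M - n) * g x M n = 0
      rw [ih (n+1) (by omega), ih n (by omega), mul_zero, add_zero]

lemma P_zero (x : ℂ) : P x 0 = 1 := rfl

lemma P_succ (x : ℂ) (n : ℕ) : P x (n + 1) = P x n * (1 - x ^ (n + 1)) :=
  Finset.prod_range_succ _ n

lemma P_ne_zero {x : ℂ} (hx : ∀ k, 1 ≤ k → 1 - x ^ k ≠ 0) (n : ℕ) : P x n ≠ 0 := by
  induction n with
  | zero => simp [P]
  | succ n ih => rw [P_succ]; exact mul_ne_zero ih (hx (n+1) (by omega))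

lemma g_eq {x : ℂ} (hx : ∀ k, 1 ≤ k → 1 - x ^ k ≠ 0) :
    ∀ M n, n ≤ M → g x M n = P x M / (P x n * P x (M - n)) := by
  intro M
  induction M with
  | zero => intro n hn; interval_cases n; simp [g, P]
  | succ M ih =>
    intro n hn
    match n with
    | 0 =>
      show g x M 0 = _
      rw [ih 0 (by omega)]
      rw [P_zero, one_mul, one_mul, Nat.sub_zero, Nat.sub_zero,
        div_self (P_ne_zero hx M), div_self (P_ne_zero hx (M+1))]
    | n + 1 =>
      show g x M (n + 1) + x ^ (M - n) * g x M n = _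
      rcases Nat.lt_or_ge M (n + 1) with h | h
      · -- n = M
        have hnM : n = M := by omega
        subst hnM
        rw [g_zero_of_lt x n (n+1) (by omega), ih n le_rfl, zero_add]
        simp only [Nat.sub_self, Nat.add_sub_cancel_left, pow_zero, one_mul]
        rw [P_zero, mul_one, mul_one, div_self (P_ne_zero hx n),
          div_self (P_ne_zero hx (n+1))]
      · obtain ⟨k, rfl⟩ : ∃ k, M = n + 1 + k := ⟨M - (n+1), by omega⟩
        rw [ih (n+1) h, ih n (by omega)]
        have h1 : n + 1 + k - n = k + 1 := by omega
        have h2 : n + 1 + k + 1 - (n + 1) = k + 1 := by omega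
        have h3 : n + 1 + k - (n + 1) = k := by omega
        rw [h1, h2, h3, P_succ x k, P_succ x (n + 1 + k), P_succ x n]
        have hPn := P_ne_zero hx n
        have hPn1 : (1 - x ^ (n+1)) ≠ 0 := hx (n+1) (by omega)
        have hPk := P_ne_zero hx k
        have hPk1 : (1 - x ^ (k+1)) ≠ 0 := hx (k+1) (by omega)
        have hPM := P_ne_zero hx (n + 1 + k)
        field_simp
        ring

theorem qbinom (x t : ℂ) : ∀ M, ∏ j ∈ Finset.range M, (1 + t * x ^ j) =
    ∑ n ∈ Finset.range (M + 1), g x M n * x ^ (∑ i ∈ Finset.range n, i) * t ^ n := by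
  intro M
  induction M with
  | zero => simp [g]
  | succ M ih =>
    have h0 : (∑ n ∈ range (M+1), g x M n * x ^ (∑ i ∈ range n, i) * t ^ n) * (t * x ^ M)
        = ∑ n ∈ range (M+1), (g x M n * x ^ (M - n)) * x ^ (∑ i ∈ range (n+1), i) * t ^ (n+1) := by
      rw [Finset.sum_mul]
      refine Finset.sum_congr rfl fun n hn => ?_
      have hnM : n ≤ M := Nat.lt_succ_iff.mp (Finset.mem_range.mp hn)
      rw [Finset.sum_range_succ]
      have hxx : x ^ ((∑ i ∈ range n, i)) * x ^ M
          = x ^ (M - n) * x ^ ((∑ i ∈ range n, i) + n) := by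
        rw [← pow_add, ← pow_add]; congr 1; omega
      calc g x M n * x ^ (∑ i ∈ range n, i) * t ^ n * (t * x ^ M)
          = g x M n * (x ^ (∑ i ∈ range n, i) * x ^ M) * t ^ (n+1) := by ring
        _ = _ := by rw [hxx]; ring
    rw [Finset.prod_range_succ, ih, mul_add, mul_one, h0]
    rw [Finset.sum_range_succ' (fun n => g x M n * x ^ (∑ i ∈ Finset.range n, i) * t ^ n) M]
    rw [show (∑ i ∈ range M, g x M (i+1) * x ^ (∑ j ∈ range (i+1), j) * t ^ (i+1))
        = ∑ i ∈ range (M+1), g x M (i+1) * x ^ (∑ j ∈ range (i+1), j) * t ^ (i+1) by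
      rw [Finset.sum_range_succ, g_zero_of_lt x M (M+1) (by omega)]; ring]
    rw [Finset.sum_range_succ' (fun n => g x (M+1) n * x ^ (∑ i ∈ Finset.range n, i) * t ^ n) (M+1)]
    rw [add_right_comm]
    congr 1
    · rw [← Finset.sum_add_distrib]
      refine Finset.sum_congr rfl fun i _ => ?_
      show _ = (g x M (i+1) + x ^ (M - i) * g x M i) * _ * _
      ring


-- ## Analytic bounds

lemma weier (a : ℕ → ℝ) (h0 : ∀ i, 0 ≤ a i) (h1 : ∀ i, a i ≤ 1) :
    ∀ s : Finset ℕ, 1 - ∑ i ∈ s, a i ≤ ∏ i ∈ s, (1 - a i) := by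
  intro s
  induction s using Finset.cons_induction with
  | empty => simp
  | cons j s hj ih =>
    rw [Finset.prod_cons, Finset.sum_cons]
    have hS : (0:ℝ) ≤ ∑ i ∈ s, a i := Finset.sum_nonneg fun i _ => h0 i
    have hP : (0:ℝ) ≤ ∏ i ∈ s, (1 - a i) :=
      Finset.prod_nonneg fun i _ => by linarith [h1 i]
    nlinarith [h0 j, h1 j, ih]

lemma norm_prod_one_add_le (f : ℕ → ℂ) (s : Finset ℕ) :
    ‖∏ i ∈ s, (1 + f i)‖ ≤ ∏ i ∈ s, (1 + ‖f i‖) := by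
  induction s using Finset.cons_induction with
  | empty => simp
  | cons j s hj ih =>
    rw [Finset.prod_cons, Finset.prod_cons, norm_mul]
    have h1 : ‖(1:ℂ) + f j‖ ≤ 1 + ‖f j‖ := (norm_add_le _ _).trans (by simp)
    have h2 : (0:ℝ) ≤ ∏ i ∈ s, (1 + ‖f i‖) :=
      Finset.prod_nonneg fun i _ => by positivity
    exact mul_le_mul h1 ih (norm_nonneg _) (by linarith [norm_nonneg (f j)])

lemma norm_prod_one_add_sub_one (f : ℕ → ℂ) (s : Finset ℕ) :
    ‖(∏ i ∈ s, (1 + f i)) - 1‖ ≤ (∏ i ∈ s, (1 + ‖f i‖)) - 1 := by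
  induction s using Finset.cons_induction with
  | empty => simp
  | cons j s hj ih =>
    rw [Finset.prod_cons, Finset.prod_cons]
    have key : (1 + f j) * (∏ i ∈ s, (1 + f i)) - 1
        = ((∏ i ∈ s, (1 + f i)) - 1) + f j * ∏ i ∈ s, (1 + f i) := by ring
    rw [key]
    refine (norm_add_le _ _).trans ?_
    rw [norm_mul]
    have h2 := norm_prod_one_add_le f s
    have h3 : (0:ℝ) ≤ ∏ i ∈ s, (1 + ‖f i‖) :=
      Finset.prod_nonneg fun i _ => by positivity
    have h4 : ‖f j‖ * ‖∏ i ∈ s, (1 + f i)‖ ≤ ‖f j‖ * ∏ i ∈ s, (1 + ‖f i‖) :=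
      mul_le_mul_of_nonneg_left h2 (norm_nonneg _)
    nlinarith [ih]

lemma prod_one_add_le_exp (a : ℕ → ℝ) (h0 : ∀ i, 0 ≤ a i) (s : Finset ℕ) :
    ∏ i ∈ s, (1 + a i) ≤ Real.exp (∑ i ∈ s, a i) := by
  rw [Real.exp_sum]
  refine Finset.prod_le_prod (fun i _ => by linarith [h0 i]) fun i _ => ?_
  linarith [Real.add_one_le_exp (a i)]

section X
variable {x : ℂ} (hx : ‖x‖ < 1)
include hx

lemma hden : ∀ k, 1 ≤ k → (1:ℂ) - x ^ k ≠ 0 := by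
  intro k hk h
  have : ‖x ^ k‖ < 1 := by
    rw [norm_pow]
    calc ‖x‖ ^ k ≤ ‖x‖ ^ 1 := pow_le_pow_of_le_one (norm_nonneg x) hx.le hk
    _ < 1 := by simpa using hx
  rw [sub_eq_zero] at h
  rw [← h] at this
  simp at this

lemma geom_tail_le (a b : ℕ) : ∑ j ∈ Finset.Ico a b, ‖x‖ ^ (j + 1) ≤ ‖x‖ ^ a * (1 - ‖x‖)⁻¹ := by
  have hr0 : (0:ℝ) ≤ ‖x‖ := norm_nonneg x
  rcases le_or_gt a b with hab | hab
  · rw [Finset.sum_Ico_eq_sum_range]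
    have : ∀ i ∈ Finset.range (b - a), ‖x‖ ^ (a + i + 1) ≤ ‖x‖ ^ a * ‖x‖ ^ i := by
      intro i _
      rw [← pow_add]
      exact pow_le_pow_of_le_one hr0 hx.le (by omega)
    refine (Finset.sum_le_sum this).trans ?_
    rw [← Finset.mul_sum]
    refine mul_le_mul_of_nonneg_left ?_ (by positivity)
    refine (Summable.sum_le_tsum (Finset.range (b-a)) (fun i _ => by positivity) ?_).trans_eq
      (tsum_geometric_of_lt_one hr0 hx)
    exact summable_geometric_of_lt_one hr0 hx
  · rw [Finset.Ico_eq_empty (by omega)]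
    simp only [Finset.sum_empty]
    have h1 : (0:ℝ) < 1 - ‖x‖ := by linarith
    positivity

lemma P_norm_le (n : ℕ) : ‖P x n‖ ≤ Real.exp ((1 - ‖x‖)⁻¹) := by
  have hr0 : (0:ℝ) ≤ ‖x‖ := norm_nonneg x
  rw [P, norm_prod]
  calc ∏ j ∈ range n, ‖(1:ℂ) - x ^ (j+1)‖
      ≤ ∏ j ∈ range n, (1 + ‖x‖ ^ (j+1)) := by
        refine Finset.prod_le_prod (fun i _ => norm_nonneg _) fun i _ => ?_
        refine (norm_sub_le _ _).trans ?_
        simp [norm_pow]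
    _ ≤ Real.exp (∑ j ∈ range n, ‖x‖ ^ (j+1)) :=
        prod_one_add_le_exp _ (fun i => by positivity) _
    _ ≤ Real.exp ((1 - ‖x‖)⁻¹) := by
        refine Real.exp_le_exp.mpr ?_
        have := geom_tail_le hx 0 n
        rw [Finset.range_eq_Ico] at *
        simpa using this

lemma exists_P_lb : ∃ C : ℝ, 0 < C ∧ ∀ n, C ≤ ‖P x n‖ := by
  have hr0 : (0:ℝ) ≤ ‖x‖ := norm_nonneg x
  obtain ⟨K, hK⟩ : ∃ K : ℕ, ‖x‖ ^ K * (1 - ‖x‖)⁻¹ ≤ 1/2 := by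
    rcases eq_or_lt_of_le hr0 with h | h
    · exact ⟨1, by rw [← h]; norm_num⟩
    · obtain ⟨K, hK⟩ := exists_pow_lt_of_lt_one (x := (1 - ‖x‖)/2) (by linarith) hx
      refine ⟨K, ?_⟩
      have h1 : (0:ℝ) < 1 - ‖x‖ := by linarith
      rw [mul_inv_le_iff₀ h1] at *
      nlinarith [hK.le]
  set r := ‖x‖ with hr
  have hfac : ∀ j : ℕ, 0 < 1 - r ^ (j+1) := by
    intro j
    have : r ^ (j+1) ≤ r ^ 1 := pow_le_pow_of_le_one hr0 hx.le (by omega)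
    simp only [pow_one] at this
    linarith
  set D := ∏ j ∈ Finset.range K, (1 - r ^ (j+1)) with hD
  have hD0 : 0 < D := Finset.prod_pos fun i _ => hfac i
  refine ⟨D * (1/2), by positivity, fun n => ?_⟩
  have hnorm : ∏ j ∈ Finset.range n, (1 - r ^ (j+1)) ≤ ‖P x n‖ := by
    rw [P, norm_prod]
    refine Finset.prod_le_prod (fun i _ => (hfac i).le) fun i _ => ?_
    calc 1 - r ^ (i+1) = ‖(1:ℂ)‖ - ‖x ^ (i+1)‖ := by
          rw [norm_pow, norm_one, hr]
      _ ≤ ‖(1:ℂ) - x ^ (i+1)‖ := norm_sub_norm_le _ _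
  refine le_trans ?_ hnorm
  rcases le_or_gt n K with hnK | hnK
  · have : ∏ j ∈ Finset.range K, (1 - r ^ (j+1))
        ≤ ∏ j ∈ Finset.range n, (1 - r ^ (j+1)) := by
      rw [Finset.range_eq_Ico, Finset.range_eq_Ico,
        ← Finset.prod_Ico_consecutive _ (Nat.zero_le n) hnK]
      refine mul_le_of_le_one_right (Finset.prod_pos fun i _ => hfac i).le ?_
      refine Finset.prod_le_one (fun i _ => (hfac i).le) fun i _ => by nlinarith [pow_nonneg hr0 (i+1)]
    nlinarith
  · rw [Finset.range_eq_Ico, ← Finset.prod_Ico_consecutive _ (Nat.zero_le K) hnK.le,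
      ← Finset.range_eq_Ico]
    rw [← hD]
    refine mul_le_mul_of_nonneg_left ?_ hD0.le
    refine le_trans ?_ (weier _ (fun i => by positivity)
      (fun i => by
        have : r ^ (i+1) ≤ r ^ 0 := pow_le_pow_of_le_one hr0 hx.le (by omega)
        simpa using this) _)
    have := geom_tail_le hx K n
    linarith


omit hx in
lemma P_ratio {a b : ℕ} (hab : a ≤ b) :
    P x b = P x a * ∏ j ∈ Finset.Ico a b, (1 - x ^ (j + 1)) := by
  rw [P, P, Finset.range_eq_Ico, Finset.range_eq_Ico]
  exact (Finset.prod_Ico_consecutive (fun j => 1 - x ^ (j + 1)) (Nat.zero_le a) hab).symm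

lemma tendsto_prod_Ico (a b : ℕ → ℕ) (ha : Filter.Tendsto a Filter.atTop Filter.atTop) :
    Filter.Tendsto (fun N => ∏ j ∈ Finset.Ico (a N) (b N), (1 - x ^ (j + 1)))
      Filter.atTop (nhds 1) := by
  have hr0 : (0:ℝ) ≤ ‖x‖ := norm_nonneg x
  rw [← tendsto_sub_nhds_zero_iff]
  have hb : Filter.Tendsto (fun N => Real.exp (‖x‖ ^ (a N) * (1 - ‖x‖)⁻¹) - 1)
      Filter.atTop (nhds 0) := by
    have h4 : Filter.Tendsto (fun N => ‖x‖ ^ (a N)) Filter.atTop (nhds 0) :=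
      (tendsto_pow_atTop_nhds_zero_of_lt_one hr0 hx).comp ha
    have h5 : Continuous fun s : ℝ => Real.exp (s * (1 - ‖x‖)⁻¹) - 1 := by continuity
    have h6 := (h5.tendsto 0).comp h4
    simpa [Function.comp_def] using h6
  refine squeeze_zero_norm (fun N => ?_) hb
  · 
    have h1 := norm_prod_one_add_sub_one (fun j => -(x ^ (j+1))) (Finset.Ico (a N) (b N))
    simp only [← sub_eq_add_neg, norm_neg, norm_pow] at h1
    refine h1.trans ?_
    have h2 := prod_one_add_le_exp (fun j => ‖x‖ ^ (j+1)) (fun i => by positivity)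
      (Finset.Ico (a N) (b N))
    have h3 := geom_tail_le hx (a N) (b N)
    have h4 := Real.exp_le_exp.mpr h3
    linarith

lemma tendsto_g (n : ℕ) :
    Filter.Tendsto (fun M => g x M n) Filter.atTop (nhds (P x n)⁻¹) := by
  have hd := hden hx
  have key : ∀ M, n ≤ M → g x M n
      = (P x n)⁻¹ * ∏ j ∈ Finset.Ico (M - n) M, (1 - x ^ (j + 1)) := by
    intro M hM
    rw [g_eq hd M n hM, P_ratio (a := M - n) (b := M) (Nat.sub_le M n),
      mul_comm (P x n) (P x (M - n)),
      mul_div_mul_left _ _ (P_ne_zero hd (M - n)), div_eq_inv_mul]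
  have h1 : Filter.Tendsto
      (fun M => (P x n)⁻¹ * ∏ j ∈ Finset.Ico (M - n) M, (1 - x ^ (j + 1)))
      Filter.atTop (nhds ((P x n)⁻¹ * 1)) :=
    Filter.Tendsto.const_mul _ (tendsto_prod_Ico hx (fun M => M - n) id
      (tendsto_sub_atTop_nat n))
  rw [mul_one] at h1
  refine Filter.Tendsto.congr' ?_ h1
  filter_upwards [Filter.eventually_ge_atTop n] with M hM
  exact (key M hM).symm

lemma g_norm_le : ∃ K : ℝ, 0 < K ∧ ∀ M n : ℕ, ‖g x M n‖ ≤ K := by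
  obtain ⟨C, hC0, hC⟩ := exists_P_lb hx
  refine ⟨Real.exp ((1 - ‖x‖)⁻¹) / (C * C), by positivity, fun M n => ?_⟩
  rcases le_or_gt n M with h | h
  · rw [g_eq (hden hx) M n h, norm_div, norm_mul]
    refine div_le_div₀ (by positivity) (P_norm_le hx M) (by positivity) ?_
    exact mul_le_mul (hC n) (hC (M - n)) hC0.le (hC0.le.trans (hC n))
  · rw [g_zero_of_lt x M n h, norm_zero]
    positivity

end X

-- ## Euler side

lemma tri (n : ℕ) : (∑ i ∈ Finset.range (n+1), i) = n * (n + 1) / 2 := by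
  rw [Finset.sum_range_id]
  simp [Nat.mul_comm]

lemma euler_fin (q : ℂ) (M : ℕ) :
    P q M = ∑ n ∈ Finset.range (M+1), (-1:ℂ)^n * q^(n*(n+1)/2) * g q M n := by
  have h := qbinom q (-q) M
  have hL : ∏ j ∈ Finset.range M, (1 + -q * q ^ j) = P q M := by
    refine Finset.prod_congr rfl fun j _ => ?_
    rw [pow_succ]; ring
  rw [hL] at h
  rw [h]
  refine Finset.sum_congr rfl fun n _ => ?_
  calc g q M n * q ^ (∑ i ∈ Finset.range n, i) * (-q) ^ n
      = (-1:ℂ)^n * (q ^ (∑ i ∈ Finset.range n, i) * q ^ n) * g q M n := by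
        rw [neg_pow]; ring
    _ = _ := by rw [← pow_add, ← Finset.sum_range_succ, tri]

lemma euler_tsum (q : ℂ) (M : ℕ) :
    ∑' n : ℕ, ((-1:ℂ)^n * q^(n*(n+1)/2) * g q M n) = P q M := by
  rw [tsum_eq_sum (s := Finset.range (M+1))
    (fun n hn => by
      rw [g_zero_of_lt q M n (by simpa using hn), mul_zero]),
    ← euler_fin q M]

lemma le_tri (n : ℕ) : n ≤ n * (n + 1) / 2 := by
  match n with
  | 0 => simp
  | n + 1 =>
    refine (Nat.le_div_iff_mul_le (by norm_num)).mpr ?_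
    exact Nat.mul_le_mul_left (n+1) (by omega)

section Q
variable {q : ℂ} (hq : ‖q‖ < 1)
include hq

lemma tendsto_P_euler :
    Filter.Tendsto (fun M => P q M) Filter.atTop
      (nhds (∑' n : ℕ, ((-1:ℂ)^n * q^(n*(n+1)/2) / P q n))) := by
  obtain ⟨K, hK0, hK⟩ := g_norm_le hq
  have h := tendsto_tsum_of_dominated_convergence (𝓕 := Filter.atTop)
    (f := fun M (n : ℕ) => (-1:ℂ)^n * q^(n*(n+1)/2) * g q M n)
    (g := fun n => (-1:ℂ)^n * q^(n*(n+1)/2) / P q n)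
    (bound := fun n => K * ‖q‖^n)
    ((summable_geometric_of_lt_one (norm_nonneg q) hq).mul_left K)
    (fun n => by
      have h := (tendsto_g hq n).const_mul ((-1:ℂ)^n * q^(n*(n+1)/2))
      simpa [div_eq_mul_inv, mul_assoc] using h)
    (Filter.Eventually.of_forall fun M n => by
      rw [norm_mul, norm_mul, norm_pow, norm_pow, norm_neg, norm_one, one_pow, one_mul]
      have h1 : ‖q‖^(n*(n+1)/2) ≤ ‖q‖^n :=
        pow_le_pow_of_le_one (norm_nonneg q) hq.le (le_tri n)
      calc ‖q‖^(n*(n+1)/2) * ‖g q M n‖ ≤ ‖q‖^n * K :=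
            mul_le_mul h1 (hK M n) (norm_nonneg _) (by positivity)
        _ = K * ‖q‖^n := mul_comm _ _)
  exact h.congr fun M => euler_tsum q M

end Q

-- ## Pentagonal side

def J (j : ℤ) : ℤ := j * (3 * j + 1) / 2

lemma two_J (j : ℤ) : 2 * J j = j * (3 * j + 1) := by
  obtain ⟨w, hw⟩ : ∃ w : ℤ, j * (3 * j + 1) = 2 * w := by
    rcases Int.even_or_odd j with ⟨k, hk⟩ | ⟨k, hk⟩
    · exact ⟨k * (3 * j + 1), by rw [hk]; ring⟩
    · exact ⟨(3 * k + 2) * j, by rw [hk]; ring⟩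
  rw [J, hw, Int.mul_ediv_cancel_left _ two_ne_zero]

lemma sum_id_int (n : ℕ) : ((∑ i ∈ Finset.range n, i : ℕ) : ℤ) * 2 = n * (n - 1) := by
  match n with
  | 0 => simp
  | m + 1 =>
    have h := Finset.sum_range_id_mul_two (m + 1)
    have h2 : ((∑ i ∈ Finset.range (m+1), i : ℕ) * 2 : ℤ) = ((m + 1) * m : ℕ) := by
      exact_mod_cast congrArg (Nat.cast : ℕ → ℤ) h
    push_cast at h2 ⊢
    rw [h2]; ring

lemma key_int (N n : ℕ) :
    (3 * ((∑ i ∈ Finset.range n, i : ℕ) : ℤ) + (2 - 3 * N) * n)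
      = J ((n : ℤ) - N) - (3 * ((∑ i ∈ Finset.range N, i : ℕ) : ℤ) + N) := by
  refine mul_left_cancel₀ (two_ne_zero (α := ℤ)) ?_
  have h2j : (2 : ℤ) * (J ((n:ℤ) - N) - (3 * ((∑ i ∈ Finset.range N, i : ℕ) : ℤ) + N))
      = 2 * J ((n:ℤ) - N) - 2 * (3 * ((∑ i ∈ Finset.range N, i : ℕ) : ℤ) + N) := by ring
  rw [h2j, two_J]
  linear_combination (3 : ℤ) * sum_id_int n + 3 * sum_id_int N

section Pent
variable {q : ℂ} (hq0 : q ≠ 0)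
include hq0

lemma prod_zpow (f : ℕ → ℤ) (N : ℕ) :
    ∏ k ∈ Finset.range N, q ^ (f k) = q ^ (∑ k ∈ Finset.range N, f k) := by
  induction N with
  | zero => simp
  | succ N ih =>
    rw [Finset.prod_range_succ, Finset.sum_range_succ, ih, zpow_add₀ hq0]

omit hq0 in
lemma trip (N : ℕ) : P q (3 * N) =
    (∏ k ∈ Finset.range N, (1 - q ^ (3 * k + 1))) *
    (∏ k ∈ Finset.range N, (1 - q ^ (3 * k + 2))) * P (q ^ 3) N := by
  induction N with
  | zero => simp [P]
  | succ N ih =>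
    rw [show 3 * (N + 1) = 3 * N + 1 + 1 + 1 from by ring, P_succ, P_succ, P_succ, ih,
      Finset.prod_range_succ, Finset.prod_range_succ, P_succ]
    rw [show (q ^ 3) ^ (N + 1) = q ^ (3 * N + 1 + 1 + 1) from by
      rw [← pow_mul, show 3 * (N + 1) = 3 * N + 1 + 1 + 1 from by ring]]
    rw [show 3 * N + 1 + 1 = 3 * N + 2 from rfl]
    ring

lemma pent_fin (N : ℕ) : P q (3 * N) = (-1 : ℂ) ^ N * P (q ^ 3) N *
    ∑ n ∈ Finset.range (2 * N + 1),
      ((-1 : ℂ) ^ n * g (q ^ 3) (2 * N) n * q ^ (J ((n : ℤ) - N))) := by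
  set E : ℤ := 3 * ((∑ i ∈ Finset.range N, i : ℕ) : ℤ) + N with hE
  have hA := qbinom (q ^ 3) (-(q ^ ((2 : ℤ) - 3 * N))) (2 * N)
  -- left side of qbinom
  have hfac : ∀ j : ℕ, 1 + (-(q ^ ((2 : ℤ) - 3 * N))) * (q ^ 3) ^ j
      = 1 - q ^ ((2 - 3 * (N : ℤ)) + 3 * j) := by
    intro j
    rw [← pow_mul, ← zpow_natCast q (3 * j),
      show ((3 * j : ℕ) : ℤ) = 3 * (j : ℤ) from by push_cast; ring,
      zpow_add₀ hq0]
    ring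
  have hL : ∏ j ∈ Finset.range (2 * N), (1 + (-(q ^ ((2 : ℤ) - 3 * N))) * (q ^ 3) ^ j)
      = (-1 : ℂ) ^ N * q ^ (-E) *
        ((∏ k ∈ Finset.range N, (1 - q ^ (3 * k + 1))) *
         ∏ k ∈ Finset.range N, (1 - q ^ (3 * k + 2))) := by
    rw [Finset.prod_congr rfl (fun j _ => hfac j),
      show 2 * N = N + N from by ring, Finset.prod_range_add]
    have h2 : ∏ j ∈ Finset.range N, (1 - q ^ ((2 - 3 * (N : ℤ)) + 3 * ((N + j : ℕ) : ℤ)))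
        = ∏ k ∈ Finset.range N, (1 - q ^ (3 * k + 2)) := by
      refine Finset.prod_congr rfl fun j _ => ?_
      congr 1
      rw [show ((2 : ℤ) - 3 * N) + 3 * ((N + j : ℕ) : ℤ) = ((3 * j + 2 : ℕ) : ℤ) from by
        push_cast; ring, zpow_natCast]
    have h1 : ∏ j ∈ Finset.range N, (1 - q ^ ((2 - 3 * (N : ℤ)) + 3 * (j : ℤ)))
        = (-1 : ℂ) ^ N * q ^ (-E) * ∏ k ∈ Finset.range N, (1 - q ^ (3 * k + 1)) := by
      rw [← Finset.prod_range_reflect]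
      have hfac2 : ∀ j ∈ Finset.range N,
          (1 - q ^ ((2 - 3 * (N : ℤ)) + 3 * ((N - 1 - j : ℕ) : ℤ)))
          = (-(q ^ (-(3 * (j : ℤ) + 1)))) * (1 - q ^ (3 * j + 1)) := by
        intro j hj
        have hjN : j < N := Finset.mem_range.mp hj
        have hc : ((N - 1 - j : ℕ) : ℤ) = (N : ℤ) - 1 - j := by omega
        rw [hc, show ((2 : ℤ) - 3 * N) + 3 * ((N : ℤ) - 1 - j) = -(3 * (j : ℤ) + 1) from by ring]
        rw [← zpow_natCast q (3 * j + 1),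
          show ((3 * j + 1 : ℕ) : ℤ) = 3 * (j : ℤ) + 1 from by push_cast; ring]
        have hmm : q ^ (-(3 * (j : ℤ) + 1)) * q ^ (3 * (j : ℤ) + 1) = 1 := by
          rw [← zpow_add₀ hq0,
            show -(3 * (j : ℤ) + 1) + (3 * (j : ℤ) + 1) = 0 from by ring, zpow_zero]
        linear_combination (-1 : ℂ) * hmm
      rw [Finset.prod_congr rfl hfac2, Finset.prod_mul_distrib]
      congr 1
      rw [show (fun j : ℕ => -(q ^ (-(3 * (j : ℤ) + 1))))
          = (fun j : ℕ => (-1 : ℂ) * q ^ (-(3 * (j : ℤ) + 1))) from funext fun j => by ring]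
      rw [Finset.prod_mul_distrib, Finset.prod_const, prod_zpow hq0]
      congr 1
      · simp
      rw [Finset.sum_neg_distrib]
      congr 1
      rw [hE, Finset.sum_add_distrib, Finset.sum_const, ← Finset.mul_sum]
      push_cast
      simp
    calc (∏ j ∈ Finset.range N, (1 - q ^ (2 - 3 * (N:ℤ) + 3 * (j:ℤ)))) *
          ∏ j ∈ Finset.range N, (1 - q ^ (2 - 3 * (N:ℤ) + 3 * ((N + j : ℕ) : ℤ)))
        = ((-1 : ℂ) ^ N * q ^ (-E) * ∏ k ∈ Finset.range N, (1 - q ^ (3 * k + 1))) *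
          ∏ k ∈ Finset.range N, (1 - q ^ (3 * k + 2)) := by rw [h1, h2]
      _ = _ := by ring
  -- right side of qbinom
  have hR : ∑ n ∈ Finset.range (2 * N + 1),
        g (q ^ 3) (2 * N) n * (q ^ 3) ^ (∑ i ∈ Finset.range n, i) *
          (-(q ^ ((2 : ℤ) - 3 * N))) ^ n
      = q ^ (-E) * ∑ n ∈ Finset.range (2 * N + 1),
          ((-1 : ℂ) ^ n * g (q ^ 3) (2 * N) n * q ^ (J ((n : ℤ) - N))) := by
    rw [Finset.mul_sum]
    refine Finset.sum_congr rfl fun n hn => ?_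
    have ha : (q ^ 3) ^ (∑ i ∈ Finset.range n, i)
        = q ^ (3 * ((∑ i ∈ Finset.range n, i : ℕ) : ℤ)) := by
      rw [← pow_mul, ← zpow_natCast q (3 * (∑ i ∈ Finset.range n, i)),
        show ((3 * (∑ i ∈ Finset.range n, i) : ℕ) : ℤ)
          = 3 * ((∑ i ∈ Finset.range n, i : ℕ) : ℤ) from by push_cast; ring]
    have hb : (-(q ^ ((2 : ℤ) - 3 * N))) ^ n
        = (-1 : ℂ) ^ n * q ^ (((2 : ℤ) - 3 * N) * n) := by
      rw [neg_pow, ← zpow_natCast (q ^ ((2 : ℤ) - 3 * N)) n, ← zpow_mul]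
    have hc : q ^ (3 * ((∑ i ∈ Finset.range n, i : ℕ) : ℤ)) * q ^ (((2 : ℤ) - 3 * N) * n)
        = q ^ (-E) * q ^ (J ((n : ℤ) - N)) := by
      rw [← zpow_add₀ hq0, ← zpow_add₀ hq0, key_int N n]
      congr 1
      rw [hE]
      ring
    rw [ha, hb]
    calc g (q ^ 3) (2 * N) n * q ^ (3 * ((∑ i ∈ Finset.range n, i : ℕ) : ℤ)) *
          ((-1 : ℂ) ^ n * q ^ (((2 : ℤ) - 3 * N) * n))
        = (-1 : ℂ) ^ n * g (q ^ 3) (2 * N) n *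
            (q ^ (3 * ((∑ i ∈ Finset.range n, i : ℕ) : ℤ)) * q ^ (((2 : ℤ) - 3 * N) * n)) := by
          ring
      _ = (-1 : ℂ) ^ n * g (q ^ 3) (2 * N) n * (q ^ (-E) * q ^ (J ((n : ℤ) - N))) := by rw [hc]
      _ = _ := by ring
  rw [hL, hR] at hA
  set S := ∑ n ∈ Finset.range (2 * N + 1),
      ((-1 : ℂ) ^ n * g (q ^ 3) (2 * N) n * q ^ (J ((n : ℤ) - N))) with hS
  set A₁ := ∏ k ∈ Finset.range N, (1 - q ^ (3 * k + 1)) with hA₁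
  set B₁ := ∏ k ∈ Finset.range N, (1 - q ^ (3 * k + 2)) with hB₁
  have hA' : (-1 : ℂ) ^ N * (A₁ * B₁) = S := by
    refine mul_left_cancel₀ (zpow_ne_zero (-E) hq0) ?_
    calc q ^ (-E) * ((-1 : ℂ) ^ N * (A₁ * B₁)) = (-1 : ℂ) ^ N * q ^ (-E) * (A₁ * B₁) := by ring
      _ = q ^ (-E) * S := hA
  have hsq : (-1 : ℂ) ^ N * (-1 : ℂ) ^ N = 1 := by
    rw [← pow_add]
    exact Even.neg_one_pow ⟨N, by ring⟩
  rw [trip]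
  rw [← hA']
  linear_combination (-(P (q ^ 3) N * (A₁ * B₁))) * hsq


omit hq0 in
lemma J_natCast (i : ℕ) : J (i : ℤ) = ((i * (3 * i + 1) / 2 : ℕ) : ℤ) := by
  obtain ⟨w, hw⟩ : ∃ w, i * (3 * i + 1) = 2 * w := by
    rcases Nat.even_or_odd i with ⟨k, hk⟩ | ⟨k, hk⟩
    · exact ⟨k * (3 * i + 1), by rw [hk]; ring⟩
    · exact ⟨i * (3 * k + 2), by rw [hk]; ring⟩
  have h1 := two_J (i : ℤ)
  have h2 : ((i * (3 * i + 1) : ℕ) : ℤ) = (i : ℤ) * (3 * i + 1) := by push_cast; ring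
  omega

omit hq0 in
lemma J_neg (i : ℕ) : J (-((i : ℤ) + 1)) = (((i + 1) * (3 * i + 2) / 2 : ℕ) : ℤ) := by
  obtain ⟨w, hw⟩ : ∃ w, (i + 1) * (3 * i + 2) = 2 * w := by
    rcases Nat.even_or_odd i with ⟨k, hk⟩ | ⟨k, hk⟩
    · exact ⟨(i + 1) * (3 * k + 1), by rw [hk]; ring⟩
    · exact ⟨(k + 1) * (3 * i + 2), by rw [hk]; ring⟩
  have h1 := two_J (-((i : ℤ) + 1))
  have h1' : 2 * J (-((i : ℤ) + 1)) = ((i : ℤ) + 1) * (3 * i + 2) := by rw [h1]; ring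
  have h2 : (((i + 1) * (3 * i + 2) : ℕ) : ℤ) = ((i : ℤ) + 1) * (3 * i + 2) := by
    push_cast; ring
  omega

noncomputable def Fp (q : ℂ) (N i : ℕ) : ℂ :=
  (-1 : ℂ) ^ i * q ^ (i * (3 * i + 1) / 2) * (P (q ^ 3) N * g (q ^ 3) (2 * N) (N + i))

noncomputable def Fm (q : ℂ) (N i : ℕ) : ℂ :=
  if i < N then
    (-1 : ℂ) ^ (i + 1) * q ^ ((i + 1) * (3 * i + 2) / 2) *
      (P (q ^ 3) N * g (q ^ 3) (2 * N) (N - 1 - i))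
  else 0

lemma pent_split (N : ℕ) :
    P q (3 * N) = (∑' i : ℕ, Fp q N i) + (∑' i : ℕ, Fm q N i) := by
  have hFp : ∑' i : ℕ, Fp q N i = ∑ i ∈ Finset.range (N + 1), Fp q N i := by
    refine tsum_eq_sum fun i hi => ?_
    have : N + i > 2 * N := by have := Finset.mem_range.not.mp hi; omega
    rw [Fp, g_zero_of_lt _ _ _ (by omega), mul_zero, mul_zero]
  have hFm : ∑' i : ℕ, Fm q N i = ∑ i ∈ Finset.range N, Fm q N i := by
    refine tsum_eq_sum fun i hi => ?_
    rw [Fm, if_neg (by simpa using hi)]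
  rw [hFp, hFm, pent_fin hq0 N,
    show 2 * N + 1 = N + (N + 1) from by ring, Finset.sum_range_add, mul_add, add_comm]
  congr 1
  · -- positive part
    rw [Finset.mul_sum]
    refine Finset.sum_congr rfl fun i hi => ?_
    rw [Fp]
    have hJ : J ((↑(N + i) : ℤ) - N) = ((i * (3 * i + 1) / 2 : ℕ) : ℤ) := by
      rw [show ((↑(N + i) : ℤ) - N) = (i : ℤ) from by push_cast; ring, J_natCast]
    rw [hJ, zpow_natCast]
    have hsgn : (-1 : ℂ) ^ N * (-1 : ℂ) ^ (N + i) = (-1 : ℂ) ^ i := by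
      rw [← pow_add, show N + (N + i) = 2 * N + i from by ring, pow_add]
      rw [Even.neg_one_pow ⟨N, by ring⟩, one_mul]
    calc (-1 : ℂ) ^ N * P (q ^ 3) N *
          ((-1 : ℂ) ^ (N + i) * g (q ^ 3) (2 * N) (N + i) * q ^ (i * (3 * i + 1) / 2))
        = ((-1 : ℂ) ^ N * (-1 : ℂ) ^ (N + i)) * q ^ (i * (3 * i + 1) / 2) *
          (P (q ^ 3) N * g (q ^ 3) (2 * N) (N + i)) := by ring
      _ = _ := by rw [hsgn]
  · -- negative part
    rw [Finset.mul_sum, ← Finset.sum_range_reflect]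
    refine Finset.sum_congr rfl fun i hi => ?_
    have hiN : i < N := Finset.mem_range.mp hi
    rw [Fm, if_pos hiN]
    have hJ : J ((↑(N - 1 - i) : ℤ) - N) = (((i + 1) * (3 * i + 2) / 2 : ℕ) : ℤ) := by
      rw [show ((↑(N - 1 - i) : ℤ) - N) = -((i : ℤ) + 1) from by omega, J_neg]
    rw [hJ, zpow_natCast]
    have hsgn : (-1 : ℂ) ^ N * (-1 : ℂ) ^ (N - 1 - i) = (-1 : ℂ) ^ (i + 1) := by
      rw [← pow_add]
      rcases Nat.even_or_odd i with ⟨k, hk⟩ | ⟨k, hk⟩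
      · have h1 : Odd (N + (N - 1 - i)) := ⟨N - 1 - k, by omega⟩
        have h2 : Odd (i + 1) := ⟨k, by omega⟩
        rw [h1.neg_one_pow, h2.neg_one_pow]
      · have h1 : Even (N + (N - 1 - i)) := ⟨N - 1 - k, by omega⟩
        have h2 : Even (i + 1) := ⟨k + 1, by omega⟩
        rw [h1.neg_one_pow, h2.neg_one_pow]
    calc (-1 : ℂ) ^ N * P (q ^ 3) N *
          ((-1 : ℂ) ^ (N - 1 - i) * g (q ^ 3) (2 * N) (N - 1 - i) *
            q ^ ((i + 1) * (3 * i + 2) / 2))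
        = ((-1 : ℂ) ^ N * (-1 : ℂ) ^ (N - 1 - i)) * q ^ ((i + 1) * (3 * i + 2) / 2) *
          (P (q ^ 3) N * g (q ^ 3) (2 * N) (N - 1 - i)) := by ring
      _ = _ := by rw [hsgn]


section Lim
variable (hq : ‖q‖ < 1)
include hq

omit hq0 in
lemma hq3 : ‖q ^ 3‖ < 1 := by
  rw [norm_pow]
  exact pow_lt_one₀ (norm_nonneg q) hq (by norm_num)

omit hq0 in
lemma tendsto_cp (i : ℕ) :
    Filter.Tendsto (fun N => P (q ^ 3) N * g (q ^ 3) (2 * N) (N + i))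
      Filter.atTop (nhds 1) := by
  have h3 := hq3 hq
  have hd3 := hden h3
  have key : ∀ N, i ≤ N → P (q ^ 3) N * g (q ^ 3) (2 * N) (N + i)
      = (∏ j ∈ Finset.Ico (N - i) N, (1 - (q ^ 3) ^ (j + 1))) *
        ∏ j ∈ Finset.Ico (N + i) (2 * N), (1 - (q ^ 3) ^ (j + 1)) := by
    intro N hiN
    rw [g_eq hd3 (2 * N) (N + i) (by omega), show 2 * N - (N + i) = N - i from by omega,
      P_ratio (x := q ^ 3) (a := N - i) (b := N) (by omega),
      P_ratio (x := q ^ 3) (a := N + i) (b := 2 * N) (by omega)]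
    have h1 := P_ne_zero hd3 (N + i)
    have h2 := P_ne_zero hd3 (N - i)
    field_simp
  have hlim := (tendsto_prod_Ico h3 (fun N => N - i) (fun N => N)
      (tendsto_sub_atTop_nat i)).mul
    (tendsto_prod_Ico h3 (fun N => N + i) (fun N => 2 * N)
      (Filter.tendsto_atTop_mono (fun N => Nat.le_add_right N i) Filter.tendsto_id))
  rw [mul_one] at hlim
  refine Filter.Tendsto.congr' ?_ hlim
  filter_upwards [Filter.eventually_ge_atTop i] with N hN
  exact (key N hN).symm

omit hq0 in
lemma tendsto_cm (i : ℕ) :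
    Filter.Tendsto (fun N => P (q ^ 3) N * g (q ^ 3) (2 * N) (N - 1 - i))
      Filter.atTop (nhds 1) := by
  have h3 := hq3 hq
  have hd3 := hden h3
  have key : ∀ N, i + 1 ≤ N → P (q ^ 3) N * g (q ^ 3) (2 * N) (N - 1 - i)
      = (∏ j ∈ Finset.Ico (N - 1 - i) N, (1 - (q ^ 3) ^ (j + 1))) *
        ∏ j ∈ Finset.Ico (N + 1 + i) (2 * N), (1 - (q ^ 3) ^ (j + 1)) := by
    intro N hiN
    rw [g_eq hd3 (2 * N) (N - 1 - i) (by omega),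
      show 2 * N - (N - 1 - i) = N + 1 + i from by omega,
      P_ratio (x := q ^ 3) (a := N - 1 - i) (b := N) (by omega),
      P_ratio (x := q ^ 3) (a := N + 1 + i) (b := 2 * N) (by omega)]
    have h1 := P_ne_zero hd3 (N + 1 + i)
    have h2 := P_ne_zero hd3 (N - 1 - i)
    field_simp
  have hlim := (tendsto_prod_Ico h3 (fun N => N - 1 - i) (fun N => N)
      ((tendsto_sub_atTop_nat (1 + i)).congr (fun N => by omega))).mul
    (tendsto_prod_Ico h3 (fun N => N + 1 + i) (fun N => 2 * N)
      (Filter.tendsto_atTop_mono (fun N => by show N ≤ N + 1 + i; omega)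
        Filter.tendsto_id))
  rw [mul_one] at hlim
  refine Filter.Tendsto.congr' ?_ hlim
  filter_upwards [Filter.eventually_ge_atTop (i + 1)] with N hN
  exact (key N hN).symm

omit hq0 hq in
lemma le_pent1 (i : ℕ) : i ≤ i * (3 * i + 1) / 2 := by
  match i with
  | 0 => simp
  | i + 1 =>
    refine (Nat.le_div_iff_mul_le (by norm_num)).mpr ?_
    exact Nat.mul_le_mul_left (i + 1) (by omega)

omit hq0 hq in
lemma le_pent2 (i : ℕ) : i ≤ (i + 1) * (3 * i + 2) / 2 := by
  refine (Nat.le_div_iff_mul_le (by norm_num)).mpr ?_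
  calc i * 2 ≤ (i + 1) * 2 := by omega
    _ ≤ (i + 1) * (3 * i + 2) := Nat.mul_le_mul_left (i + 1) (by omega)

lemma tendsto_pent :
    Filter.Tendsto (fun N => P q (3 * N)) Filter.atTop
      (nhds ((∑' i : ℕ, (-1 : ℂ) ^ i * q ^ (i * (3 * i + 1) / 2)) +
        ∑' i : ℕ, (-1 : ℂ) ^ (i + 1) * q ^ ((i + 1) * (3 * i + 2) / 2))) := by
  have h3 := hq3 hq
  obtain ⟨K, hK0, hK⟩ := g_norm_le h3
  set U := Real.exp ((1 - ‖q ^ 3‖)⁻¹) with hU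
  have hU0 : 0 < U := Real.exp_pos _
  have hPg : ∀ N n, ‖P (q ^ 3) N * g (q ^ 3) (2 * N) n‖ ≤ U * K := by
    intro N n
    rw [norm_mul]
    exact mul_le_mul (P_norm_le h3 N) (hK (2 * N) n) (norm_nonneg _) hU0.le
  have hsum : Summable (fun i : ℕ => (U * K) * ‖q‖ ^ i) :=
    (summable_geometric_of_lt_one (norm_nonneg q) hq).mul_left _
  have hDCp := tendsto_tsum_of_dominated_convergence (𝓕 := Filter.atTop)
    (f := fun N i => Fp q N i)
    (g := fun i => (-1 : ℂ) ^ i * q ^ (i * (3 * i + 1) / 2))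
    (bound := fun i => (U * K) * ‖q‖ ^ i) hsum
    (fun i => by
      have h := (tendsto_cp hq i).const_mul ((-1 : ℂ) ^ i * q ^ (i * (3 * i + 1) / 2))
      simpa [Fp, mul_assoc] using h)
    (Filter.Eventually.of_forall fun N i => by
      simp only [Fp]
      rw [norm_mul, norm_mul, norm_pow, norm_pow, norm_neg, norm_one, one_pow, one_mul]
      have h1 : ‖q‖ ^ (i * (3 * i + 1) / 2) ≤ ‖q‖ ^ i :=
        pow_le_pow_of_le_one (norm_nonneg q) hq.le (le_pent1 i)
      calc ‖q‖ ^ (i * (3 * i + 1) / 2) * ‖P (q ^ 3) N * g (q ^ 3) (2 * N) (N + i)‖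
          ≤ ‖q‖ ^ i * (U * K) := mul_le_mul h1 (hPg N (N + i)) (norm_nonneg _) (by positivity)
        _ = (U * K) * ‖q‖ ^ i := mul_comm _ _)
  have hDCm := tendsto_tsum_of_dominated_convergence (𝓕 := Filter.atTop)
    (f := fun N i => Fm q N i)
    (g := fun i => (-1 : ℂ) ^ (i + 1) * q ^ ((i + 1) * (3 * i + 2) / 2))
    (bound := fun i => (U * K) * ‖q‖ ^ i) hsum
    (fun i => by
      have h := (tendsto_cm hq i).const_mul ((-1 : ℂ) ^ (i + 1) * q ^ ((i + 1) * (3 * i + 2) / 2))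
      rw [mul_one] at h
      refine Filter.Tendsto.congr' ?_ h
      filter_upwards [Filter.eventually_gt_atTop i] with N hN
      simp only [Fm, if_pos hN])
    (Filter.Eventually.of_forall fun N i => by
      simp only [Fm]
      split_ifs with hiN
      · rw [norm_mul, norm_mul, norm_pow, norm_pow, norm_neg, norm_one, one_pow, one_mul]
        have h1 : ‖q‖ ^ ((i + 1) * (3 * i + 2) / 2) ≤ ‖q‖ ^ i :=
          pow_le_pow_of_le_one (norm_nonneg q) hq.le (le_pent2 i)
        calc ‖q‖ ^ ((i + 1) * (3 * i + 2) / 2) * ‖P (q ^ 3) N * g (q ^ 3) (2 * N) (N - 1 - i)‖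
            ≤ ‖q‖ ^ i * (U * K) :=
              mul_le_mul h1 (hPg N (N - 1 - i)) (norm_nonneg _) (by positivity)
          _ = (U * K) * ‖q‖ ^ i := mul_comm _ _
      · rw [norm_zero]; positivity)
  have := hDCp.add hDCm
  refine this.congr fun N => ?_
  exact (pent_split hq0 N).symm


omit hq0 in
lemma summable_u : Summable (fun i : ℕ => (-1 : ℂ) ^ i * q ^ (i * (3 * i + 1) / 2)) := by
  refine Summable.of_norm_bounded (g := fun i => ‖q‖ ^ i)
    (summable_geometric_of_lt_one (norm_nonneg q) hq) (fun i => ?_)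
  rw [norm_mul, norm_pow, norm_pow, norm_neg, norm_one, one_pow, one_mul]
  exact pow_le_pow_of_le_one (norm_nonneg q) hq.le (le_pent1 i)

omit hq0 in
lemma summable_v : Summable (fun i : ℕ => (-1 : ℂ) ^ (i + 1) * q ^ ((i + 1) * (3 * i + 2) / 2)) := by
  refine Summable.of_norm_bounded (g := fun i => ‖q‖ ^ i)
    (summable_geometric_of_lt_one (norm_nonneg q) hq) (fun i => ?_)
  rw [norm_mul, norm_pow, norm_pow, norm_neg, norm_one, one_pow, one_mul]
  exact pow_le_pow_of_le_one (norm_nonneg q) hq.le (le_pent2 i)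

omit hq0 hq in
lemma rhs_e1 (i : ℕ) : (-1 : ℂ) ^ ((i : ℤ)) * q ^ (((i : ℤ) * (3 * (i : ℤ) + 1) / 2).toNat)
    = (-1 : ℂ) ^ i * q ^ (i * (3 * i + 1) / 2) := by
  have hJ := J_natCast i
  rw [J] at hJ
  rw [zpow_natCast, hJ, Int.toNat_natCast]

omit hq0 hq in
lemma rhs_e2 (i : ℕ) : (-1 : ℂ) ^ (-((i : ℤ) + 1)) *
      q ^ (((-((i : ℤ) + 1)) * (3 * (-((i : ℤ) + 1)) + 1) / 2).toNat)
    = (-1 : ℂ) ^ (i + 1) * q ^ ((i + 1) * (3 * i + 2) / 2) := by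
  have hJ := J_neg i
  rw [J] at hJ
  rw [hJ, Int.toNat_natCast]
  congr 1
  rw [show -((i : ℤ) + 1) = -(((i + 1 : ℕ) : ℤ)) from by push_cast; ring,
    zpow_neg, zpow_natCast, ← inv_pow, inv_neg, inv_one]

omit hq0 in
lemma rhs_split :
    (∑' n : ℤ, (-1 : ℂ) ^ n * q ^ (n * (3 * n + 1) / 2).toNat)
      = (∑' i : ℕ, (-1 : ℂ) ^ i * q ^ (i * (3 * i + 1) / 2)) +
        ∑' i : ℕ, (-1 : ℂ) ^ (i + 1) * q ^ ((i + 1) * (3 * i + 2) / 2) := by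
  rw [tsum_of_nat_of_neg_add_one
    ((summable_u hq).congr (fun i => (rhs_e1 (q := q) i).symm))
    ((summable_v hq).congr (fun i => (rhs_e2 (q := q) i).symm))]
  rw [tsum_congr (fun i => rhs_e1 (q := q) i), tsum_congr (fun i => rhs_e2 (q := q) i)]

end Lim
end Pent

lemma int_exp_pos {n : ℤ} (hn : n ≠ 0) : (n * (3 * n + 1) / 2).toNat ≠ 0 := by
  have h := two_J n
  rw [J] at h
  rcases lt_or_gt_of_ne hn with h1 | h1
  · have : n * (3 * n + 1) ≥ 2 := by nlinarith
    omega
  · have : n * (3 * n + 1) ≥ 2 := by nlinarith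
    omega

end QPent

/-- For `‖q‖ < 1`,
`∑_{n=0}^∞ (-1)^n q^{n(n+1)/2} / (q;q)_n = ∑_{n ∈ ℤ} (-1)^n q^{n(3n+1)/2}`. -/
theorem qhyper_eq_pentagonal (q : ℂ) (hq : ‖q‖ < 1) :
    (∑' n : ℕ, (-1 : ℂ) ^ n * q ^ (n * (n + 1) / 2) /
      ∏ j ∈ Finset.range n, (1 - q ^ (j + 1))) =
      ∑' n : ℤ, (-1 : ℂ) ^ n * q ^ (n * (3 * n + 1) / 2).toNat := by
  rcases eq_or_ne q 0 with rfl | hq0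
  · rw [tsum_eq_single 0 (fun n hn => by
      have h1 := QPent.le_tri n
      have h2 : n * (n + 1) / 2 ≠ 0 := by omega
      rw [zero_pow h2, mul_zero, zero_div]),
      tsum_eq_single (0 : ℤ) (fun n hn => by
        rw [zero_pow (QPent.int_exp_pos hn), mul_zero])]
    simp
  · have h1 := QPent.tendsto_P_euler hq
    have h3 : Filter.Tendsto (fun N : ℕ => 3 * N) Filter.atTop Filter.atTop :=
      Filter.tendsto_atTop_mono (fun N => by show N ≤ 3 * N; omega) Filter.tendsto_id
    have h2 : Filter.Tendsto (fun N => QPent.P q (3 * N)) Filter.atTop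
        (nhds (∑' n : ℕ, ((-1 : ℂ) ^ n * q ^ (n * (n + 1) / 2) / QPent.P q n))) :=
      h1.comp h3
    have h4 := QPent.tendsto_pent (q := q) hq0 hq
    have h5 := tendsto_nhds_unique h2 h4
    rw [QPent.rhs_split (q := q) hq]
    exact h5
end

section
/- The 'sums of tails' identity for the partition tail: for |q|<1, ∑_{n=0}^∞ (1/(q;q)_n − 1/(q;q)_∞) = −(1/(q;q)_∞) ∑_{n=1}^∞ q^n/(1−q^n). -/
open Filter Finset Topology

namespace SumsOfTails

noncomputable def P (q : ℂ) (n : ℕ) : ℂ := ∏ j ∈ Finset.range n, (1 - q ^ (j + 1))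

variable {q : ℂ}

lemma norm_qpow_lt (hq : ‖q‖ < 1) (n : ℕ) : ‖q ^ (n + 1)‖ < 1 := by
  rw [norm_pow]
  calc ‖q‖ ^ (n + 1) ≤ ‖q‖ ^ 1 := by
        apply pow_le_pow_of_le_one (norm_nonneg q) hq.le; omega
    _ = ‖q‖ := pow_one _
    _ < 1 := hq

lemma norm_qpow_le (hq : ‖q‖ < 1) (n : ℕ) : ‖q ^ (n + 1)‖ ≤ ‖q‖ := by
  rw [norm_pow]
  calc ‖q‖ ^ (n + 1) ≤ ‖q‖ ^ 1 := by
        apply pow_le_pow_of_le_one (norm_nonneg q) hq.le; omega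
    _ = ‖q‖ := pow_one _

lemma fac_ne (hq : ‖q‖ < 1) (n : ℕ) : 1 - q ^ (n + 1) ≠ 0 := by
  intro h
  have h1 : ‖q ^ (n + 1)‖ < 1 := norm_qpow_lt hq n
  have h2 : q ^ (n + 1) = 1 := by linear_combination -h
  rw [h2, norm_one] at h1
  exact lt_irrefl _ h1
lemma norm_fac_ge (hq : ‖q‖ < 1) (n : ℕ) : 1 - ‖q‖ ≤ ‖1 - q ^ (n + 1)‖ := by
  calc 1 - ‖q‖ ≤ 1 - ‖q ^ (n + 1)‖ := by
        have := norm_qpow_le hq n; linarith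
    _ = ‖(1 : ℂ)‖ - ‖q ^ (n + 1)‖ := by rw [norm_one]
    _ ≤ ‖1 - q ^ (n + 1)‖ := norm_sub_norm_le _ _

lemma P_succ (n : ℕ) : P q (n + 1) = P q n * (1 - q ^ (n + 1)) := Finset.prod_range_succ _ _

lemma P_ne (hq : ‖q‖ < 1) (n : ℕ) : P q n ≠ 0 :=
  Finset.prod_ne_zero_iff.2 fun j _ => fac_ne hq j

/-- uniform positive lower bound for the norms of partial products -/
lemma exp_le_one_sub {r x : ℝ} (hr : r < 1) (hx0 : 0 ≤ x) (hxr : x ≤ r) :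
    Real.exp (-(x / (1 - r))) ≤ 1 - x := by
  have h1r : 0 < 1 - r := by linarith
  set t := x / (1 - r) with ht
  have ht0 : 0 ≤ t := div_nonneg hx0 h1r.le
  have key : 1 ≤ (1 - x) * (1 + t) := by
    have hne : (1 - r) ≠ 0 := h1r.ne'
    have heq : (1 - x) * (1 + t) - 1 = x * (r - x) / (1 - r) := by
      rw [ht]; field_simp; ring
    have hnn : 0 ≤ x * (r - x) / (1 - r) :=
      div_nonneg (mul_nonneg hx0 (by linarith)) h1r.le
    linarith
  have e1 : Real.exp (-t) ≤ 1 / (1 + t) := by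
    rw [Real.exp_neg]
    have h2 : 1 + t ≤ Real.exp t := by linarith [Real.add_one_le_exp t]
    rw [one_div]
    exact inv_anti₀ (by linarith) h2
  have e2 : 1 / (1 + t) ≤ 1 - x := by
    rw [div_le_iff₀ (by linarith)]
    linarith
  linarith

noncomputable def C (q : ℂ) : ℝ := Real.exp (-(‖q‖ / (1 - ‖q‖) ^ 2))

lemma C_pos : 0 < C q := Real.exp_pos _

lemma P_lb (hq : ‖q‖ < 1) (n : ℕ) : C q ≤ ‖P q n‖ := by
  have h1r : 0 < 1 - ‖q‖ := by linarith
  have hpow : ∀ j : ℕ, ‖q‖ ^ (j + 1) ≤ ‖q‖ := fun j => by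
    rw [← norm_pow]; exact norm_qpow_le hq j
  have hpow0 : ∀ j : ℕ, (0 : ℝ) ≤ ‖q‖ ^ (j + 1) := fun j => by positivity
  have step3 : ∑ j ∈ range n, ‖q‖ ^ (j + 1) / (1 - ‖q‖) ≤ ‖q‖ / (1 - ‖q‖) ^ 2 := by
    have hg : ∑ j ∈ range n, ‖q‖ ^ j ≤ (1 - ‖q‖)⁻¹ := by
      have h := Summable.sum_le_tsum (range n) (fun j _ => by positivity)
        (summable_geometric_of_lt_one (norm_nonneg q) hq)
      rwa [tsum_geometric_of_lt_one (norm_nonneg q) hq] at h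
    have hsum : ∑ j ∈ range n, ‖q‖ ^ (j + 1) ≤ ‖q‖ / (1 - ‖q‖) := by
      calc ∑ j ∈ range n, ‖q‖ ^ (j + 1) = ‖q‖ * ∑ j ∈ range n, ‖q‖ ^ j := by
            rw [Finset.mul_sum]; exact Finset.sum_congr rfl fun j _ => by ring
        _ ≤ ‖q‖ * (1 - ‖q‖)⁻¹ := mul_le_mul_of_nonneg_left hg (norm_nonneg q)
        _ = ‖q‖ / (1 - ‖q‖) := by rw [div_eq_mul_inv]
    calc ∑ j ∈ range n, ‖q‖ ^ (j + 1) / (1 - ‖q‖)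
        = (∑ j ∈ range n, ‖q‖ ^ (j + 1)) / (1 - ‖q‖) := by rw [Finset.sum_div]
      _ ≤ (‖q‖ / (1 - ‖q‖)) / (1 - ‖q‖) := by gcongr
      _ = ‖q‖ / (1 - ‖q‖) ^ 2 := by rw [div_div, sq]
  have step2 : Real.exp (-(∑ j ∈ range n, ‖q‖ ^ (j + 1) / (1 - ‖q‖))) ≤
      ∏ j ∈ range n, (1 - ‖q‖ ^ (j + 1)) := by
    have hneg : -(∑ j ∈ range n, ‖q‖ ^ (j + 1) / (1 - ‖q‖)) =
        ∑ j ∈ range n, -(‖q‖ ^ (j + 1) / (1 - ‖q‖)) := by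
      rw [← Finset.sum_neg_distrib]
    rw [hneg, Real.exp_sum]
    exact Finset.prod_le_prod (fun j _ => (Real.exp_pos _).le)
      (fun j _ => exp_le_one_sub hq (hpow0 j) (hpow j))
  have step1 : ∏ j ∈ range n, (1 - ‖q‖ ^ (j + 1)) ≤ ‖P q n‖ := by
    rw [P, norm_prod]
    apply Finset.prod_le_prod (fun j _ => by linarith [hpow j])
    intro j _
    calc 1 - ‖q‖ ^ (j + 1) = ‖(1 : ℂ)‖ - ‖q ^ (j + 1)‖ := by rw [norm_one, norm_pow]
      _ ≤ ‖1 - q ^ (j + 1)‖ := norm_sub_norm_le _ _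
  have step0 : C q ≤ Real.exp (-(∑ j ∈ range n, ‖q‖ ^ (j + 1) / (1 - ‖q‖))) :=
    Real.exp_le_exp.2 (neg_le_neg step3)
  linarith

lemma multipliable_fac (hq : ‖q‖ < 1) : Multipliable (fun j : ℕ => 1 - q ^ (j + 1)) := by
  apply Complex.multipliable_of_summable_log
  obtain ⟨N, hN⟩ : ∃ N : ℕ, ‖q‖ ^ N < 1 / 2 := exists_pow_lt_of_lt_one (by norm_num) hq
  rw [← summable_nat_add_iff N]
  have hb : ∀ n : ℕ, ‖Complex.log (1 - q ^ (n + N + 1))‖ ≤ 3 / 2 * (‖q‖ ^ N * ‖q‖ ^ (n + 1)) := by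
    intro n
    have hz : ‖-(q ^ (n + N + 1))‖ ≤ 1 / 2 := by
      rw [norm_neg, norm_pow]
      calc ‖q‖ ^ (n + N + 1) ≤ ‖q‖ ^ N := by
            apply pow_le_pow_of_le_one (norm_nonneg q) hq.le; omega
        _ ≤ 1 / 2 := hN.le
    have h := Complex.norm_log_one_add_half_le_self hz
    rw [← sub_eq_add_neg] at h
    calc ‖Complex.log (1 - q ^ (n + N + 1))‖ ≤ 3 / 2 * ‖-(q ^ (n + N + 1))‖ := h
      _ = 3 / 2 * (‖q‖ ^ N * ‖q‖ ^ (n + 1)) := by rw [norm_neg, norm_pow]; ring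
  apply Summable.of_norm_bounded ?_ hb
  apply Summable.mul_left
  apply Summable.mul_left
  exact (summable_geometric_of_lt_one (norm_nonneg q) hq).comp_injective (add_left_injective 1)

noncomputable def Pinf (q : ℂ) : ℂ := ∏' j : ℕ, (1 - q ^ (j + 1))

lemma P_tendsto (hq : ‖q‖ < 1) : Tendsto (P q) atTop (𝓝 (Pinf q)) := by
  have := (multipliable_fac hq).hasProd.tendsto_prod_nat
  exact this

lemma Pinf_lb (hq : ‖q‖ < 1) : C q ≤ ‖Pinf q‖ :=
  ge_of_tendsto' ((P_tendsto hq).norm) (fun n => P_lb hq n)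

lemma Pinf_ne (hq : ‖q‖ < 1) : Pinf q ≠ 0 := by
  have h := lt_of_lt_of_le C_pos (Pinf_lb hq)
  exact norm_pos_iff.mp h

lemma summable_g (hq : ‖q‖ < 1) {z : ℂ} (hz : ‖z‖ ≤ ‖q‖) :
    Summable (fun n : ℕ => z ^ n / P q n) := by
  apply Summable.of_norm_bounded (g := fun n : ℕ => (C q)⁻¹ * ‖q‖ ^ n)
    ((summable_geometric_of_lt_one (norm_nonneg q) hq).mul_left _)
  intro n
  rw [norm_div, norm_pow]
  calc ‖z‖ ^ n / ‖P q n‖ ≤ ‖q‖ ^ n / C q :=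
        div_le_div₀ (by positivity) (pow_le_pow_left₀ (norm_nonneg z) hz n) C_pos (P_lb hq n)
    _ = (C q)⁻¹ * ‖q‖ ^ n := by rw [div_eq_inv_mul]

lemma summable_g1 (hq : ‖q‖ < 1) {z : ℂ} (hz : ‖z‖ ≤ ‖q‖) :
    Summable (fun n : ℕ => (n : ℂ) * z ^ n / P q n) := by
  have hs : Summable (fun n : ℕ => (n : ℝ) ^ 1 * ‖q‖ ^ n) :=
    summable_pow_mul_geometric_of_norm_lt_one 1 (by rwa [Real.norm_of_nonneg (norm_nonneg q)])
  apply Summable.of_norm_bounded (g := fun n : ℕ => (C q)⁻¹ * ((n : ℝ) ^ 1 * ‖q‖ ^ n)) (hs.mul_left _)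
  intro n
  rw [norm_div, norm_mul, norm_pow, Complex.norm_natCast]
  calc (n : ℝ) * ‖z‖ ^ n / ‖P q n‖ ≤ (n : ℝ) * ‖q‖ ^ n / C q := by
        apply div_le_div₀ (by positivity) _ C_pos (P_lb hq n)
        exact mul_le_mul_of_nonneg_left (pow_le_pow_left₀ (norm_nonneg z) hz n) (Nat.cast_nonneg n)
    _ = (C q)⁻¹ * ((n : ℝ) ^ 1 * ‖q‖ ^ n) := by rw [pow_one, div_eq_inv_mul]

noncomputable def g (q z : ℂ) : ℂ := ∑' n : ℕ, z ^ n / P q n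
noncomputable def g1 (q z : ℂ) : ℂ := ∑' n : ℕ, (n : ℂ) * z ^ n / P q n

lemma norm_qz_le (hq : ‖q‖ < 1) {z : ℂ} (hz : ‖z‖ ≤ ‖q‖) : ‖q * z‖ ≤ ‖q‖ := by
  rw [norm_mul]
  calc ‖q‖ * ‖z‖ ≤ ‖q‖ * 1 := by
        apply mul_le_mul_of_nonneg_left _ (norm_nonneg q)
        exact hz.trans hq.le
    _ = ‖q‖ := mul_one _

/-- functional equation: g z - g (q z) = z * g z -/
lemma FE (hq : ‖q‖ < 1) {z : ℂ} (hz : ‖z‖ ≤ ‖q‖) : g q z - g q (q * z) = z * g q z := by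
  have hs := summable_g hq hz
  have hs' := summable_g hq (norm_qz_le hq hz)
  have h1 : g q z - g q (q * z) = ∑' n : ℕ, (z ^ n / P q n - (q * z) ^ n / P q n) :=
    (Summable.tsum_sub hs hs').symm
  rw [h1]
  have h2 : ∑' n : ℕ, (z ^ n / P q n - (q * z) ^ n / P q n)
      = ∑' n : ℕ, (z ^ (n + 1) / P q (n + 1) - (q * z) ^ (n + 1) / P q (n + 1)) := by
    rw [Summable.tsum_eq_zero_add (hs.sub hs')]
    simp
  rw [h2]
  have h3 : ∀ n : ℕ, z ^ (n + 1) / P q (n + 1) - (q * z) ^ (n + 1) / P q (n + 1)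
      = z * (z ^ n / P q n) := by
    intro n
    rw [P_succ]
    have hPn := P_ne hq n
    have hfn := fac_ne hq n
    field_simp
    ring
  rw [tsum_congr h3, tsum_mul_left]
  rfl

/-- differentiated functional equation -/
lemma FE1 (hq : ‖q‖ < 1) {z : ℂ} (hz : ‖z‖ ≤ ‖q‖) :
    g1 q z - g1 q (q * z) = z * g1 q z + z * g q z := by
  have hs := summable_g1 hq hz
  have hs' := summable_g1 hq (norm_qz_le hq hz)
  have h1 : g1 q z - g1 q (q * z)
      = ∑' n : ℕ, ((n : ℂ) * z ^ n / P q n - (n : ℂ) * (q * z) ^ n / P q n) :=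
    (Summable.tsum_sub hs hs').symm
  rw [h1]
  have h2 : ∑' n : ℕ, ((n : ℂ) * z ^ n / P q n - (n : ℂ) * (q * z) ^ n / P q n)
      = ∑' n : ℕ, (((n : ℕ) + 1 : ℂ) * z ^ (n + 1) / P q (n + 1)
          - ((n : ℕ) + 1 : ℂ) * (q * z) ^ (n + 1) / P q (n + 1)) := by
    rw [Summable.tsum_eq_zero_add (hs.sub hs')]
    simp
  rw [h2]
  have h3 : ∀ n : ℕ, (((n : ℕ) + 1 : ℂ) * z ^ (n + 1) / P q (n + 1)
        - ((n : ℕ) + 1 : ℂ) * (q * z) ^ (n + 1) / P q (n + 1))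
      = z * ((n : ℂ) * z ^ n / P q n) + z * (z ^ n / P q n) := by
    intro n
    rw [P_succ]
    have hPn := P_ne hq n
    have hfn := fac_ne hq n
    field_simp
    ring
  rw [tsum_congr h3, Summable.tsum_add (((summable_g1 hq hz).mul_left z).congr (fun n => by ring))
    (((summable_g hq hz).mul_left z).congr (fun n => by ring))]
  rw [tsum_mul_left, tsum_mul_left]
  rfl

lemma norm_g_sub_one (hq : ‖q‖ < 1) {z : ℂ} (hz : ‖z‖ ≤ ‖q‖) :
    ‖g q z - 1‖ ≤ ‖z‖ * ((C q)⁻¹ * (1 - ‖q‖)⁻¹) := by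
  have hs := summable_g hq hz
  have h0 : g q z = 1 + ∑' n : ℕ, z ^ (n + 1) / P q (n + 1) := by
    rw [g, Summable.tsum_eq_zero_add hs]; simp [P]
  rw [h0, add_sub_cancel_left]
  apply tsum_of_norm_bounded
    (((hasSum_geometric_of_lt_one (norm_nonneg q) hq).mul_left ((C q)⁻¹)).mul_left ‖z‖)
  intro n
  rw [norm_div, norm_pow]
  calc ‖z‖ ^ (n + 1) / ‖P q (n + 1)‖ ≤ (‖z‖ * ‖q‖ ^ n) / C q := by
        apply div_le_div₀ (by positivity) _ C_pos (P_lb hq (n + 1))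
        calc ‖z‖ ^ (n + 1) = ‖z‖ * ‖z‖ ^ n := by ring
          _ ≤ ‖z‖ * ‖q‖ ^ n :=
            mul_le_mul_of_nonneg_left (pow_le_pow_left₀ (norm_nonneg z) hz n) (norm_nonneg z)
    _ = ‖z‖ * ((C q)⁻¹ * ‖q‖ ^ n) := by rw [div_eq_mul_inv]; ring

noncomputable def K1 (q : ℂ) : ℝ := ∑' n : ℕ, ((n : ℝ) + 1) * ‖q‖ ^ n

lemma summable_K1 (hq : ‖q‖ < 1) : Summable (fun n : ℕ => ((n : ℝ) + 1) * ‖q‖ ^ n) := by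
  have h1 : Summable (fun n : ℕ => (n : ℝ) ^ 1 * ‖q‖ ^ n) :=
    summable_pow_mul_geometric_of_norm_lt_one 1 (by rwa [Real.norm_of_nonneg (norm_nonneg q)])
  have h2 := summable_geometric_of_lt_one (norm_nonneg q) hq
  exact (h1.add h2).congr fun n => by ring

lemma K1_nonneg : 0 ≤ K1 q := tsum_nonneg fun n => by positivity

lemma norm_g1_le (hq : ‖q‖ < 1) {z : ℂ} (hz : ‖z‖ ≤ ‖q‖) :
    ‖g1 q z‖ ≤ ‖z‖ * ((C q)⁻¹ * K1 q) := by
  have hs := summable_g1 hq hz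
  have h0 : g1 q z = ∑' n : ℕ, (((n : ℕ) + 1 : ℂ)) * z ^ (n + 1) / P q (n + 1) := by
    rw [g1, Summable.tsum_eq_zero_add hs]; push_cast; simp
  rw [h0]
  apply tsum_of_norm_bounded (((summable_K1 hq).hasSum.mul_left ((C q)⁻¹)).mul_left ‖z‖)
  intro n
  rw [norm_div, norm_mul, norm_pow]
  have hn : ‖((n : ℕ) + 1 : ℂ)‖ = (n : ℝ) + 1 := by
    rw [show ((n : ℕ) + 1 : ℂ) = ((n + 1 : ℕ) : ℂ) by push_cast; ring, Complex.norm_natCast]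
    push_cast; ring
  rw [hn]
  calc ((n : ℝ) + 1) * ‖z‖ ^ (n + 1) / ‖P q (n + 1)‖
      ≤ (‖z‖ * (((n : ℝ) + 1) * ‖q‖ ^ n)) / C q := by
        apply div_le_div₀ (by positivity) _ C_pos (P_lb hq (n + 1))
        calc ((n : ℝ) + 1) * ‖z‖ ^ (n + 1) = ‖z‖ * (((n : ℝ) + 1) * ‖z‖ ^ n) := by ring
          _ ≤ ‖z‖ * (((n : ℝ) + 1) * ‖q‖ ^ n) := by
            apply mul_le_mul_of_nonneg_left _ (norm_nonneg z)
            exact mul_le_mul_of_nonneg_left (pow_le_pow_left₀ (norm_nonneg z) hz n)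
              (by positivity)
    _ = ‖z‖ * ((C q)⁻¹ * (((n : ℝ) + 1) * ‖q‖ ^ n)) := by rw [div_eq_mul_inv]; ring

lemma tendsto_g_one (hq : ‖q‖ < 1) :
    Tendsto (fun m : ℕ => g q (q ^ (m + 1))) atTop (𝓝 1) := by
  have h0 : Tendsto (fun m : ℕ => g q (q ^ (m + 1)) - 1) atTop (𝓝 0) := by
    apply squeeze_zero_norm (a := fun m => ((C q)⁻¹ * (1 - ‖q‖)⁻¹) * ‖q‖ ^ (m + 1))
    · intro m
      have := norm_g_sub_one hq (norm_qpow_le hq m)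
      rw [norm_pow] at this
      linarith [this]
    · have h1 : Tendsto (fun m : ℕ => ‖q‖ ^ (m + 1)) atTop (𝓝 0) :=
        (tendsto_pow_atTop_nhds_zero_of_lt_one (norm_nonneg q) hq).comp
          (tendsto_add_atTop_nat 1)
      simpa using h1.const_mul ((C q)⁻¹ * (1 - ‖q‖)⁻¹)
  have := h0.add_const 1
  simpa using this

lemma euler_iter (hq : ‖q‖ < 1) (k : ℕ) :
    ∀ M : ℕ, g q (q ^ (k + 1)) * P q (M + k) = P q k * g q (q ^ (M + k + 1)) := by
  intro M
  induction M with
  | zero => simp [mul_comm]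
  | succ M ih =>
    have hz : ‖q ^ (M + k + 1)‖ ≤ ‖q‖ := norm_qpow_le hq (M + k)
    have hfe := FE hq hz
    have hqz : q * q ^ (M + k + 1) = q ^ (M + 1 + k + 1) := by
      rw [← pow_succ']; ring_nf
    rw [hqz] at hfe
    have hstep : g q (q ^ (M + 1 + k + 1)) = (1 - q ^ (M + k + 1)) * g q (q ^ (M + k + 1)) := by
      linear_combination -hfe
    have hP : P q (M + 1 + k) = P q (M + k) * (1 - q ^ (M + k + 1)) := by
      rw [show M + 1 + k = (M + k) + 1 by ring, P_succ]
    rw [hP, hstep, ← mul_assoc, ih]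
    ring

lemma euler (hq : ‖q‖ < 1) (k : ℕ) : g q (q ^ (k + 1)) * Pinf q = P q k := by
  have hL : Tendsto (fun M : ℕ => g q (q ^ (k + 1)) * P q (M + k)) atTop
      (𝓝 (g q (q ^ (k + 1)) * Pinf q)) :=
    ((P_tendsto hq).comp (tendsto_add_atTop_nat k)).const_mul _
  have hR : Tendsto (fun M : ℕ => P q k * g q (q ^ (M + k + 1))) atTop (𝓝 (P q k * 1)) := by
    exact ((tendsto_g_one hq).comp (tendsto_add_atTop_nat k)).const_mul _
  have heq : (fun M : ℕ => g q (q ^ (k + 1)) * P q (M + k))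
      = fun M : ℕ => P q k * g q (q ^ (M + k + 1)) := funext fun M => euler_iter hq k M
  rw [heq] at hL
  have := tendsto_nhds_unique hL hR
  rw [this, mul_one]

lemma b_step (hq : ‖q‖ < 1) (k : ℕ) :
    g1 q (q ^ (k + 1)) / P q k - g1 q (q ^ (k + 2)) / P q (k + 1)
      = (Pinf q)⁻¹ * (q ^ (k + 1) / (1 - q ^ (k + 1))) := by
  have hw : 1 - q ^ (k + 1) ≠ 0 := fac_ne hq k
  have hPk : P q k ≠ 0 := P_ne hq k
  have hPinf : Pinf q ≠ 0 := Pinf_ne hq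
  have hz : ‖q ^ (k + 1)‖ ≤ ‖q‖ := norm_qpow_le hq k
  have hfe := FE1 hq hz
  have hqz : q * q ^ (k + 1) = q ^ (k + 2) := by rw [← pow_succ']
  rw [hqz] at hfe
  have hgq : g q (q ^ (k + 1)) = P q k / Pinf q := by
    rw [eq_div_iff hPinf]; exact euler hq k
  rw [P_succ]
  calc g1 q (q ^ (k + 1)) / P q k - g1 q (q ^ (k + 2)) / (P q k * (1 - q ^ (k + 1)))
      = ((1 - q ^ (k + 1)) * g1 q (q ^ (k + 1)) - g1 q (q ^ (k + 2)))
          / (P q k * (1 - q ^ (k + 1))) := by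
        field_simp
    _ = (q ^ (k + 1) * g q (q ^ (k + 1))) / (P q k * (1 - q ^ (k + 1))) := by
        rw [show (1 - q ^ (k + 1)) * g1 q (q ^ (k + 1)) - g1 q (q ^ (k + 2))
            = q ^ (k + 1) * g q (q ^ (k + 1)) from by linear_combination hfe]
    _ = (Pinf q)⁻¹ * (q ^ (k + 1) / (1 - q ^ (k + 1))) := by
        rw [hgq]; field_simp

lemma hc (hq : ‖q‖ < 1) (N : ℕ) : 1 / P q (N + 1) - 1 / P q N = q ^ (N + 1) / P q (N + 1) := by
  rw [P_succ]
  have h1 := P_ne hq N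
  have h2 := fac_ne hq N
  field_simp
  ring

lemma hT (hq : ‖q‖ < 1) : ∀ N : ℕ, ∑ n ∈ range N, (1 / P q N - 1 / P q n)
    = ∑ k ∈ range N, (((k : ℂ) + 1) * q ^ (k + 1) / P q (k + 1)) := by
  intro N
  induction N with
  | zero => simp
  | succ N ih =>
    rw [Finset.sum_range_succ, Finset.sum_range_succ]
    have hsplit : ∑ n ∈ range N, (1 / P q (N + 1) - 1 / P q n)
        = (∑ n ∈ range N, (1 / P q N - 1 / P q n)) + N * (q ^ (N + 1) / P q (N + 1)) := by
      calc ∑ n ∈ range N, (1 / P q (N + 1) - 1 / P q n)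
          = ∑ n ∈ range N, ((1 / P q N - 1 / P q n) + q ^ (N + 1) / P q (N + 1)) := by
            apply Finset.sum_congr rfl
            intro n _
            linear_combination hc hq N
        _ = (∑ n ∈ range N, (1 / P q N - 1 / P q n)) + N * (q ^ (N + 1) / P q (N + 1)) := by
            rw [Finset.sum_add_distrib, Finset.sum_const, Finset.card_range, nsmul_eq_mul]
    rw [hsplit, ih]
    have hlast := hc hq N
    push_cast
    linear_combination hlast

lemma uchimura (hq : ‖q‖ < 1) :
    HasSum (fun k : ℕ => (Pinf q)⁻¹ * (q ^ (k + 1) / (1 - q ^ (k + 1)))) (g1 q q) := by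
  have hsum2 : Summable (fun k : ℕ => (Pinf q)⁻¹ * (q ^ (k + 1) / (1 - q ^ (k + 1)))) := by
    apply Summable.of_norm_bounded
      (g := fun k : ℕ => (‖(Pinf q)⁻¹‖ * (‖q‖ / (1 - ‖q‖))) * ‖q‖ ^ k)
      ((summable_geometric_of_lt_one (norm_nonneg q) hq).mul_left _)
    intro k
    rw [norm_mul, norm_div, norm_pow]
    have h1 : ‖q‖ ^ (k + 1) / ‖1 - q ^ (k + 1)‖ ≤ ‖q‖ ^ (k + 1) / (1 - ‖q‖) := by
      gcongr
      · exact norm_fac_ge hq k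
    calc ‖(Pinf q)⁻¹‖ * (‖q‖ ^ (k + 1) / ‖1 - q ^ (k + 1)‖)
        ≤ ‖(Pinf q)⁻¹‖ * (‖q‖ ^ (k + 1) / (1 - ‖q‖)) :=
          mul_le_mul_of_nonneg_left h1 (norm_nonneg _)
      _ = (‖(Pinf q)⁻¹‖ * (‖q‖ / (1 - ‖q‖))) * ‖q‖ ^ k := by rw [pow_succ]; ring
  have htel : ∀ N : ℕ, ∑ k ∈ range N, ((Pinf q)⁻¹ * (q ^ (k + 1) / (1 - q ^ (k + 1))))
      = g1 q q - g1 q (q ^ (N + 1)) / P q N := by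
    intro N
    calc ∑ k ∈ range N, ((Pinf q)⁻¹ * (q ^ (k + 1) / (1 - q ^ (k + 1))))
        = ∑ k ∈ range N, (g1 q (q ^ (k + 1)) / P q k - g1 q (q ^ (k + 1 + 1)) / P q (k + 1)) :=
          Finset.sum_congr rfl fun k _ => (b_step hq k).symm
      _ = g1 q (q ^ (0 + 1)) / P q 0 - g1 q (q ^ (N + 1)) / P q N :=
          Finset.sum_range_sub' (fun k => g1 q (q ^ (k + 1)) / P q k) N
      _ = g1 q q - g1 q (q ^ (N + 1)) / P q N := by norm_num [P]
  have hbN : Tendsto (fun N : ℕ => g1 q (q ^ (N + 1)) / P q N) atTop (𝓝 0) := by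
    apply squeeze_zero_norm (a := fun N : ℕ => (((C q)⁻¹ * K1 q) * (C q)⁻¹) * ‖q‖ ^ (N + 1))
    · intro N
      rw [norm_div]
      have h1 := norm_g1_le hq (norm_qpow_le hq N)
      rw [norm_pow] at h1
      calc ‖g1 q (q ^ (N + 1))‖ / ‖P q N‖
          ≤ (‖q‖ ^ (N + 1) * ((C q)⁻¹ * K1 q)) / C q :=
            div_le_div₀ (mul_nonneg (pow_nonneg (norm_nonneg q) _)
              (mul_nonneg (inv_nonneg.2 C_pos.le) K1_nonneg)) h1 C_pos (P_lb hq N)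
        _ = (((C q)⁻¹ * K1 q) * (C q)⁻¹) * ‖q‖ ^ (N + 1) := by
            rw [div_eq_mul_inv]; ring
    · have h1 : Tendsto (fun N : ℕ => ‖q‖ ^ (N + 1)) atTop (𝓝 0) :=
        (tendsto_pow_atTop_nhds_zero_of_lt_one (norm_nonneg q) hq).comp
          (tendsto_add_atTop_nat 1)
      simpa using h1.const_mul (((C q)⁻¹ * K1 q) * (C q)⁻¹)
  have hlim : Tendsto (fun N : ℕ => ∑ k ∈ range N,
      ((Pinf q)⁻¹ * (q ^ (k + 1) / (1 - q ^ (k + 1))))) atTop (𝓝 (g1 q q)) := by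
    have := (tendsto_const_nhds (x := g1 q q) (f := atTop (α := ℕ))).sub hbN
    rw [sub_zero] at this
    exact this.congr fun N => (htel N).symm
  have hfin := hsum2.hasSum
  have heq : (∑' k : ℕ, ((Pinf q)⁻¹ * (q ^ (k + 1) / (1 - q ^ (k + 1))))) = g1 q q :=
    tendsto_nhds_unique hsum2.hasSum.tendsto_sum_nat hlim
  rwa [heq] at hfin

lemma g1q_eq (hq : ‖q‖ < 1) :
    g1 q q = ∑' k : ℕ, (((k : ℂ) + 1) * q ^ (k + 1) / P q (k + 1)) := by
  rw [g1, Summable.tsum_eq_zero_add (summable_g1 hq le_rfl)]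
  push_cast
  simp

lemma summable_shift_g1 (hq : ‖q‖ < 1) :
    Summable (fun k : ℕ => ((k : ℂ) + 1) * q ^ (k + 1) / P q (k + 1)) := by
  have h := (summable_nat_add_iff 1).2 (summable_g1 hq (le_refl ‖q‖))
  exact h.congr fun n => by push_cast; ring

end SumsOfTails

open SumsOfTails Filter Finset Topology in
/-- Sums of tails for the partition generating function: for `‖q‖ < 1`,
`∑_{n=0}^∞ (1/(q;q)_n - 1/(q;q)_∞) = -(1/(q;q)_∞) ∑_{n=1}^∞ q^n/(1-q^n)`. -/
theorem sums_of_tails_partition (q : ℂ) (hq : ‖q‖ < 1) :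
    (∑' n : ℕ, (1 / ∏ j ∈ Finset.range n, (1 - q ^ (j + 1)) -
        1 / ∏' j : ℕ, (1 - q ^ (j + 1)))) =
      -(1 / ∏' j : ℕ, (1 - q ^ (j + 1))) *
        ∑' n : ℕ, q ^ (n + 1) / (1 - q ^ (n + 1)) := by
  have hPinf : Pinf q ≠ 0 := Pinf_ne hq
  show (∑' n : ℕ, (1 / P q n - 1 / Pinf q))
      = -(1 / Pinf q) * ∑' n : ℕ, q ^ (n + 1) / (1 - q ^ (n + 1))
  -- termwise bound
  set B : ℝ := ((C q)⁻¹ * (1 - ‖q‖)⁻¹) * (C q)⁻¹ with hB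
  have hterm_eq : ∀ n : ℕ, 1 / P q n - 1 / Pinf q = (1 - g q (q ^ (n + 1))) / P q n := by
    intro n
    have he := euler hq n
    have hPn := P_ne hq n
    rw [div_sub_div _ _ hPn hPinf, div_eq_div_iff (mul_ne_zero hPn hPinf) hPn]
    linear_combination (P q n) * he
  have hterm : ∀ n : ℕ, ‖1 / P q n - 1 / Pinf q‖ ≤ B * ‖q‖ ^ (n + 1) := by
    intro n
    rw [hterm_eq n, norm_div]
    have h1 : ‖1 - g q (q ^ (n + 1))‖ ≤ ‖q‖ ^ (n + 1) * ((C q)⁻¹ * (1 - ‖q‖)⁻¹) := by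
      rw [norm_sub_rev]
      have := norm_g_sub_one hq (norm_qpow_le hq n)
      rwa [norm_pow] at this
    calc ‖1 - g q (q ^ (n + 1))‖ / ‖P q n‖
        ≤ (‖q‖ ^ (n + 1) * ((C q)⁻¹ * (1 - ‖q‖)⁻¹)) / C q :=
          div_le_div₀ (mul_nonneg (pow_nonneg (norm_nonneg q) _)
            (mul_nonneg (inv_nonneg.2 C_pos.le) (inv_nonneg.2 (by linarith))))
            h1 C_pos (P_lb hq n)
      _ = B * ‖q‖ ^ (n + 1) := by rw [hB, div_eq_mul_inv]; ring
  -- summability of the main series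
  have hsummable : Summable (fun n : ℕ => 1 / P q n - 1 / Pinf q) := by
    apply Summable.of_norm_bounded (g := fun n : ℕ => (B * ‖q‖) * ‖q‖ ^ n)
      ((summable_geometric_of_lt_one (norm_nonneg q) hq).mul_left _)
    intro n
    calc ‖1 / P q n - 1 / Pinf q‖ ≤ B * ‖q‖ ^ (n + 1) := hterm n
      _ = (B * ‖q‖) * ‖q‖ ^ n := by rw [pow_succ]; ring
  -- partial sums identity
  have hps : ∀ N : ℕ, ∑ n ∈ range N, (1 / P q n - 1 / Pinf q)
      = -(∑ k ∈ range N, (((k : ℂ) + 1) * q ^ (k + 1) / P q (k + 1)))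
        + (N : ℂ) * (1 / P q N - 1 / Pinf q) := by
    intro N
    rw [← hT hq N]
    calc ∑ n ∈ range N, (1 / P q n - 1 / Pinf q)
        = ∑ n ∈ range N, (-(1 / P q N - 1 / P q n) + (1 / P q N - 1 / Pinf q)) :=
          Finset.sum_congr rfl fun n _ => by ring
      _ = -(∑ n ∈ range N, (1 / P q N - 1 / P q n)) + (N : ℂ) * (1 / P q N - 1 / Pinf q) := by
          rw [Finset.sum_add_distrib, Finset.sum_const, Finset.card_range, nsmul_eq_mul,
            ← Finset.sum_neg_distrib]
  -- the first part tends to g1 q q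
  have hfirst : Tendsto (fun N : ℕ => ∑ k ∈ range N,
      (((k : ℂ) + 1) * q ^ (k + 1) / P q (k + 1))) atTop (𝓝 (g1 q q)) := by
    have h := (summable_shift_g1 hq).hasSum
    rw [← g1q_eq hq] at h
    exact h.tendsto_sum_nat
  -- the second part tends to 0
  have hsecond : Tendsto (fun N : ℕ => (N : ℂ) * (1 / P q N - 1 / Pinf q)) atTop (𝓝 0) := by
    apply squeeze_zero_norm (a := fun N : ℕ => (B * ‖q‖) * ((N : ℝ) ^ 1 * ‖q‖ ^ N))
    · intro N
      rw [norm_mul, Complex.norm_natCast]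
      calc (N : ℝ) * ‖1 / P q N - 1 / Pinf q‖ ≤ (N : ℝ) * (B * ‖q‖ ^ (N + 1)) :=
            mul_le_mul_of_nonneg_left (hterm N) (Nat.cast_nonneg N)
        _ = (B * ‖q‖) * ((N : ℝ) ^ 1 * ‖q‖ ^ N) := by rw [pow_succ]; ring
    · have h1 : Tendsto (fun N : ℕ => (N : ℝ) ^ 1 * ‖q‖ ^ N) atTop (𝓝 0) :=
        (summable_pow_mul_geometric_of_norm_lt_one (R := ℝ) 1
          (by rwa [Real.norm_of_nonneg (norm_nonneg q)])).tendsto_atTop_zero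
      simpa using h1.const_mul (B * ‖q‖)
  -- combine: the tsum equals -(g1 q q)
  have hlim : Tendsto (fun N : ℕ => ∑ n ∈ range N, (1 / P q n - 1 / Pinf q)) atTop
      (𝓝 (-(g1 q q))) := by
    have h := (hfirst.neg.add hsecond).congr fun N => (hps N).symm
    rwa [add_zero] at h
  have htsum1 : ∑' n : ℕ, (1 / P q n - 1 / Pinf q) = -(g1 q q) :=
    tendsto_nhds_unique hsummable.hasSum.tendsto_sum_nat hlim
  -- Uchimura: g1 q q = (Pinf q)⁻¹ * ∑' ...
  have huch : (Pinf q)⁻¹ * ∑' k : ℕ, (q ^ (k + 1) / (1 - q ^ (k + 1))) = g1 q q := by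
    rw [← tsum_mul_left]
    exact (uchimura hq).tsum_eq
  rw [htsum1, ← huch, one_div]
  ring
end

section
/- The q-binomial theorem: for |q|<1, |z|<1, and any complex c, ∑_{n=0}^∞ ((c;q)_n/(q;q)_n) z^n = (cz;q)_∞/(z;q)_∞. -/
open Filter Topology

namespace QBinomAux

noncomputable def a (q c : ℂ) (n : ℕ) : ℂ :=
  (∏ j ∈ Finset.range n, (1 - c * q ^ j)) / (∏ j ∈ Finset.range n, (1 - q ^ (j + 1)))

lemma den_factor_ne {q : ℂ} (hq : ‖q‖ < 1) (j : ℕ) : (1 : ℂ) - q ^ (j + 1) ≠ 0 := by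
  intro h
  have h1 : ‖q ^ (j + 1)‖ < 1 := by
    rw [norm_pow]; exact pow_lt_one₀ (norm_nonneg q) hq (Nat.succ_ne_zero j)
  have h2 : (q : ℂ) ^ (j + 1) = 1 := by linear_combination -h
  rw [h2] at h1; simp at h1

lemma den_ne_zero {q : ℂ} (hq : ‖q‖ < 1) (n : ℕ) :
    (∏ j ∈ Finset.range n, (1 - q ^ (j + 1))) ≠ 0 :=
  Finset.prod_ne_zero_iff.mpr fun j _ => den_factor_ne hq j

lemma a_zero (q c : ℂ) : a q c 0 = 1 := by simp [a]

lemma a_rec {q : ℂ} (hq : ‖q‖ < 1) (c : ℂ) (n : ℕ) :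
    a q c n * (1 - c * q ^ n) = a q c (n + 1) * (1 - q ^ (n + 1)) := by
  unfold a
  rw [Finset.prod_range_succ, Finset.prod_range_succ]
  have h1 := den_ne_zero hq n
  have h2 := den_factor_ne hq n
  field_simp

lemma exp_le_one_sub {x r : ℝ} (hx0 : 0 ≤ x) (hxr : x ≤ r) (hr : r < 1) :
    Real.exp (-(x / (1 - r))) ≤ 1 - x := by
  have h1 : 0 < 1 - r := by linarith
  have h2 : 0 < 1 - x := by linarith
  have h3 := Real.log_le_sub_one_of_pos (show (0:ℝ) < (1 - x)⁻¹ by positivity)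
  rw [Real.log_inv] at h3
  have h5 : (1 - x)⁻¹ - 1 = x / (1 - x) := by field_simp; ring
  have h4 : x / (1 - x) ≤ x / (1 - r) := by
    rw [div_le_div_iff₀ h2 h1]; nlinarith
  calc Real.exp (-(x / (1 - r))) ≤ Real.exp (Real.log (1 - x)) :=
        Real.exp_le_exp.mpr (by linarith)
    _ = 1 - x := Real.exp_log h2

lemma norm_a_le {q : ℂ} (hq : ‖q‖ < 1) (c : ℂ) (n : ℕ) :
    ‖a q c n‖ ≤ Real.exp (‖c‖ / (1 - ‖q‖)) / Real.exp (-(‖q‖ / (1 - ‖q‖) ^ 2)) := by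
  have hr0 : (0:ℝ) ≤ ‖q‖ := norm_nonneg q
  have hr1 : (0:ℝ) < 1 - ‖q‖ := by linarith
  have hgeo : ∀ m : ℕ, ∑ j ∈ Finset.range m, ‖q‖ ^ j ≤ (1 - ‖q‖)⁻¹ := fun m =>
    (Summable.sum_le_tsum (Finset.range m) (fun i _ => by positivity)
      (summable_geometric_of_lt_one hr0 hq)).trans_eq (tsum_geometric_of_lt_one hr0 hq)
  have hnum : ‖∏ j ∈ Finset.range n, (1 - c * q ^ j)‖ ≤ Real.exp (‖c‖ / (1 - ‖q‖)) := by
    rw [norm_prod]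
    calc ∏ j ∈ Finset.range n, ‖1 - c * q ^ j‖
        ≤ ∏ j ∈ Finset.range n, Real.exp (‖c‖ * ‖q‖ ^ j) := by
          apply Finset.prod_le_prod (fun j _ => norm_nonneg _)
          intro j _
          have ha : ‖(1:ℂ) - c * q ^ j‖ ≤ 1 + ‖c‖ * ‖q‖ ^ j := by
            calc ‖(1:ℂ) - c * q ^ j‖ ≤ ‖(1:ℂ)‖ + ‖c * q ^ j‖ := norm_sub_le _ _
              _ = 1 + ‖c‖ * ‖q‖ ^ j := by rw [norm_one, norm_mul, norm_pow]
          have hb := Real.add_one_le_exp (‖c‖ * ‖q‖ ^ j)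
          linarith
      _ = Real.exp (∑ j ∈ Finset.range n, ‖c‖ * ‖q‖ ^ j) := (Real.exp_sum _ _).symm
      _ ≤ Real.exp (‖c‖ / (1 - ‖q‖)) := by
          rw [Real.exp_le_exp, ← Finset.mul_sum, div_eq_mul_inv]
          exact mul_le_mul_of_nonneg_left (hgeo n) (norm_nonneg c)
  have hden : Real.exp (-(‖q‖ / (1 - ‖q‖) ^ 2)) ≤ ‖∏ j ∈ Finset.range n, (1 - q ^ (j + 1))‖ := by
    rw [norm_prod]
    calc Real.exp (-(‖q‖ / (1 - ‖q‖) ^ 2))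
        ≤ Real.exp (-∑ j ∈ Finset.range n, ‖q‖ ^ (j + 1) / (1 - ‖q‖)) := by
          rw [Real.exp_le_exp, neg_le_neg_iff]
          have hs : ∑ j ∈ Finset.range n, ‖q‖ ^ (j + 1) / (1 - ‖q‖)
              = (‖q‖ * ∑ j ∈ Finset.range n, ‖q‖ ^ j) / (1 - ‖q‖) := by
            rw [← Finset.sum_div, Finset.mul_sum]
            congr 1
            exact Finset.sum_congr rfl fun j _ => by rw [pow_succ]; ring
          rw [hs]
          have h6 : ‖q‖ * ∑ j ∈ Finset.range n, ‖q‖ ^ j ≤ ‖q‖ * (1 - ‖q‖)⁻¹ :=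
            mul_le_mul_of_nonneg_left (hgeo n) hr0
          calc (‖q‖ * ∑ j ∈ Finset.range n, ‖q‖ ^ j) / (1 - ‖q‖)
              ≤ (‖q‖ * (1 - ‖q‖)⁻¹) / (1 - ‖q‖) := (div_le_div_iff_of_pos_right hr1).mpr h6
            _ = ‖q‖ / (1 - ‖q‖) ^ 2 := by field_simp
      _ = ∏ j ∈ Finset.range n, Real.exp (-(‖q‖ ^ (j + 1) / (1 - ‖q‖))) := by
          rw [← Real.exp_sum, ← Finset.sum_neg_distrib]
      _ ≤ ∏ j ∈ Finset.range n, ‖1 - q ^ (j + 1)‖ := by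
          apply Finset.prod_le_prod (fun j _ => (Real.exp_pos _).le)
          intro j _
          have hx0 : (0:ℝ) ≤ ‖q‖ ^ (j + 1) := by positivity
          have hxr : ‖q‖ ^ (j + 1) ≤ ‖q‖ := by
            calc ‖q‖ ^ (j + 1) ≤ ‖q‖ ^ 1 := pow_le_pow_of_le_one hr0 hq.le (by omega)
              _ = ‖q‖ := pow_one _
          calc Real.exp (-(‖q‖ ^ (j + 1) / (1 - ‖q‖))) ≤ 1 - ‖q‖ ^ (j + 1) :=
                exp_le_one_sub hx0 hxr hq
            _ = ‖(1:ℂ)‖ - ‖q ^ (j + 1)‖ := by rw [norm_one, norm_pow]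
            _ ≤ ‖1 - q ^ (j + 1)‖ := norm_sub_norm_le _ _
  rw [a, norm_div]
  exact div_le_div₀ (Real.exp_pos _).le hnum (Real.exp_pos _) hden

noncomputable def f (q c w : ℂ) : ℂ := ∑' n : ℕ, a q c n * w ^ n

lemma summable_f {q : ℂ} (hq : ‖q‖ < 1) (c : ℂ) {w : ℂ} (hw : ‖w‖ < 1) :
    Summable (fun n : ℕ => a q c n * w ^ n) := by
  set M := Real.exp (‖c‖ / (1 - ‖q‖)) / Real.exp (-(‖q‖ / (1 - ‖q‖) ^ 2)) with hM
  apply Summable.of_norm_bounded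
    (Summable.mul_left M (summable_geometric_of_lt_one (norm_nonneg w) hw))
  intro n
  rw [norm_mul, norm_pow]
  exact mul_le_mul_of_nonneg_right (norm_a_le hq c n) (by positivity)

lemma funEq {q : ℂ} (hq : ‖q‖ < 1) (c : ℂ) {w : ℂ} (hw : ‖w‖ < 1) :
    (1 - w) * f q c w = (1 - c * w) * f q c (q * w) := by
  have hqw : ‖q * w‖ < 1 := by
    rw [norm_mul]
    exact lt_of_le_of_lt (mul_le_of_le_one_left (norm_nonneg w) hq.le) hw
  have hst : Summable fun n : ℕ => a q c n * w ^ n := summable_f hq c hw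
  have hss : Summable fun n : ℕ => a q c n * (q * w) ^ n := summable_f hq c hqw
  have H1 : HasSum (fun n : ℕ => a q c n * w ^ n) (f q c w) := hst.hasSum
  have H2 : HasSum (fun n : ℕ => a q c n * (q * w) ^ n) (f q c (q * w)) := hss.hasSum
  have H3 : HasSum (fun n : ℕ => (a q c n * w ^ n - w * (a q c n * w ^ n))
        - (a q c n * (q * w) ^ n - c * w * (a q c n * (q * w) ^ n)))
      ((f q c w - w * f q c w) - (f q c (q * w) - c * w * f q c (q * w))) :=
    (H1.sub (H1.mul_left w)).sub (H2.sub (H2.mul_left (c * w)))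
  set g : ℕ → ℂ := fun n => a q c n * (1 - q ^ n) * w ^ n with hgdef
  have hptw : (fun n : ℕ => (a q c n * w ^ n - w * (a q c n * w ^ n))
      - (a q c n * (q * w) ^ n - c * w * (a q c n * (q * w) ^ n)))
      = fun n : ℕ => g n - g (n + 1) := by
    funext n
    simp only [hgdef]
    linear_combination (-(w ^ (n + 1))) * a_rec hq c n
  have H4 : HasSum (fun n : ℕ => g n - g (n + 1))
      ((f q c w - w * f q c w) - (f q c (q * w) - c * w * f q c (q * w))) := hptw ▸ H3
  set M := Real.exp (‖c‖ / (1 - ‖q‖)) / Real.exp (-(‖q‖ / (1 - ‖q‖) ^ 2)) with hMdef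
  have hM0 : (0:ℝ) ≤ M := le_of_lt (by rw [hMdef]; positivity)
  have hg0 : g 0 = 0 := by simp [hgdef]
  have hgN : Tendsto g atTop (𝓝 0) := by
    apply squeeze_zero_norm (a := fun n => 2 * M * ‖w‖ ^ n)
    · intro n
      simp only [hgdef]
      rw [norm_mul, norm_mul, norm_pow]
      have e1 : ‖(1:ℂ) - q ^ n‖ ≤ 2 := by
        calc ‖(1:ℂ) - q ^ n‖ ≤ ‖(1:ℂ)‖ + ‖q ^ n‖ := norm_sub_le _ _
          _ ≤ 1 + 1 := by
              rw [norm_one, norm_pow]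
              have := pow_le_one₀ (norm_nonneg q) hq.le (n := n); linarith
          _ = 2 := by norm_num
      have e2 := norm_a_le hq c n
      have e3 : (0:ℝ) ≤ ‖w‖ ^ n := by positivity
      calc ‖a q c n‖ * ‖(1:ℂ) - q ^ n‖ * ‖w‖ ^ n
          ≤ (M * 2) * ‖w‖ ^ n := by
            apply mul_le_mul_of_nonneg_right _ e3
            exact mul_le_mul e2 e1 (norm_nonneg _) hM0
        _ = 2 * M * ‖w‖ ^ n := by ring
    · simpa using (tendsto_pow_atTop_nhds_zero_of_lt_one (norm_nonneg w) hw).const_mul (2 * M)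
  have T : Tendsto (fun N => ∑ n ∈ Finset.range N, (g n - g (n + 1))) atTop (𝓝 0) := by
    have he : (fun N => ∑ n ∈ Finset.range N, (g n - g (n + 1))) = fun N => g 0 - g N :=
      funext fun N => Finset.sum_range_sub' g N
    rw [he, hg0]
    simpa using hgN.neg
  have hS0 : (f q c w - w * f q c w) - (f q c (q * w) - c * w * f q c (q * w)) = 0 :=
    tendsto_nhds_unique H4.tendsto_sum_nat T
  linear_combination hS0

lemma iterEq {q : ℂ} (hq : ‖q‖ < 1) (c : ℂ) {z : ℂ} (hz : ‖z‖ < 1) (N : ℕ) :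
    (∏ j ∈ Finset.range N, (1 - z * q ^ j)) * f q c z
      = (∏ j ∈ Finset.range N, (1 - c * z * q ^ j)) * f q c (q ^ N * z) := by
  induction N with
  | zero => simp
  | succ N ih =>
    have hwn : ‖q ^ N * z‖ < 1 := by
      rw [norm_mul, norm_pow]
      exact lt_of_le_of_lt
        (mul_le_of_le_one_left (norm_nonneg z) (pow_le_one₀ (norm_nonneg q) hq.le)) hz
    have hfe := funEq hq c hwn
    rw [show q * (q ^ N * z) = q ^ (N + 1) * z by ring] at hfe
    rw [Finset.prod_range_succ, Finset.prod_range_succ]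
    linear_combination (1 - z * q ^ N) * ih
      + (∏ j ∈ Finset.range N, (1 - c * z * q ^ j)) * hfe

lemma f_tendsto_one {q : ℂ} (hq : ‖q‖ < 1) (c : ℂ) {z : ℂ} (hz : ‖z‖ < 1) :
    Tendsto (fun N : ℕ => f q c (q ^ N * z)) atTop (𝓝 1) := by
  set M := Real.exp (‖c‖ / (1 - ‖q‖)) / Real.exp (-(‖q‖ / (1 - ‖q‖) ^ 2)) with hMdef
  have hM0 : (0:ℝ) ≤ M := le_of_lt (by rw [hMdef]; positivity)
  have hz1 : (0:ℝ) < 1 - ‖z‖ := by linarith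
  have key : ∀ w : ℂ, ‖w‖ ≤ ‖z‖ → ‖f q c w - 1‖ ≤ M * (1 - ‖z‖)⁻¹ * ‖w‖ := by
    intro w hwz
    have hw : ‖w‖ < 1 := lt_of_le_of_lt hwz hz
    have hsum : Summable fun n : ℕ => a q c n * w ^ n := summable_f hq c hw
    have h1 : f q c w - 1 = ∑' n : ℕ, a q c (n + 1) * w ^ (n + 1) := by
      unfold f
      rw [Summable.tsum_eq_zero_add hsum, a_zero]
      simp
    rw [h1]
    have hb : HasSum (fun n : ℕ => (M * ‖w‖) * ‖w‖ ^ n) ((M * ‖w‖) * (1 - ‖w‖)⁻¹) :=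
      (hasSum_geometric_of_lt_one (norm_nonneg w) hw).mul_left (M * ‖w‖)
    have h2 : ‖∑' n : ℕ, a q c (n + 1) * w ^ (n + 1)‖ ≤ (M * ‖w‖) * (1 - ‖w‖)⁻¹ := by
      apply tsum_of_norm_bounded hb
      intro n
      rw [norm_mul, norm_pow, pow_succ]
      calc ‖a q c (n + 1)‖ * (‖w‖ ^ n * ‖w‖) ≤ M * (‖w‖ ^ n * ‖w‖) := by
            apply mul_le_mul_of_nonneg_right (norm_a_le hq c _) (by positivity)
        _ = M * ‖w‖ * ‖w‖ ^ n := by ring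
    calc ‖∑' n : ℕ, a q c (n + 1) * w ^ (n + 1)‖ ≤ M * ‖w‖ * (1 - ‖w‖)⁻¹ := h2
      _ ≤ M * (1 - ‖z‖)⁻¹ * ‖w‖ := by
          have h3 : (1 - ‖w‖)⁻¹ ≤ (1 - ‖z‖)⁻¹ := by
            apply inv_anti₀ hz1; linarith
          have h4 := mul_le_mul_of_nonneg_left h3 (mul_nonneg hM0 (norm_nonneg w))
          calc M * ‖w‖ * (1 - ‖w‖)⁻¹ ≤ M * ‖w‖ * (1 - ‖z‖)⁻¹ := h4
            _ = M * (1 - ‖z‖)⁻¹ * ‖w‖ := by ring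
  rw [← tendsto_sub_nhds_zero_iff]
  apply squeeze_zero_norm (a := fun N => (M * (1 - ‖z‖)⁻¹ * ‖z‖) * ‖q‖ ^ N)
  · intro N
    have h5 : ‖q ^ N * z‖ ≤ ‖z‖ := by
      rw [norm_mul, norm_pow]
      exact mul_le_of_le_one_left (norm_nonneg z) (pow_le_one₀ (norm_nonneg q) hq.le)
    calc ‖f q c (q ^ N * z) - 1‖ ≤ M * (1 - ‖z‖)⁻¹ * ‖q ^ N * z‖ := key _ h5
      _ = (M * (1 - ‖z‖)⁻¹ * ‖z‖) * ‖q‖ ^ N := by rw [norm_mul, norm_pow]; ring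
  · simpa using (tendsto_pow_atTop_nhds_zero_of_lt_one (norm_nonneg q) hq).const_mul
      (M * (1 - ‖z‖)⁻¹ * ‖z‖)

lemma hasProd_of_ne {q w : ℂ} (hq : ‖q‖ < 1) (hne : ∀ j : ℕ, (1:ℂ) - w * q ^ j ≠ 0) :
    HasProd (fun j : ℕ => 1 - w * q ^ j) (∏' j : ℕ, (1 - w * q ^ j)) ∧
      (∏' j : ℕ, (1 - w * q ^ j)) ≠ 0 := by
  have hlog : Summable (fun n : ℕ => Complex.log (1 - w * q ^ n)) := by
    apply Summable.of_norm_bounded_eventually_nat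
      (((summable_geometric_of_lt_one (norm_nonneg q) hq).mul_left ‖w‖).mul_left (3 / 2))
    have h0 : Tendsto (fun n : ℕ => ‖w‖ * ‖q‖ ^ n) atTop (𝓝 0) := by
      simpa using (tendsto_pow_atTop_nhds_zero_of_lt_one (norm_nonneg q) hq).const_mul ‖w‖
    filter_upwards [h0.eventually_lt_const (show (0:ℝ) < 1 / 2 by norm_num)] with n hn
    have hnorm : ‖-(w * q ^ n)‖ ≤ 1 / 2 := by
      rw [norm_neg, norm_mul, norm_pow]; exact hn.le
    have hl := Complex.norm_log_one_add_half_le_self hnorm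
    rw [show (1:ℂ) + -(w * q ^ n) = 1 - w * q ^ n by ring] at hl
    calc ‖Complex.log (1 - w * q ^ n)‖ ≤ 3 / 2 * ‖-(w * q ^ n)‖ := hl
      _ = 3 / 2 * (‖w‖ * ‖q‖ ^ n) := by rw [norm_neg, norm_mul, norm_pow]
  constructor
  · exact (Complex.hasProd_of_hasSum_log (fun n => hne n) hlog.hasSum).multipliable.hasProd
  · have hcexp := Complex.cexp_tsum_eq_tprod (f := fun n => 1 - w * q ^ n)
      (fun n => hne n) hlog
    rw [← hcexp]
    exact Complex.exp_ne_zero _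

lemma hasProd_gen {q : ℂ} (hq : ‖q‖ < 1) (w : ℂ) :
    HasProd (fun j : ℕ => 1 - w * q ^ j) (∏' j : ℕ, (1 - w * q ^ j)) := by
  by_cases hne : ∀ j : ℕ, (1:ℂ) - w * q ^ j ≠ 0
  · exact (hasProd_of_ne hq hne).1
  · push_neg at hne
    obtain ⟨j0, hj0⟩ := hne
    have hzero : HasProd (fun j : ℕ => 1 - w * q ^ j) 0 := by
      have hev : ∀ᶠ s : Finset ℕ in atTop, ∏ i ∈ s, (1 - w * q ^ i) = 0 := by
        filter_upwards [eventually_ge_atTop ({j0} : Finset ℕ)] with s hs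
        exact Finset.prod_eq_zero (hs (Finset.mem_singleton_self j0)) hj0
      exact Tendsto.congr' (by filter_upwards [hev] with s hs; exact hs.symm) tendsto_const_nhds
    rw [hzero.tprod_eq]
    exact hzero

end QBinomAux

open QBinomAux in
/-- The `q`-binomial theorem: for `‖q‖ < 1` and `‖z‖ < 1` and any `c : ℂ`,
`∑_{n=0}^∞ ((c;q)_n/(q;q)_n) z^n = (cz;q)_∞/(z;q)_∞`. -/
theorem q_binomial_theorem (q c z : ℂ) (hq : ‖q‖ < 1) (hz : ‖z‖ < 1) :
    (∑' n : ℕ, (∏ j ∈ Finset.range n, (1 - c * q ^ j)) /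
        (∏ j ∈ Finset.range n, (1 - q ^ (j + 1))) * z ^ n) =
      (∏' j : ℕ, (1 - c * z * q ^ j)) / ∏' j : ℕ, (1 - z * q ^ j) := by
  have hdne : ∀ j : ℕ, (1:ℂ) - z * q ^ j ≠ 0 := by
    intro j h
    have h1 : ‖z * q ^ j‖ < 1 := by
      rw [norm_mul, norm_pow]
      exact lt_of_le_of_lt
        (mul_le_of_le_one_right (norm_nonneg z) (pow_le_one₀ (norm_nonneg q) hq.le)) hz
    have h2 : z * q ^ j = 1 := by linear_combination -h
    rw [h2] at h1; simp at h1
  obtain ⟨hD, hD0⟩ := hasProd_of_ne hq hdne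
  have hA := hasProd_gen hq (c * z)
  have h1 : Tendsto (fun N => (∏ j ∈ Finset.range N, (1 - z * q ^ j)) * f q c z) atTop
      (𝓝 ((∏' j : ℕ, (1 - z * q ^ j)) * f q c z)) := hD.tendsto_prod_nat.mul_const _
  have h2 : Tendsto
      (fun N => (∏ j ∈ Finset.range N, (1 - c * z * q ^ j)) * f q c (q ^ N * z)) atTop
      (𝓝 ((∏' j : ℕ, (1 - c * z * q ^ j)) * 1)) :=
    hA.tendsto_prod_nat.mul (f_tendsto_one hq c hz)
  have h3 : (fun N => (∏ j ∈ Finset.range N, (1 - z * q ^ j)) * f q c z)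
      = fun N => (∏ j ∈ Finset.range N, (1 - c * z * q ^ j)) * f q c (q ^ N * z) :=
    funext fun N => iterEq hq c hz N
  rw [h3] at h1
  have h4 := tendsto_nhds_unique h1 h2
  have h5 : f q c z = (∏' j : ℕ, (1 - c * z * q ^ j)) / ∏' j : ℕ, (1 - z * q ^ j) := by
    rw [eq_div_iff hD0]; linear_combination h4
  exact h5
end

section
/- For |q|<1, the product (q;q)_∞/(−q;q)_∞ equals the theta series ∑_{n∈ℤ} (−1)^n q^{n²}. -/
open Finset

noncomputable section GaussAux

/-- `(c;c)_n = ∏_{i=1}^n (1-c^i)`. -/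
def qfac (c : ℂ) (n : ℕ) : ℂ := ∏ i ∈ Finset.range n, (1 - c ^ (i + 1))

/-- Gaussian binomial coefficient (as a complex number). -/
def qbin (c : ℂ) (m k : ℕ) : ℂ :=
  if k ≤ m then qfac c m / (qfac c k * qfac c (m - k)) else 0

variable {c : ℂ} (hc : ∀ i : ℕ, 1 - c ^ (i + 1) ≠ 0)

lemma qfac_zero : qfac c 0 = 1 := by simp [qfac]

lemma qfac_succ (n : ℕ) : qfac c (n + 1) = qfac c n * (1 - c ^ (n + 1)) := by
  simp [qfac, Finset.prod_range_succ]

include hc in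
lemma qfac_ne_zero (n : ℕ) : qfac c n ≠ 0 :=
  Finset.prod_ne_zero_iff.2 fun i _ => hc i

include hc in
lemma qbin_zero (m : ℕ) : qbin c m 0 = 1 := by
  simp [qbin, qfac_zero, div_self (qfac_ne_zero hc m)]

include hc in
lemma qbin_self (m : ℕ) : qbin c m m = 1 := by
  simp [qbin, qfac_zero, div_self (qfac_ne_zero hc m)]

lemma qbin_of_gt {m k : ℕ} (h : m < k) : qbin c m k = 0 := by
  simp [qbin, Nat.not_le.2 h]

include hc in
lemma qbin_pascal {m k : ℕ} (hk : k ≤ m) :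
    qbin c (m + 1) (k + 1) = qbin c m (k + 1) + c ^ (m - k) * qbin c m k := by
  rcases eq_or_lt_of_le hk with rfl | hlt
  · simp [qbin_self hc, qbin_of_gt (Nat.lt_succ_self _), Nat.sub_self]
  · obtain ⟨d, rfl⟩ : ∃ d, m = k + 1 + d := ⟨m - (k + 1), by omega⟩
    have h1 : k + 1 + d - k = d + 1 := by omega
    have h2 : k + 1 + d - (k + 1) = d := by omega
    have h3 : k + 1 + d + 1 - (k + 1) = d + 1 := by omega
    simp only [qbin, if_pos (by omega : k + 1 ≤ k + 1 + d + 1),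
      if_pos (by omega : k + 1 ≤ k + 1 + d), if_pos (by omega : k ≤ k + 1 + d), h1, h2, h3]
    rw [show k + 1 + d + 1 = (k + 1 + d) + 1 by ring, qfac_succ, qfac_succ (d),
      qfac_succ (k)]
    have hmd := qfac_ne_zero hc (k + 1 + d)
    have hkk := qfac_ne_zero hc k
    have hdd := qfac_ne_zero hc d
    have e1 := hc k
    have e2 := hc d
    have e3 := hc (k + 1 + d)
    field_simp
    ring_nf


lemma cauchy_qbinom (q x : ℂ) (hc : ∀ i : ℕ, 1 - (q ^ 2) ^ (i + 1) ≠ 0) (m : ℕ) :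
    ∏ j ∈ Finset.range m, (1 + x * q ^ (2 * j)) =
      ∑ k ∈ Finset.range (m + 1), q ^ (k * (k - 1)) * qbin (q ^ 2) m k * x ^ k := by
  induction m with
  | zero => simp [qbin_self hc]
  | succ m ih =>
    have hpas : ∀ k ∈ Finset.range (m + 1),
        q ^ ((k + 1) * (k + 1 - 1)) * qbin (q ^ 2) (m + 1) (k + 1) * x ^ (k + 1)
          = q ^ ((k+1) * k) * qbin (q ^ 2) m (k + 1) * x ^ (k + 1)
            + (q ^ (k * (k - 1)) * qbin (q ^ 2) m k * x ^ k) * (x * q ^ (2 * m)) := by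
      intro k hk
      rw [Finset.mem_range] at hk
      have hk' : k ≤ m := by omega
      rw [qbin_pascal hc hk']
      have he : (k + 1) * k + 2 * (m - k) = k * (k - 1) + 2 * m := by
        zify [hk', Nat.one_le_iff_ne_zero]
        cases k with
        | zero => simp
        | succ j => push_cast [Nat.succ_sub_one]; ring
      have hpow : q ^ ((k + 1) * k) * ((q ^ 2) ^ (m - k)) = q ^ (k * (k - 1)) * q ^ (2 * m) := by
        rw [← pow_mul, ← pow_add, ← pow_add, he]
      simp only [Nat.add_sub_cancel]
      linear_combination (qbin (q ^ 2) m k * x ^ (k + 1)) * hpow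
    rw [Finset.prod_range_succ, ih, Finset.sum_range_succ' _ (m + 1),
      Finset.sum_congr rfl hpas, Finset.sum_add_distrib, ← Finset.sum_mul]
    have h0 : q ^ (0 * (0 - 1)) * qbin (q ^ 2) (m + 1) 0 * x ^ 0 = 1 := by
      simp [qbin_zero hc]
    rw [h0]
    have hs1 : ∑ k ∈ Finset.range (m + 1 + 1), q ^ (k * (k - 1)) * qbin (q ^ 2) m k * x ^ k
        = (∑ k ∈ Finset.range (m + 1),
            q ^ ((k + 1) * (k + 1 - 1)) * qbin (q ^ 2) m (k + 1) * x ^ (k + 1))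
          + q ^ (0 * (0 - 1)) * qbin (q ^ 2) m 0 * x ^ 0 :=
      Finset.sum_range_succ' _ _
    have hs2 : ∑ k ∈ Finset.range (m + 1 + 1), q ^ (k * (k - 1)) * qbin (q ^ 2) m k * x ^ k
        = (∑ k ∈ Finset.range (m + 1), q ^ (k * (k - 1)) * qbin (q ^ 2) m k * x ^ k)
          + q ^ ((m+1) * (m + 1 - 1)) * qbin (q ^ 2) m (m + 1) * x ^ (m + 1) :=
      Finset.sum_range_succ _ _
    rw [qbin_of_gt (Nat.lt_succ_self m)] at hs2
    simp only [Nat.add_sub_cancel] at hs1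
    rw [qbin_zero hc] at hs1
    simp only [mul_zero, zero_mul, add_zero, pow_zero, mul_one, one_mul] at hs1 hs2
    rw [hs2] at hs1
    rw [hs1]
    ring
lemma gauss_finite (q : ℂ) (hq0 : q ≠ 0) (hc : ∀ i : ℕ, 1 - (q ^ 2) ^ (i + 1) ≠ 0) (n : ℕ) :
    ∑ k ∈ Finset.range (2 * n + 1),
        (-1 : ℂ) ^ k * qbin (q ^ 2) (2 * n) k * q ^ ((((k : ℤ) - n) ^ 2).toNat)
      = (-1 : ℂ) ^ n * (∏ j ∈ Finset.range n, (1 - q ^ (2 * j + 1))) ^ 2 := by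
  rcases Nat.eq_zero_or_pos n with rfl | hn
  · simp [qbin_self hc]
  have hqp : ∀ a : ℕ, (q : ℂ) ^ a ≠ 0 := fun a => pow_ne_zero a hq0
  have key := cauchy_qbinom q (-(q ^ (2 * n - 1))⁻¹) hc (2 * n)
  have prodeq : ∏ j ∈ Finset.range (2 * n), (1 + -(q ^ (2 * n - 1))⁻¹ * q ^ (2 * j))
      = (-1 : ℂ) ^ n * q ^ (n * (n - 1)) * (q ^ (n * (2 * n - 1)))⁻¹ *
          (∏ j ∈ Finset.range n, (1 - q ^ (2 * j + 1))) ^ 2 := by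
    rw [show Finset.range (2 * n) = Finset.range (n + n) by rw [two_mul], Finset.prod_range_add]
    have h2 : ∀ j ∈ Finset.range n,
        (1 + -(q ^ (2 * n - 1))⁻¹ * q ^ (2 * (n + j))) = 1 - q ^ (2 * j + 1) := by
      intro j _
      have hp : q ^ (2 * (n + j)) = q ^ (2 * j + 1) * q ^ (2 * n - 1) := by
        rw [← pow_add]; congr 1; omega
      rw [hp]
      field_simp
      ring
    have h1 : ∀ j ∈ Finset.range n, (1 + -(q ^ (2 * n - 1))⁻¹ * q ^ (2 * j))
        = (-1) * (q ^ (2 * j) * (q ^ (2 * n - 1))⁻¹) * (1 - q ^ (2 * (n - 1 - j) + 1)) := by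
      intro j hj
      rw [Finset.mem_range] at hj
      have hph : q ^ (2 * j) * q ^ (2 * (n - 1 - j) + 1) = q ^ (2 * n - 1) := by
        rw [← pow_add]; congr 1; omega
      field_simp
      linear_combination -hph
    have hrefl : ∏ j ∈ Finset.range n, (1 - q ^ (2 * (n - 1 - j) + 1))
        = ∏ j ∈ Finset.range n, (1 - q ^ (2 * j + 1)) :=
      Finset.prod_range_reflect (fun j => 1 - q ^ (2 * j + 1)) n
    have hgeom : ∏ j ∈ Finset.range n, (q : ℂ) ^ (2 * j) = q ^ (n * (n - 1)) := by
      rw [Finset.prod_pow_eq_pow_sum]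
      congr 1
      rw [← Finset.mul_sum, mul_comm, Finset.sum_range_id_mul_two]
    have hinv : ∏ _j ∈ Finset.range n, ((q : ℂ) ^ (2 * n - 1))⁻¹
        = (q ^ (n * (2 * n - 1)))⁻¹ := by
      rw [Finset.prod_const, Finset.card_range, inv_pow, ← pow_mul, Nat.mul_comm]
    rw [Finset.prod_congr rfl h1, Finset.prod_congr rfl h2, Finset.prod_mul_distrib,
      Finset.prod_mul_distrib, Finset.prod_mul_distrib, hrefl, hgeom, hinv, Finset.prod_const,
      Finset.card_range]
    ring
  have sumeq : ∑ k ∈ Finset.range (2 * n + 1),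
      q ^ (k * (k - 1)) * qbin (q ^ 2) (2 * n) k * (-(q ^ (2 * n - 1))⁻¹) ^ k
      = (q ^ (n * n))⁻¹ * ∑ k ∈ Finset.range (2 * n + 1),
          (-1 : ℂ) ^ k * qbin (q ^ 2) (2 * n) k * q ^ ((((k : ℤ) - n) ^ 2).toNat) := by
    rw [Finset.mul_sum]
    refine Finset.sum_congr rfl ?_
    intro k hk
    rw [Finset.mem_range] at hk
    have hek : ((((k : ℤ) - n) ^ 2).toNat) + (2 * n - 1) * k = n * n + k * (k - 1) := by
      have h1 : ((((((k : ℤ) - n) ^ 2).toNat : ℤ))) = ((k : ℤ) - n) ^ 2 :=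
        Int.toNat_of_nonneg (sq_nonneg _)
      rcases Nat.eq_zero_or_pos k with rfl | hk1
      · simp only [Nat.cast_zero, zero_sub, neg_sq, Nat.mul_zero, Nat.add_zero, Nat.zero_mul,
          Nat.mul_zero]
        rw [show ((n : ℤ)) ^ 2 = ((n * n : ℕ) : ℤ) by push_cast; ring, Int.toNat_natCast]
      · rw [← Nat.cast_inj (R := ℤ)]
        push_cast [Nat.cast_sub hk1, Nat.cast_sub (show 1 ≤ 2 * n by omega)]
        rw [h1]; ring
    have hpow : (q : ℂ) ^ ((((k : ℤ) - n) ^ 2).toNat) * q ^ ((2 * n - 1) * k)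
        = q ^ (n * n) * q ^ (k * (k - 1)) := by
      rw [← pow_add, ← pow_add, hek]
    have hx : (-(q ^ (2 * n - 1))⁻¹ : ℂ) ^ k = (-1) ^ k * (q ^ ((2 * n - 1) * k))⁻¹ := by
      rw [neg_pow, inv_pow, ← pow_mul]
    rw [hx]
    field_simp
    linear_combination (-qbin (q ^ 2) (2 * n) k) * hpow
  rw [prodeq, sumeq] at key
  have hnn : (q : ℂ) ^ (n * (n - 1)) * q ^ (n * n) = q ^ (n * (2 * n - 1)) := by
    rw [← pow_add]; congr 1
    zify [hn, show 1 ≤ 2 * n by omega]; ring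
  field_simp at key
  have hfin : (∑ k ∈ Finset.range (2 * n + 1),
        (-1 : ℂ) ^ k * qbin (q ^ 2) (2 * n) k * q ^ ((((k : ℤ) - n) ^ 2).toNat))
          * q ^ (n * (2 * n - 1))
      = ((-1 : ℂ) ^ n * (∏ j ∈ Finset.range n, (1 - q ^ (2 * j + 1))) ^ 2)
          * q ^ (n * (2 * n - 1)) := by
    linear_combination (-1 : ℂ) * key
      + ((-1 : ℂ) ^ n * (∏ j ∈ Finset.range n, (1 - q ^ (2 * j + 1))) ^ 2) * hnn
  exact mul_right_cancel₀ (hqp _) hfin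
lemma geom_aux {r : ℝ} (hr0 : 0 ≤ r) (hr1 : r < 1) : Summable (fun i : ℕ => r ^ (i + 1)) := by
  simpa [pow_succ] using (summable_geometric_of_lt_one hr0 hr1).mul_right r

lemma mult_aux (q : ℂ) (hq : ‖q‖ < 1) (u : ℕ → ℂ) (hu : ∀ i, ‖u i‖ ≤ ‖q‖ ^ (i + 1)) :
    Multipliable (fun i => 1 + u i) ∧ (∏' i, (1 + u i)) ≠ 0 := by
  have hr0 : (0 : ℝ) ≤ ‖q‖ := norm_nonneg q
  have hulyt : ∀ i, ‖u i‖ < 1 := by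
    intro i
    refine lt_of_le_of_lt (hu i) (lt_of_le_of_lt ?_ hq)
    exact pow_le_of_le_one hr0 hq.le (Nat.succ_ne_zero i)
  have hne : ∀ i, 1 + u i ≠ 0 := by
    intro i h
    have : ‖u i‖ = 1 := by
      have : u i = -1 := by linear_combination h
      simp [this]
    exact absurd this (ne_of_lt (hulyt i))
  have hsum : Summable (fun i => Complex.log (1 + u i)) := by
    apply Summable.of_norm_bounded_eventually_nat (g := fun i => 3 / 2 * ‖q‖ ^ (i + 1))
      ((geom_aux hr0 hq).mul_left _)
    have hev : ∀ᶠ i : ℕ in Filter.atTop, ‖q‖ ^ (i + 1) ≤ 1 / 2 := by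
      have := (tendsto_pow_atTop_nhds_zero_of_lt_one hr0 hq).comp
        (Filter.tendsto_add_atTop_nat 1)
      exact this.eventually_le_const (by norm_num)
    filter_upwards [hev] with i hi
    calc ‖Complex.log (1 + u i)‖ ≤ 3 / 2 * ‖u i‖ :=
          Complex.norm_log_one_add_half_le_self (le_trans (hu i) hi)
      _ ≤ 3 / 2 * ‖q‖ ^ (i + 1) := by nlinarith [hu i]
  constructor
  · exact Complex.multipliable_of_summable_log hsum
  · have := Complex.cexp_tsum_eq_tprod hne hsum
    rw [← this]
    exact Complex.exp_ne_zero _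
lemma summable_log_aux {r : ℝ} (hr0 : 0 ≤ r) (hr1 : r < 1) :
    Summable (fun i : ℕ => Real.log (1 - r ^ (2 * i + 2))) := by
  have hr2 : r ^ 2 < 1 := by nlinarith
  have hr20 : (0:ℝ) ≤ r ^ 2 := by positivity
  have hs : Summable (fun i : ℕ => (1 - r ^ 2)⁻¹ * r ^ (2 * i + 2)) := by
    have := (geom_aux hr20 hr2).mul_left (1 - r ^ 2)⁻¹
    refine this.congr fun i => ?_
    rw [← pow_mul]
    ring_nf
  apply Summable.of_norm_bounded hs
  intro i
  set x := r ^ (2 * i + 2) with hx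
  have hxr : x ≤ r ^ 2 := pow_le_pow_of_le_one hr0 hr1.le (by omega)
  have hx0 : 0 ≤ x := by positivity
  have hpos : 0 < 1 - x := by nlinarith
  have hpos2 : 0 < 1 - r ^ 2 := by nlinarith
  have hle : -Real.log (1 - x) ≤ (1 - x)⁻¹ - 1 := by
    have h := Real.log_le_sub_one_of_pos (inv_pos.2 hpos)
    rwa [Real.log_inv] at h
  have hinv : (1 - x)⁻¹ ≤ (1 - r ^ 2)⁻¹ := by
    apply inv_anti₀ hpos2
    nlinarith
  have hnorm : ‖Real.log (1 - x)‖ = -Real.log (1 - x) := by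
    rw [Real.norm_eq_abs, abs_of_nonpos (Real.log_nonpos hpos.le (by nlinarith))]
  rw [hnorm]
  have h1 : (1 - x)⁻¹ - 1 = x * (1 - x)⁻¹ := by field_simp; ring
  calc -Real.log (1 - x) ≤ (1 - x)⁻¹ - 1 := hle
    _ = x * (1 - x)⁻¹ := h1
    _ ≤ x * (1 - r ^ 2)⁻¹ := by nlinarith [inv_pos.2 hpos]
    _ = (1 - r ^ 2)⁻¹ * x := by ring

lemma norm_q2pow (q : ℂ) (i : ℕ) : ‖((q : ℂ) ^ 2) ^ (i + 1)‖ = ‖q‖ ^ (2 * i + 2) := by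
  rw [norm_pow, norm_pow, ← pow_mul]
  ring_nf

lemma qfac_norm_le (q : ℂ) (hq : ‖q‖ < 1) (m : ℕ) :
    ‖qfac (q ^ 2) m‖ ≤ Real.exp (∑' i : ℕ, ‖q‖ ^ (i + 1)) := by
  have hr0 : (0:ℝ) ≤ ‖q‖ := norm_nonneg q
  rw [qfac, norm_prod]
  calc ∏ i ∈ Finset.range m, ‖1 - ((q:ℂ) ^ 2) ^ (i + 1)‖
      ≤ ∏ i ∈ Finset.range m, Real.exp (‖q‖ ^ (i + 1)) := by
        apply Finset.prod_le_prod (fun i _ => norm_nonneg _)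
        intro i _
        calc ‖1 - ((q:ℂ) ^ 2) ^ (i + 1)‖ ≤ ‖(1 : ℂ)‖ + ‖((q:ℂ) ^ 2) ^ (i + 1)‖ := norm_sub_le _ _
          _ = 1 + ‖q‖ ^ (2 * i + 2) := by rw [norm_one, norm_q2pow]
          _ ≤ 1 + ‖q‖ ^ (i + 1) := by
              have := pow_le_pow_of_le_one hr0 hq.le (show i + 1 ≤ 2 * i + 2 by omega)
              linarith
          _ ≤ Real.exp (‖q‖ ^ (i + 1)) := by
              have := Real.add_one_le_exp (‖q‖ ^ (i + 1))
              linarith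
    _ = Real.exp (∑ i ∈ Finset.range m, ‖q‖ ^ (i + 1)) := (Real.exp_sum _ _).symm
    _ ≤ Real.exp (∑' i : ℕ, ‖q‖ ^ (i + 1)) := by
        apply Real.exp_le_exp.2
        exact Summable.sum_le_tsum _ (fun i _ => by positivity) (geom_aux hr0 hq)

lemma qfac_norm_ge (q : ℂ) (hq : ‖q‖ < 1) (k : ℕ) :
    Real.exp (∑' i : ℕ, Real.log (1 - ‖q‖ ^ (2 * i + 2))) ≤ ‖qfac (q ^ 2) k‖ := by
  have hr0 : (0:ℝ) ≤ ‖q‖ := norm_nonneg q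
  have hfacpos : ∀ i : ℕ, 0 < 1 - ‖q‖ ^ (2 * i + 2) := by
    intro i
    have : ‖q‖ ^ (2 * i + 2) < 1 := pow_lt_one₀ hr0 hq (by omega)
    linarith
  rw [qfac, norm_prod]
  calc Real.exp (∑' i : ℕ, Real.log (1 - ‖q‖ ^ (2 * i + 2)))
      ≤ Real.exp (∑ i ∈ Finset.range k, Real.log (1 - ‖q‖ ^ (2 * i + 2))) := by
        apply Real.exp_le_exp.2
        have hs := summable_log_aux hr0 hq
        have h1 := Summable.sum_le_tsum (Finset.range k)
          (fun i _ => by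
            simp only [neg_nonneg]
            exact Real.log_nonpos (hfacpos i).le (by nlinarith [pow_nonneg hr0 (2*i+2)]))
          hs.neg
        rw [tsum_neg] at h1
        simp only [Finset.sum_neg_distrib] at h1
        linarith
    _ = ∏ i ∈ Finset.range k, (1 - ‖q‖ ^ (2 * i + 2)) := by
        rw [Real.exp_sum]
        exact Finset.prod_congr rfl fun i _ => Real.exp_log (hfacpos i)
    _ ≤ ∏ i ∈ Finset.range k, ‖1 - ((q:ℂ) ^ 2) ^ (i + 1)‖ := by
        apply Finset.prod_le_prod (fun i _ => (hfacpos i).le)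
        intro i _
        calc 1 - ‖q‖ ^ (2 * i + 2) = ‖(1:ℂ)‖ - ‖((q:ℂ) ^ 2) ^ (i + 1)‖ := by
              rw [norm_one, norm_q2pow]
          _ ≤ ‖1 - ((q:ℂ) ^ 2) ^ (i + 1)‖ := norm_sub_norm_le _ _

lemma qbin_norm_le (q : ℂ) (hq : ‖q‖ < 1) (m k : ℕ) :
    ‖qbin (q ^ 2) m k‖ ≤ Real.exp (∑' i : ℕ, ‖q‖ ^ (i + 1)) *
      ((Real.exp (∑' i : ℕ, Real.log (1 - ‖q‖ ^ (2 * i + 2))))⁻¹) ^ 2 := by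
  set M := Real.exp (∑' i : ℕ, ‖q‖ ^ (i + 1)) with hM
  set m₀ := Real.exp (∑' i : ℕ, Real.log (1 - ‖q‖ ^ (2 * i + 2))) with hm₀
  have hm₀pos : 0 < m₀ := Real.exp_pos _
  have hMpos : 0 < M := Real.exp_pos _
  by_cases hkm : k ≤ m
  · rw [qbin, if_pos hkm, norm_div, norm_mul]
    have h1 := qfac_norm_le q hq m
    have h2 := qfac_norm_ge q hq k
    have h3 := qfac_norm_ge q hq (m - k)
    have hden : m₀ * m₀ ≤ ‖qfac (q ^ 2) k‖ * ‖qfac (q ^ 2) (m - k)‖ :=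
      mul_le_mul h2 h3 hm₀pos.le (le_trans hm₀pos.le h2)
    calc ‖qfac (q ^ 2) m‖ / (‖qfac (q ^ 2) k‖ * ‖qfac (q ^ 2) (m - k)‖)
        ≤ M / (m₀ * m₀) := by
          apply div_le_div₀ hMpos.le h1 (by positivity) hden
      _ = M * (m₀⁻¹) ^ 2 := by rw [div_eq_mul_inv, mul_inv, ← mul_assoc]; ring_nf
  · rw [qbin, if_neg hkm, norm_zero]
    positivity
/-- The summand in the finite approximation to the theta series. -/
def Fq (q : ℂ) (n : ℕ) (j : ℤ) : ℂ :=
  if j.natAbs ≤ n then (-1 : ℂ) ^ j * q ^ ((j ^ 2).toNat) * qbin (q ^ 2) (2 * n) ((j + n).toNat)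
  else 0

lemma neg_one_pow_inv (n : ℕ) : (((-1 : ℂ) ^ n)⁻¹) = (-1 : ℂ) ^ n := by
  have hsq : ((-1 : ℂ)) ^ n * ((-1 : ℂ)) ^ n = 1 := by
    rw [← pow_add, ← two_mul, pow_mul]; norm_num
  exact inv_eq_of_mul_eq_one_right hsq

lemma tsum_Fq (q : ℂ) (hq0 : q ≠ 0) (hc : ∀ i : ℕ, 1 - (q ^ 2) ^ (i + 1) ≠ 0) (n : ℕ) :
    ∑' j : ℤ, Fq q n j = (∏ j ∈ Finset.range n, (1 - q ^ (2 * j + 1))) ^ 2 := by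
  have h1 : ∑' j : ℤ, Fq q n j = ∑ j ∈ Finset.Icc (-(n : ℤ)) n, Fq q n j := by
    apply tsum_eq_sum
    intro j hj
    rw [Finset.mem_Icc] at hj
    rw [Fq, if_neg (by omega)]
  have hmap : Finset.Icc (-(n : ℤ)) n =
      (Finset.range (2 * n + 1)).map ⟨fun k : ℕ => (k : ℤ) - n,
        show Function.Injective (fun k : ℕ => (k : ℤ) - n) from fun a b hab => by simpa using hab⟩ := by
    ext j
    simp only [Finset.mem_Icc, Finset.mem_map, Finset.mem_range, Function.Embedding.coeFn_mk]
    constructor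
    · rintro ⟨ha, hb⟩
      exact ⟨(j + n).toNat, by omega, by omega⟩
    · rintro ⟨a, ha, rfl⟩
      omega
  rw [h1, hmap, Finset.sum_map]
  simp only [Function.Embedding.coeFn_mk]
  have hterm : ∀ k ∈ Finset.range (2 * n + 1),
      Fq q n ((k : ℤ) - n) = (-1 : ℂ) ^ n *
        ((-1 : ℂ) ^ k * qbin (q ^ 2) (2 * n) k * q ^ ((((k : ℤ) - n) ^ 2).toNat)) := by
    intro k hk
    rw [Finset.mem_range] at hk
    rw [Fq, if_pos (by omega), show ((k : ℤ) - n + n).toNat = k by omega]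
    have hsgn : (-1 : ℂ) ^ ((k : ℤ) - n) = (-1 : ℂ) ^ k * (-1 : ℂ) ^ n := by
      rw [zpow_sub₀ (by norm_num : (-1 : ℂ) ≠ 0), zpow_natCast, zpow_natCast, div_eq_mul_inv,
        neg_one_pow_inv]
    rw [hsgn]
    ring
  rw [Finset.sum_congr rfl hterm, ← Finset.mul_sum, gauss_finite q hq0 hc n, ← mul_assoc]
  have hsq : ((-1 : ℂ)) ^ n * ((-1 : ℂ)) ^ n = 1 := by
    rw [← pow_add, ← two_mul, pow_mul]; norm_num
  rw [hsq, one_mul]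
end GaussAux

open Filter Finset Topology

/-- Gauss's identity: for `‖q‖ < 1`,
`(q;q)_∞/(-q;q)_∞ = ∑_{n ∈ ℤ} (-1)^n q^{n²}`. -/
theorem gauss_theta_identity (q : ℂ) (hq : ‖q‖ < 1) :
    (∏' j : ℕ, (1 - q ^ (j + 1))) / (∏' j : ℕ, (1 + q ^ (j + 1))) =
      ∑' n : ℤ, (-1 : ℂ) ^ n * q ^ (n ^ 2).toNat := by
  rcases eq_or_ne q 0 with rfl | hq0
  · have h1 : (fun j : ℕ => (1 : ℂ) - 0 ^ (j + 1)) = fun _ => (1 : ℂ) := by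
      funext j; simp
    have h2 : (fun j : ℕ => (1 : ℂ) + 0 ^ (j + 1)) = fun _ => (1 : ℂ) := by
      funext j; simp
    rw [h1, h2, tprod_one]
    rw [tsum_eq_single (0 : ℤ) (fun n hn => by
      have : ((n ^ 2 : ℤ)).toNat ≠ 0 := by
        simp only [ne_eq, Int.toNat_eq_zero, not_le]
        positivity
      simp [zero_pow this])]
    norm_num
  have hr0 : (0 : ℝ) ≤ ‖q‖ := norm_nonneg q
  have one_sub_ne : ∀ z : ℂ, ‖z‖ < 1 → (1 : ℂ) - z ≠ 0 := by
    intro z hz h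
    have hz1 : z = 1 := by linear_combination -h
    rw [hz1] at hz; simp at hz
  have hc : ∀ i : ℕ, 1 - (q ^ 2) ^ (i + 1) ≠ 0 := fun i =>
    one_sub_ne _ (by rw [norm_q2pow]; exact pow_lt_one₀ hr0 hq (by omega))
  -- the four infinite products
  obtain ⟨mA, hA0⟩ := mult_aux q hq (fun j => -(q ^ (j + 1)))
    (fun j => by rw [norm_neg, norm_pow])
  simp only [← sub_eq_add_neg] at mA hA0
  obtain ⟨mB, hB0⟩ := mult_aux q hq (fun j => q ^ (j + 1))
    (fun j => by rw [norm_pow])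
  obtain ⟨mD, hD0⟩ := mult_aux q hq (fun j => -(q ^ (2 * j + 1)))
    (fun j => by rw [norm_neg, norm_pow]; exact pow_le_pow_of_le_one hr0 hq.le (by omega))
  simp only [← sub_eq_add_neg] at mD hD0
  obtain ⟨mC, hC0⟩ := mult_aux q hq (fun j => -((q ^ 2) ^ (j + 1)))
    (fun j => by rw [norm_neg, norm_q2pow]; exact pow_le_pow_of_le_one hr0 hq.le (by omega))
  simp only [← sub_eq_add_neg] at mC hC0
  obtain ⟨mC', hC'0⟩ := mult_aux q hq (fun j => -(q ^ (2 * j + 2)))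
    (fun j => by rw [norm_neg, norm_pow]; exact pow_le_pow_of_le_one hr0 hq.le (by omega))
  simp only [← sub_eq_add_neg] at mC' hC'0
  set A := ∏' j : ℕ, (1 - q ^ (j + 1)) with hA_def
  set B := ∏' j : ℕ, (1 + q ^ (j + 1)) with hB_def
  set C := ∏' i : ℕ, (1 - (q ^ 2) ^ (i + 1)) with hC_def
  set C' := ∏' j : ℕ, (1 - q ^ (2 * j + 2)) with hC'_def
  set D := ∏' j : ℕ, (1 - q ^ (2 * j + 1)) with hD_def
  have hCC' : C = C' := tprod_congr fun i => by rw [← pow_mul]; ring_nf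
  -- convergence of partial products of (q²;q²)
  have tq : Tendsto (fun m : ℕ => qfac (q ^ 2) m) atTop (𝓝 C) := by
    simpa [qfac] using mC.hasProd.tendsto_prod_nat
  -- the dominating bound
  set M := Real.exp (∑' i : ℕ, ‖q‖ ^ (i + 1)) with hM_def
  set m₀ := Real.exp (∑' i : ℕ, Real.log (1 - ‖q‖ ^ (2 * i + 2))) with hm0_def
  set K := M * (m₀⁻¹) ^ 2 with hK_def
  have hm₀pos : 0 < m₀ := Real.exp_pos _
  have hMpos : 0 < M := Real.exp_pos _
  have hKpos : 0 < K := by positivity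
  have habs : ∀ j : ℤ, ((j ^ 2 : ℤ)).toNat = j.natAbs ^ 2 := by
    intro j
    rw [show (j ^ 2 : ℤ) = ((j.natAbs ^ 2 : ℕ) : ℤ) by exact_mod_cast (Int.natAbs_sq j).symm,
      Int.toNat_natCast]
  have hbound_sum : Summable (fun j : ℤ => K * ‖q‖ ^ ((j ^ 2 : ℤ)).toNat) := by
    have hs : Summable (fun j : ℤ => ‖q‖ ^ j.natAbs) := by
      apply Summable.of_nat_of_neg_add_one
      · simpa using summable_geometric_of_lt_one hr0 hq
      · have := geom_aux hr0 hq
        refine this.congr fun n => ?_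
        congr 1 <;> omega
    apply Summable.mul_left
    apply hs.of_nonneg_of_le (fun j => by positivity)
    intro j
    rw [habs j]
    exact pow_le_pow_of_le_one hr0 hq.le (Nat.le_self_pow two_ne_zero _)
  -- pointwise limits
  have hab : ∀ j : ℤ, Tendsto (fun n : ℕ => Fq q n j) atTop
      (𝓝 ((-1 : ℂ) ^ j * q ^ ((j ^ 2 : ℤ)).toNat * C⁻¹)) := by
    intro j
    have h2n : Tendsto (fun n : ℕ => 2 * n) atTop atTop :=
      Filter.tendsto_atTop_mono (fun n => by simp only [id_eq]; omega) tendsto_id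
    have ht1 : Tendsto (fun n : ℕ => qfac (q ^ 2) (2 * n)) atTop (𝓝 C) := tq.comp h2n
    have ha : Tendsto (fun n : ℕ => ((j + (n : ℤ))).toNat) atTop atTop :=
      Filter.tendsto_atTop_atTop.2 fun b => ⟨b + j.natAbs, fun n hn => by omega⟩
    have hb : Tendsto (fun n : ℕ => 2 * n - ((j + (n : ℤ))).toNat) atTop atTop :=
      Filter.tendsto_atTop_atTop.2 fun b => ⟨b + j.natAbs, fun n hn => by omega⟩
    have ht2 := tq.comp ha
    have ht3 := tq.comp hb
    have hquot : Tendsto (fun n : ℕ => qfac (q ^ 2) (2 * n) /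
        (qfac (q ^ 2) ((j + (n : ℤ)).toNat) * qfac (q ^ 2) (2 * n - (j + (n : ℤ)).toNat)))
        atTop (𝓝 (C / (C * C))) := ht1.div (ht2.mul ht3) (mul_ne_zero hC0 hC0)
    have hCC : C / (C * C) = C⁻¹ := by
      field_simp
    rw [hCC] at hquot
    have hmul := hquot.const_mul ((-1 : ℂ) ^ j * q ^ ((j ^ 2 : ℤ)).toNat)
    refine Tendsto.congr' ?_ hmul
    filter_upwards [Filter.eventually_ge_atTop j.natAbs] with n hn
    rw [Fq, if_pos hn, qbin, if_pos (by omega)]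
  -- uniform bound
  have hFbound : ∀ᶠ n : ℕ in atTop, ∀ j : ℤ, ‖Fq q n j‖ ≤ K * ‖q‖ ^ ((j ^ 2 : ℤ)).toNat := by
    apply Filter.Eventually.of_forall
    intro n j
    rw [Fq]
    split_ifs with h
    · rw [norm_mul, norm_mul, norm_zpow, norm_neg, norm_one, one_zpow, one_mul, norm_pow]
      have hqb := qbin_norm_le q hq (2 * n) ((j + (n : ℤ)).toNat)
      calc ‖q‖ ^ ((j ^ 2 : ℤ)).toNat * ‖qbin (q ^ 2) (2 * n) ((j + (n : ℤ)).toNat)‖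
          ≤ ‖q‖ ^ ((j ^ 2 : ℤ)).toNat * K := by
            apply mul_le_mul_of_nonneg_left _ (by positivity)
            exact hqb
        _ = K * ‖q‖ ^ ((j ^ 2 : ℤ)).toNat := mul_comm _ _
    · rw [norm_zero]; positivity
  have tann := tendsto_tsum_of_dominated_convergence hbound_sum hab hFbound
  have htsumF : (fun n : ℕ => ∑' j : ℤ, Fq q n j)
      = fun n : ℕ => (∏ j ∈ Finset.range n, (1 - q ^ (2 * j + 1))) ^ 2 :=
    funext fun n => tsum_Fq q hq0 hc n
  rw [htsumF] at tann
  have tD : Tendsto (fun n : ℕ => (∏ j ∈ Finset.range n, (1 - q ^ (2 * j + 1))) ^ 2)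
      atTop (𝓝 (D ^ 2)) := by
    simpa only [pow_two] using mD.hasProd.tendsto_prod_nat.mul mD.hasProd.tendsto_prod_nat
  have hEq : ∑' j : ℤ, ((-1 : ℂ) ^ j * q ^ ((j ^ 2 : ℤ)).toNat * C⁻¹) = D ^ 2 :=
    tendsto_nhds_unique tann tD
  rw [tsum_mul_right] at hEq
  have hTheta : ∑' n : ℤ, (-1 : ℂ) ^ n * q ^ ((n ^ 2 : ℤ)).toNat = D ^ 2 * C := by
    rw [← hEq]
    field_simp
  -- product identities
  have hAB : A * B = C' := by
    rw [← Multipliable.tprod_mul mA mB]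
    apply tprod_congr
    intro j
    have hp : (q : ℂ) ^ (j + 1) * q ^ (j + 1) = q ^ (2 * j + 2) := by
      rw [← pow_add]; ring_nf
    linear_combination -hp
  have hA : A = D * C' := by
    have he : (∏' k : ℕ, (1 - q ^ (2 * k + 1))) * ∏' k : ℕ, (1 - q ^ (2 * k + 1 + 1))
        = ∏' k : ℕ, (1 - q ^ (k + 1)) := by
      exact tprod_even_mul_odd (f := fun j : ℕ => 1 - q ^ (j + 1))
        (mD.congr fun k => rfl) (mC'.congr fun k => by norm_num)
    have h2 : (∏' k : ℕ, (1 - q ^ (2 * k + 1 + 1))) = C' := by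
      rw [hC'_def]
    rw [hA_def, hD_def, ← h2, ← he]
  have hDB : D * B = 1 := by
    have h1 : C' * (D * B) = C' := by
      calc C' * (D * B) = (D * C') * B := by ring
        _ = A * B := by rw [← hA]
        _ = C' := hAB
    exact mul_left_cancel₀ hC'0 (h1.trans (mul_one C').symm)
  rw [hTheta, div_eq_iff hB0, hCC']
  linear_combination hA - D * C' * hDB
end

section
/- For |q|<1, (q²;q²)_∞^5 / ((q;q)_∞² (q⁴;q⁴)_∞²) = ∑_{n∈ℤ} q^{n²}. -/
open Filter Finset Topology Complex

noncomputable section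

namespace JacobiAux

/-- Gaussian binomial (in `q^2`), defined by recursion. -/
def g (q : ℂ) : ℕ → ℕ → ℂ
  | _, 0 => 1
  | 0, _+1 => 0
  | N+1, k+1 => q^(2*(k+1)) * g q N (k+1) + g q N k

@[simp] lemma g_zero_right (q : ℂ) (N : ℕ) : g q N 0 = 1 := by cases N <;> rfl

lemma g_succ (q : ℂ) (N k : ℕ) :
    g q (N+1) (k+1) = q^(2*(k+1)) * g q N (k+1) + g q N k := rfl

lemma g_eq_zero (q : ℂ) : ∀ N k, N < k → g q N k = 0 := by
  intro N
  induction N with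
  | zero => intro k hk; match k, hk with | k+1, _ => rfl
  | succ N ih =>
    intro k hk
    match k, hk with
    | k+1, hk =>
      rw [g_succ, ih (k+1) (by omega), ih k (by omega), mul_zero, add_zero]

/-- Gauss binomial theorem (homogeneous form). -/
lemma gauss (q : ℂ) : ∀ (N : ℕ) (x y : ℂ),
    ∏ k ∈ range N, (y + x * q^(2*k)) =
      ∑ k ∈ range (N+1), q^(k*(k-1)) * g q N k * x^k * y^(N-k) := by
  intro N
  induction N with
  | zero => intro x y; simp
  | succ N ih =>
    intro x y
    have h1 : ∏ k ∈ range (N+1), (y + x * q^(2*k))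
        = (y + x) * ∏ k ∈ range N, (y + (x * q^2) * q^(2*k)) := by
      rw [prod_range_succ']
      have he : ∀ k, y + x * q^(2*(k+1)) = y + (x*q^2)*q^(2*k) := by
        intro k; rw [mul_assoc, ← pow_add]; ring_nf
      simp only [he]
      rw [mul_comm]
      norm_num
    rw [h1, ih (x * q^2) y, mul_sum]
    have expand : ∀ k ∈ range (N+1),
        (y + x) * (q^(k*(k-1)) * g q N k * (x*q^2)^k * y^(N-k))
          = q^(k*(k+1)) * g q N k * x^k * y^(N+1-k)
            + q^(k*(k+1)) * g q N k * x^(k+1) * y^(N-k) := by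
      intro k hk
      rw [mem_range] at hk
      have hy : y^(N+1-k) = y^(N-k) * y := by
        rw [← pow_succ]; congr 1; omega
      have hqq : (q:ℂ)^(k*(k+1)) = q^(k*(k-1)) * (q^2)^k := by
        rw [← pow_mul, ← pow_add]; congr 1
        cases k with
        | zero => simp
        | succ j => simp only [Nat.succ_sub_one]; ring
      rw [hy, hqq, mul_pow]
      ring
    rw [sum_congr rfl expand, sum_add_distrib]
    rw [sum_range_succ' (fun k => q ^ (k * (k - 1)) * g q (N+1) k * x ^ k * y ^ (N + 1 - k)) (N+1)]
    simp only [g_succ, g_zero_right, Nat.sub_zero, pow_zero, mul_one, one_mul, Nat.zero_sub]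
    have e2 : ∀ j ∈ range (N+1),
        q ^ ((j+1) * (j + 1 - 1)) * (q ^ (2 * (j + 1)) * g q N (j+1) + g q N j) * x ^ (j+1) *
            y ^ (N + 1 - (j+1))
        = q ^ ((j+1)*(j+2)) * g q N (j+1) * x^(j+1) * y^(N-j)
          + q ^ (j*(j+1)) * g q N j * x^(j+1) * y^(N-j) := by
      intro j hj
      have h3 : N + 1 - (j+1) = N - j := by omega
      have h4 : (q:ℂ) ^ ((j+1)*(j+2)) = q ^ (j * (j+1)) * q ^ (2*(j+1)) := by
        rw [← pow_add]; congr 1; ring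
      have h5 : (j+1) * (j+1-1) = j * (j+1) := by
        simp only [Nat.succ_sub_one]; ring
      rw [h3, h5, h4]
      ring
    rw [sum_congr rfl e2, sum_add_distrib]
    have hSa : ∑ k ∈ range (N+1), q^(k*(k+1)) * g q N k * x^k * y^(N+1-k)
        = (∑ j ∈ range (N+1), q^((j+1)*(j+2)) * g q N (j+1) * x^(j+1) * y^(N-j)) + y^(N+1) := by
      rw [sum_range_succ' (fun k => q ^ (k * (k + 1)) * g q N k * x ^ k * y ^ (N + 1 - k)) N,
          sum_range_succ (fun j => q ^ ((j+1)*(j+2)) * g q N (j+1) * x^(j+1) * y^(N-j)) N,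
          g_eq_zero q N (N+1) (by omega)]
      simp only [g_zero_right, pow_zero, mul_one, one_mul, Nat.sub_zero, mul_zero, zero_mul,
        add_zero]
      congr 1
      apply sum_congr rfl
      intro j hj
      have h6 : N + 1 - (j+1) = N - j := by omega
      rw [h6]
    rw [hSa]
    ring

/-- Product formula for the Gaussian binomial, in multiplied-out form. -/
lemma g_mul (q : ℂ) : ∀ N k, g q N k * ∏ i ∈ range k, (1 - q^(2*i+2))
    = ∏ i ∈ range k, (1 - q^(2*(N-i))) := by
  intro N
  induction N with
  | zero =>
    intro k
    cases k with
    | zero => simp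
    | succ j =>
      rw [prod_range_succ' (fun i => 1 - q^(2*(0-i))) j]
      have : g q 0 (j+1) = 0 := rfl
      simp [this]
  | succ N ih =>
    intro k
    cases k with
    | zero => simp
    | succ j =>
      rw [g_succ, prod_range_succ (fun i => 1 - q^(2*i+2)) j,
          prod_range_succ' (fun i => 1 - q^(2*(N+1-i))) j]
      have hsimp : ∀ i, N + 1 - (i+1) = N - i := fun i => by omega
      simp only [hsimp, Nat.sub_zero]
      have key : (q ^ (2 * (j + 1)) * g q N (j + 1) + g q N j) *
            ((∏ i ∈ range j, (1 - q ^ (2 * i + 2))) * (1 - q ^ (2 * j + 2)))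
          = q ^ (2 * (j + 1)) * (g q N (j+1) * ∏ i ∈ range (j+1), (1 - q ^ (2 * i + 2)))
            + (g q N j * ∏ i ∈ range j, (1 - q ^ (2 * i + 2))) * (1 - q ^ (2 * (j+1))) := by
        rw [prod_range_succ (fun i => 1 - q^(2*i+2)) j]
        have : 2*j+2 = 2*(j+1) := by omega
        rw [this]; ring
      rw [key, ih (j+1), ih j, prod_range_succ (fun i => 1 - q^(2*(N-i))) j]
      rcases le_or_gt j N with hj | hj
      · have hpow : (q:ℂ)^(2*(j+1)) * q^(2*(N-j)) = q^(2*(N+1)) := by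
          rw [← pow_add]; congr 1; omega
        calc q ^ (2 * (j + 1)) * ((∏ i ∈ range j, (1 - q ^ (2 * (N - i)))) * (1 - q ^ (2 * (N - j))))
              + (∏ i ∈ range j, (1 - q ^ (2 * (N - i)))) * (1 - q ^ (2 * (j + 1)))
            = (∏ i ∈ range j, (1 - q ^ (2 * (N - i)))) *
                (q ^ (2*(j+1)) * (1 - q^(2*(N-j))) + (1 - q ^ (2 * (j + 1)))) := by ring
          _ = (∏ i ∈ range j, (1 - q ^ (2 * (N - i)))) * (1 - q ^ (2 * (N+1))) := by
              rw [mul_sub (q ^ (2 * (j + 1))), hpow, mul_one]; ring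
      · have hz : (∏ i ∈ range j, (1 - q ^ (2 * (N - i)))) = 0 := by
          apply prod_eq_zero (mem_range.mpr hj)
          simp
        rw [hz]; ring

lemma sum_odds (m : ℕ) : ∑ k ∈ range m, (2*k+1) = m*m := by
  induction m with
  | zero => rfl
  | succ m ih => rw [sum_range_succ, ih]; ring

/-- The finite Jacobi identity. -/
lemma core (q : ℂ) (hq0 : q ≠ 0) (m : ℕ) :
    (∏ j ∈ range m, (1 + q^(2*j+1)))^2
      = ∑ k ∈ range (2*m+1), g q (2*m) k * q^((((k:ℤ) - m)^2).toNat) := by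
  have hG := gauss q (2*m) q (q^(2*m))
  -- LHS of hG
  have hL : ∏ k ∈ range (2*m), (q^(2*m) + q * q^(2*k))
      = q^(3*(m*m)) * (∏ j ∈ range m, (1 + q^(2*j+1)))^2 := by
    have h2m : 2*m = m + m := by omega
    rw [h2m, prod_range_add (fun k => q^(m+m) + q * q^(2*k)) m m]
    have hlow : ∏ k ∈ range m, (q^(m+m) + q * q^(2*k))
        = q^(m*m) * ∏ j ∈ range m, (1 + q^(2*j+1)) := by
      have hterm : ∀ k ∈ range m, q^(m+m) + q * q^(2*k)
          = q^(2*k+1) * (1 + q^(2*(m-1-k)+1)) := by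
        intro k hk
        rw [mem_range] at hk
        have : (q:ℂ)^(2*k+1) * q^(2*(m-1-k)+1) = q^(m+m) := by
          rw [← pow_add]; congr 1; omega
        rw [mul_add, mul_one, this]
        rw [pow_succ]
        ring
      rw [prod_congr rfl hterm, prod_mul_distrib, prod_pow_eq_pow_sum, sum_odds]
      congr 1
      exact prod_range_reflect (fun j => 1 + q^(2*j+1)) m
    have hhigh : ∏ k ∈ range m, (q^(m+m) + q * q^(2*(m+k)))
        = q^(2*(m*m)) * ∏ j ∈ range m, (1 + q^(2*j+1)) := by
      have hterm : ∀ k ∈ range m, q^(m+m) + q * q^(2*(m+k))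
          = q^(m+m) * (1 + q^(2*k+1)) := by
        intro k hk
        have h : (q:ℂ) * q^(2*(m+k)) = q^(m+m) * q^(2*k+1) := by
          rw [← pow_succ', ← pow_add]; congr 1; omega
        rw [h]; ring
      rw [prod_congr rfl hterm, prod_mul_distrib, prod_const, card_range, ← pow_mul]
      congr 2
      ring
    rw [hlow, hhigh, show 3*(m*m) = m*m + 2*(m*m) by ring, pow_add]
    ring
  -- RHS of hG
  have hR : ∀ k ∈ range (2*m+1),
      q^(k*(k-1)) * g q (2*m) k * q^k * (q^(2*m))^(2*m-k)
        = q^(3*(m*m)) * (g q (2*m) k * q^((((k:ℤ) - m)^2).toNat)) := by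
    intro k hk
    rw [mem_range] at hk
    have hk' : k ≤ 2*m := by omega
    have hexp : k*(k-1) + k + 2*m*(2*m-k) = 3*(m*m) + (((k:ℤ) - m)^2).toNat := by
      have h1 : k*(k-1) + k = k*k := by
        cases k with
        | zero => rfl
        | succ j => simp only [Nat.succ_sub_one]; ring
      have h2 : ((((k:ℤ) - m)^2).toNat : ℤ) = ((k:ℤ) - m)^2 :=
        Int.toNat_of_nonneg (sq_nonneg _)
      have : ((k*(k-1) + k + 2*m*(2*m-k) : ℕ) : ℤ)
          = ((3*(m*m) + (((k:ℤ) - m)^2).toNat : ℕ) : ℤ) := by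
        push_cast [h1, Nat.cast_sub hk', h2]
        ring
      exact_mod_cast this
    rw [← pow_mul]
    have e : (q:ℂ)^(k*(k-1)) * q^k * q^(2*m*(2*m-k))
        = q^(3*(m*m)) * q^((((k:ℤ)-m)^2).toNat) := by
      rw [← pow_add, ← pow_add, ← pow_add, hexp]
    linear_combination (g q (2*m) k) * e
  rw [hL, sum_congr rfl hR, ← mul_sum] at hG
  exact mul_left_cancel₀ (pow_ne_zero _ hq0) hG

/-! ### Analytic helper lemmas -/

lemma prod_one_add_le_exp (s : Finset ℕ) (t : ℕ → ℝ) (ht : ∀ i ∈ s, 0 ≤ t i) :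
    ∏ i ∈ s, (1 + t i) ≤ Real.exp (∑ i ∈ s, t i) := by
  rw [Real.exp_sum]
  apply Finset.prod_le_prod
  · intro i hi; linarith [ht i hi]
  · intro i hi; have := Real.add_one_le_exp (t i); linarith

lemma norm_prod_one_sub_sub_one (s : Finset ℕ) (x : ℕ → ℂ) :
    ‖(∏ i ∈ s, (1 - x i)) - 1‖ ≤ (∏ i ∈ s, (1 + ‖x i‖)) - 1 := by
  classical
  induction s using Finset.induction_on with
  | empty => simp
  | insert a s ha ih =>
    rw [prod_insert ha, prod_insert ha]
    have hP : ‖∏ i ∈ s, (1 - x i)‖ ≤ ∏ i ∈ s, (1 + ‖x i‖) := by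
      have h1 : ‖∏ i ∈ s, (1 - x i)‖ ≤ ‖(∏ i ∈ s, (1 - x i)) - 1‖ + 1 := by
        calc ‖∏ i ∈ s, (1 - x i)‖ = ‖(∏ i ∈ s, (1 - x i)) - 1 + 1‖ := by ring_nf
          _ ≤ ‖(∏ i ∈ s, (1 - x i)) - 1‖ + ‖(1:ℂ)‖ := norm_add_le _ _
          _ = ‖(∏ i ∈ s, (1 - x i)) - 1‖ + 1 := by rw [norm_one]
      linarith [ih]
    have key : (1 - x a) * ∏ i ∈ s, (1 - x i) - 1
        = ((∏ i ∈ s, (1 - x i)) - 1) - x a * ∏ i ∈ s, (1 - x i) := by ring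
    calc ‖(1 - x a) * ∏ i ∈ s, (1 - x i) - 1‖
        ≤ ‖(∏ i ∈ s, (1 - x i)) - 1‖ + ‖x a‖ * ‖∏ i ∈ s, (1 - x i)‖ := by
          rw [key]; refine (norm_sub_le _ _).trans ?_; rw [norm_mul]
      _ ≤ ((∏ i ∈ s, (1 + ‖x i‖)) - 1) + ‖x a‖ * ∏ i ∈ s, (1 + ‖x i‖) := by
          have := norm_nonneg (x a)
          have := ih
          nlinarith [norm_nonneg (∏ i ∈ s, (1 - x i))]
      _ = (1 + ‖x a‖) * (∏ i ∈ s, (1 + ‖x i‖)) - 1 := by ring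

lemma one_sub_ge_exp {t c : ℝ} (ht0 : 0 ≤ t) (htc : t ≤ c) (hc : c < 1) :
    Real.exp (-(t / (1 - c))) ≤ 1 - t := by
  have h1c : (0:ℝ) < 1 - c := by linarith
  have h1t : (0:ℝ) < 1 - t := by linarith
  rw [Real.exp_neg]
  rw [inv_le_comm₀ (Real.exp_pos _) h1t]
  calc (1 - t)⁻¹ = 1 + t / (1 - t) := by field_simp; ring
    _ ≤ 1 + t / (1 - c) := by
        gcongr
    _ ≤ Real.exp (t / (1 - c)) := by
        have := Real.add_one_le_exp (t / (1 - c)); linarith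

lemma exp_le_prod_one_sub (s : Finset ℕ) (t : ℕ → ℝ) (c : ℝ) (hc : c < 1)
    (ht : ∀ i ∈ s, 0 ≤ t i ∧ t i ≤ c) :
    Real.exp (-((∑ i ∈ s, t i) / (1 - c))) ≤ ∏ i ∈ s, (1 - t i) := by
  have : Real.exp (-((∑ i ∈ s, t i) / (1 - c))) = ∏ i ∈ s, Real.exp (-(t i / (1-c))) := by
    rw [← Real.exp_sum]
    congr 1
    rw [sum_div, ← Finset.sum_neg_distrib]
  rw [this]
  apply Finset.prod_le_prod
  · intro i hi; exact (Real.exp_pos _).le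
  · intro i hi; exact one_sub_ge_exp (ht i hi).1 (ht i hi).2 hc

lemma geom_partial_le {r : ℝ} (h0 : 0 ≤ r) (h1 : r < 1) (n : ℕ) :
    ∑ i ∈ range n, r ^ i ≤ (1 - r)⁻¹ := by
  rw [← tsum_geometric_of_lt_one h0 h1]
  exact (summable_geometric_of_lt_one h0 h1).sum_le_tsum (range n) (fun i _ => pow_nonneg h0 i)

/-- Summability implies multipliability of `∏ (1 - x j)` (factors nonzero). -/
lemma mult_one_sub (x : ℕ → ℂ) (hlt : ∀ j, ‖x j‖ < 1) (hs : Summable fun j => ‖x j‖) :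
    Multipliable fun j => 1 - x j := by
  have hne : ∀ j, 1 - x j ≠ 0 := by
    intro j h
    have hx1 : x j = 1 := by linear_combination -h
    have := hlt j
    rw [hx1, norm_one] at this
    exact lt_irrefl _ this
  have hlog : Summable fun j => Complex.log (1 - x j) := by
    apply Summable.of_norm_bounded_eventually_nat (g := fun j => 3/2 * ‖x j‖) (hs.mul_left _)
    have : ∀ᶠ j in atTop, ‖x j‖ ≤ 1/2 := by
      have h0 := hs.tendsto_atTop_zero
      exact h0.eventually_le_const (by norm_num)
    filter_upwards [this] with j hj
    have := Complex.norm_log_one_add_half_le_self (z := -x j) (by simpa using hj)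
    simpa [sub_eq_add_neg] using this
  exact Complex.multipliable_of_summable_log hlog

section QFixed

variable {q : ℂ}

lemma summable_norm_pow (hq : ‖q‖ < 1) (c d : ℕ) (hc : 1 ≤ c) (hd : 1 ≤ d) :
    Summable fun j : ℕ => ‖q^(c*j+d)‖ := by
  refine Summable.of_nonneg_of_le (fun j => norm_nonneg _) (fun j => ?_)
    (summable_geometric_of_lt_one (norm_nonneg q) hq)
  rw [norm_pow]
  exact pow_le_pow_of_le_one (norm_nonneg q) hq.le (by nlinarith)

lemma norm_pow_lt_one (hq : ‖q‖ < 1) (n : ℕ) (hn : 1 ≤ n) : ‖q^n‖ < 1 := by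
  rw [norm_pow]
  calc ‖q‖^n ≤ ‖q‖^1 := pow_le_pow_of_le_one (norm_nonneg q) hq.le hn
    _ = ‖q‖ := pow_one _
    _ < 1 := hq

lemma mult_aux (hq : ‖q‖ < 1) (c d : ℕ) (hc : 1 ≤ c) (hd : 1 ≤ d) :
    Multipliable fun j : ℕ => 1 - q^(c*j+d) :=
  mult_one_sub _ (fun j => norm_pow_lt_one hq _ (by omega)) (summable_norm_pow hq c d hc hd)

lemma sum_pow_le (hq : ‖q‖ < 1) (c d n : ℕ) (hc : 1 ≤ c) (hd : 1 ≤ d) :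
    ∑ i ∈ range n, ‖q‖^(c*i+d) ≤ ‖q‖ * (1 - ‖q‖)⁻¹ := by
  calc ∑ i ∈ range n, ‖q‖^(c*i+d) ≤ ∑ i ∈ range n, ‖q‖ * ‖q‖^i := by
        apply Finset.sum_le_sum
        intro i _
        rw [← pow_succ']
        exact pow_le_pow_of_le_one (norm_nonneg q) hq.le (by nlinarith)
    _ = ‖q‖ * ∑ i ∈ range n, ‖q‖^i := by rw [mul_sum]
    _ ≤ ‖q‖ * (1-‖q‖)⁻¹ :=
        mul_le_mul_of_nonneg_left (geom_partial_le (norm_nonneg q) hq n) (norm_nonneg q)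

lemma pow_le_norm (hq : ‖q‖ < 1) (c d i : ℕ) (h1 : 1 ≤ c*i+d) : ‖q‖^(c*i+d) ≤ ‖q‖ := by
  calc ‖q‖^(c*i+d) ≤ ‖q‖^1 := pow_le_pow_of_le_one (norm_nonneg q) hq.le h1
    _ = ‖q‖ := pow_one _

lemma norm_prod_one_sub_ge (hq : ‖q‖ < 1) (c d n : ℕ) (hc : 1 ≤ c) (hd : 1 ≤ d) :
    Real.exp (-((‖q‖ * (1-‖q‖)⁻¹) / (1-‖q‖))) ≤ ‖∏ j ∈ range n, (1 - q^(c*j+d))‖ := by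
  have h1r : (0:ℝ) < 1 - ‖q‖ := by linarith
  calc Real.exp (-((‖q‖ * (1-‖q‖)⁻¹) / (1-‖q‖)))
      ≤ Real.exp (-((∑ i ∈ range n, ‖q‖^(c*i+d)) / (1-‖q‖))) := by
        rw [Real.exp_le_exp, neg_le_neg_iff]
        gcongr
        exact sum_pow_le hq c d n hc hd
    _ ≤ ∏ i ∈ range n, (1 - ‖q‖^(c*i+d)) :=
        exp_le_prod_one_sub _ _ ‖q‖ hq
          (fun i _ => ⟨pow_nonneg (norm_nonneg q) _, pow_le_norm hq c d i (by omega)⟩)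
    _ ≤ ∏ i ∈ range n, ‖1 - q^(c*i+d)‖ := by
        apply Finset.prod_le_prod
        · intro i _
          have := pow_le_norm hq c d i (by omega)
          linarith
        · intro i _
          have h := norm_sub_norm_le (1:ℂ) (q^(c*i+d))
          rw [norm_one, norm_pow] at h
          exact h
    _ = ‖∏ j ∈ range n, (1 - q^(c*j+d))‖ := (norm_prod _ _).symm

lemma tprod_ne (hq : ‖q‖ < 1) (c d : ℕ) (hc : 1 ≤ c) (hd : 1 ≤ d) : (∏' j : ℕ, (1 - q^(c*j+d))) ≠ 0 := by
  have hT := (mult_aux hq c d hc hd).hasProd.tendsto_prod_nat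
  have hN : Tendsto (fun n => ‖∏ j ∈ range n, (1 - q^(c*j+d))‖) atTop
      (𝓝 ‖∏' j : ℕ, (1 - q^(c*j+d))‖) := hT.norm
  have hge : Real.exp (-((‖q‖ * (1-‖q‖)⁻¹) / (1-‖q‖))) ≤ ‖∏' j : ℕ, (1 - q^(c*j+d))‖ :=
    ge_of_tendsto hN (Eventually.of_forall (fun n => norm_prod_one_sub_ge hq c d n hc hd))
  intro h0
  rw [h0, norm_zero] at hge
  exact absurd hge (not_le.mpr (Real.exp_pos _))

/-- Partial products of `(q²;q²)`. -/
def den (q : ℂ) (k : ℕ) : ℂ := ∏ i ∈ range k, (1 - q^(2*i+2))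

def num (q : ℂ) (N k : ℕ) : ℂ := ∏ i ∈ range k, (1 - q^(2*(N-i)))

lemma den_ne_zero (hq : ‖q‖ < 1) (k : ℕ) : den q k ≠ 0 := by
  apply prod_ne_zero_iff.mpr
  intro i _
  intro h
  have h1 : ‖q^(2*i+2)‖ < 1 := norm_pow_lt_one hq _ (by omega)
  have : (q:ℂ)^(2*i+2) = 1 := by linear_combination -h
  rw [this, norm_one] at h1
  exact lt_irrefl _ h1

lemma g_eq_div (hq : ‖q‖ < 1) (N k : ℕ) : g q N k = num q N k / den q k :=
  (eq_div_iff (den_ne_zero hq k)).mpr (g_mul q N k)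

lemma hr2 (hq : ‖q‖ < 1) : ‖q‖^2 < 1 := by
  nlinarith [norm_nonneg q]

lemma sum_num_le (hq : ‖q‖ < 1) (m k : ℕ) (hk : k ≤ 2*m) :
    ∑ i ∈ range k, ‖q‖^(2*(2*m-i)) ≤ ‖q‖^(2*(2*m-k+1)) * (1-‖q‖^2)⁻¹ := by
  rw [← sum_range_reflect]
  have hterm : ∀ i ∈ range k, ‖q‖^(2*(2*m-(k-1-i))) = ‖q‖^(2*(2*m-k+1)) * (‖q‖^2)^i := by
    intro i hi
    rw [mem_range] at hi
    rw [← pow_mul, ← pow_add]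
    congr 1
    omega
  rw [sum_congr rfl hterm, ← mul_sum]
  apply mul_le_mul_of_nonneg_left _ (pow_nonneg (norm_nonneg q) _)
  exact geom_partial_le (pow_nonneg (norm_nonneg q) 2) (hr2 hq) k

lemma norm_num_le (hq : ‖q‖ < 1) (m k : ℕ) (hk : k ≤ 2*m) :
    ‖num q (2*m) k‖ ≤ Real.exp (‖q‖^2 * (1-‖q‖^2)⁻¹) := by
  calc ‖num q (2*m) k‖ = ∏ i ∈ range k, ‖1 - q^(2*(2*m-i))‖ := norm_prod _ _
    _ ≤ ∏ i ∈ range k, (1 + ‖q‖^(2*(2*m-i))) := by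
        apply Finset.prod_le_prod (fun i _ => norm_nonneg _)
        intro i _
        calc ‖1 - q^(2*(2*m-i))‖ ≤ ‖(1:ℂ)‖ + ‖q^(2*(2*m-i))‖ := norm_sub_le _ _
          _ = 1 + ‖q‖^(2*(2*m-i)) := by rw [norm_one, norm_pow]
    _ ≤ Real.exp (∑ i ∈ range k, ‖q‖^(2*(2*m-i))) :=
        prod_one_add_le_exp _ _ (fun i _ => pow_nonneg (norm_nonneg q) _)
    _ ≤ Real.exp (‖q‖^2 * (1-‖q‖^2)⁻¹) := by
        rw [Real.exp_le_exp]
        refine (sum_num_le hq m k hk).trans ?_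
        apply mul_le_mul_of_nonneg_right _ (inv_nonneg.mpr (by have := hr2 hq; linarith))
        calc ‖q‖^(2*(2*m-k+1)) ≤ ‖q‖^2 := by
              apply pow_le_pow_of_le_one (norm_nonneg q) hq.le
              omega
          _ ≤ ‖q‖^2 := le_refl _

lemma norm_num_sub_one (hq : ‖q‖ < 1) (m k : ℕ) (hk : k ≤ 2*m) :
    ‖num q (2*m) k - 1‖ ≤ Real.exp (‖q‖^(2*(2*m-k+1)) * (1-‖q‖^2)⁻¹) - 1 := by
  calc ‖num q (2*m) k - 1‖ ≤ (∏ i ∈ range k, (1 + ‖q^(2*(2*m-i))‖)) - 1 :=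
        norm_prod_one_sub_sub_one _ _
    _ ≤ Real.exp (∑ i ∈ range k, ‖q‖^(2*(2*m-i))) - 1 := by
        have : ∀ i ∈ range k, (1:ℝ) + ‖q^(2*(2*m-i))‖ = 1 + ‖q‖^(2*(2*m-i)) := by
          intro i _; rw [norm_pow]
        rw [prod_congr rfl this]
        have := prod_one_add_le_exp (range k) (fun i => ‖q‖^(2*(2*m-i)))
          (fun i _ => pow_nonneg (norm_nonneg q) _)
        linarith
    _ ≤ Real.exp (‖q‖^(2*(2*m-k+1)) * (1-‖q‖^2)⁻¹) - 1 := by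
        have := sum_num_le hq m k hk
        have h2 := Real.exp_le_exp.mpr this
        linarith

/-- Uniform bound on the Gaussian binomials. -/
def B (q : ℂ) : ℝ :=
  Real.exp (‖q‖^2 * (1-‖q‖^2)⁻¹) * Real.exp ((‖q‖ * (1-‖q‖)⁻¹) / (1-‖q‖))

lemma B_pos (q : ℂ) : 0 < B q := mul_pos (Real.exp_pos _) (Real.exp_pos _)

lemma norm_g_le (hq : ‖q‖ < 1) (m k : ℕ) (hk : k ≤ 2*m) : ‖g q (2*m) k‖ ≤ B q := by
  rw [g_eq_div hq, norm_div]
  have hden : Real.exp (-((‖q‖ * (1-‖q‖)⁻¹) / (1-‖q‖))) ≤ ‖den q k‖ :=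
    norm_prod_one_sub_ge hq 2 2 k (by omega) (by omega)
  have hnum := norm_num_le hq m k hk
  rw [div_le_iff₀ (lt_of_lt_of_le (Real.exp_pos _) hden)]
  calc ‖num q (2*m) k‖ ≤ Real.exp (‖q‖^2 * (1-‖q‖^2)⁻¹) := hnum
    _ = B q * Real.exp (-((‖q‖ * (1-‖q‖)⁻¹) / (1-‖q‖))) := by
        rw [B, mul_assoc, ← Real.exp_add]
        simp
    _ ≤ B q * ‖den q k‖ := by
        apply mul_le_mul_of_nonneg_left hden (B_pos q).le

lemma den_tendsto (hq : ‖q‖ < 1) :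
    Tendsto (fun k => den q k) atTop (𝓝 (∏' j : ℕ, (1 - q^(2*j+2)))) :=
  (mult_aux hq 2 2 (by omega) (by omega)).hasProd.tendsto_prod_nat

lemma km_tendsto (n : ℤ) : Tendsto (fun m : ℕ => ((n + m : ℤ)).toNat) atTop atTop :=
  tendsto_atTop_atTop.mpr fun b => ⟨b + n.natAbs, fun m hm => by omega⟩

lemma num_tendsto (hq : ‖q‖ < 1) (n : ℤ) :
    Tendsto (fun m : ℕ => num q (2*m) ((n + m : ℤ)).toNat) atTop (𝓝 1) := by
  rw [tendsto_iff_norm_sub_tendsto_zero]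
  apply squeeze_zero' (Eventually.of_forall (fun m => norm_nonneg _))
    (g := fun m => Real.exp ((‖q‖^2)^(m - n.natAbs + 1) * (1-‖q‖^2)⁻¹) - 1)
  · filter_upwards [eventually_ge_atTop n.natAbs] with m hm
    have hk : ((n + m : ℤ)).toNat ≤ 2*m := by omega
    refine (norm_num_sub_one hq m _ hk).trans ?_
    have hE : (‖q‖:ℝ)^(2*(2*m-((n + m : ℤ)).toNat+1)) ≤ (‖q‖^2)^(m - n.natAbs + 1) := by
      rw [← pow_mul]
      apply pow_le_pow_of_le_one (norm_nonneg q) hq.le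
      omega
    have hmul : (‖q‖:ℝ)^(2*(2*m-((n + m : ℤ)).toNat+1)) * (1-‖q‖^2)⁻¹
        ≤ (‖q‖^2)^(m - n.natAbs + 1) * (1-‖q‖^2)⁻¹ :=
      mul_le_mul_of_nonneg_right hE (inv_nonneg.mpr (by have := hr2 hq; linarith))
    have := Real.exp_le_exp.mpr hmul
    linarith
  · have h1 : Tendsto (fun m : ℕ => m - n.natAbs + 1) atTop atTop :=
      tendsto_atTop_atTop.mpr fun b => ⟨b + n.natAbs, fun m hm => by omega⟩
    have h2 : Tendsto (fun k : ℕ => (‖q‖^2)^k * (1-‖q‖^2)⁻¹) atTop (𝓝 0) := by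
      rw [show (0:ℝ) = 0 * (1-‖q‖^2)⁻¹ by ring]
      exact (tendsto_pow_atTop_nhds_zero_of_lt_one (by positivity) (hr2 hq)).mul_const _
    have h3 : Tendsto (fun m : ℕ => (‖q‖^2)^(m - n.natAbs + 1) * (1-‖q‖^2)⁻¹) atTop (𝓝 0) :=
      h2.comp h1
    have h4 := (Real.continuous_exp.tendsto 0).comp h3
    rw [Real.exp_zero] at h4
    have := h4.sub_const 1
    simpa using this

/-- The summand indexed by `ℤ`. -/
def F (q : ℂ) (m : ℕ) (n : ℤ) : ℂ :=
  if n < -(m:ℤ) then 0 else g q (2*m) ((n + m : ℤ)).toNat * q^((n^2).toNat)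

lemma F_tendsto (hq : ‖q‖ < 1) (n : ℤ) :
    Tendsto (fun m => F q m n) atTop
      (𝓝 (q^((n^2).toNat) * (∏' j : ℕ, (1 - q^(2*j+2)))⁻¹)) := by
  have hP2 := tprod_ne hq 2 2 (by omega) (by omega)
  have hnum := num_tendsto hq n
  have hden : Tendsto (fun m : ℕ => den q (((n + m : ℤ)).toNat)) atTop
      (𝓝 (∏' j : ℕ, (1 - q^(2*j+2)))) := (den_tendsto hq).comp (km_tendsto n)
  have hdiv := (hnum.div hden hP2)
  have hmul := hdiv.mul_const (q^((n^2).toNat))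
  have heq : (1 : ℂ) / (∏' j : ℕ, (1 - q^(2*j+2))) * q^((n^2).toNat)
      = q^((n^2).toNat) * (∏' j : ℕ, (1 - q^(2*j+2)))⁻¹ := by
    rw [one_div]; ring
  rw [heq] at hmul
  apply hmul.congr'
  filter_upwards [eventually_ge_atTop n.natAbs] with m hm
  have hnm : ¬ (n < -(m:ℤ)) := by omega
  rw [F, if_neg hnm, g_eq_div hq]
  rfl

lemma tsum_F_eq (hq : ‖q‖ < 1) (m : ℕ) :
    ∑' n : ℤ, F q m n
      = ∑ k ∈ range (2*m+1), g q (2*m) k * q^((((k:ℤ) - m)^2).toNat) := by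
  rw [tsum_eq_sum (s := Finset.Icc (-(m:ℤ)) m) ?_]
  · apply Finset.sum_nbij' (i := fun n => ((n + m : ℤ)).toNat) (j := fun k => (k:ℤ) - m)
    · intro n hn
      rw [Finset.mem_Icc] at hn
      rw [mem_range]
      omega
    · intro k hk
      rw [mem_range] at hk
      rw [Finset.mem_Icc]
      omega
    · intro n hn
      rw [Finset.mem_Icc] at hn
      omega
    · intro k hk
      rw [mem_range] at hk
      omega
    · intro n hn
      rw [Finset.mem_Icc] at hn
      rw [F, if_neg (by omega)]
      have h : ((((n + m : ℤ)).toNat : ℤ) - m) = n := by omega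
      rw [h]
  · intro n hn
    rw [Finset.mem_Icc] at hn
    rw [F]
    by_cases h : n < -(m:ℤ)
    · rw [if_pos h]
    · rw [if_neg h]
      rw [g_eq_zero q (2*m) _ (by omega), zero_mul]

lemma summable_bound (hq : ‖q‖ < 1) (c : ℝ) :
    Summable fun n : ℤ => c * ‖q‖^((n^2).toNat) := by
  apply Summable.mul_left
  have hnat : Summable fun k : ℕ => ‖q‖^(k^2) := by
    refine Summable.of_nonneg_of_le (fun k => pow_nonneg (norm_nonneg q) _) (fun k => ?_)
      (summable_geometric_of_lt_one (norm_nonneg q) hq)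
    exact pow_le_pow_of_le_one (norm_nonneg q) hq.le (by nlinarith)
  apply Summable.of_nat_of_neg
  · apply hnat.congr
    intro k
    have h : (((k:ℤ))^2).toNat = k^2 := by rw [← Nat.cast_pow, Int.toNat_natCast]
    rw [h]
  · apply hnat.congr
    intro k
    have h0 : ((-(k:ℤ))^2) = ((k:ℤ))^2 := by ring
    have h : ((-(k:ℤ))^2).toNat = k^2 := by rw [h0, ← Nat.cast_pow, Int.toNat_natCast]
    rw [h]

lemma F_bound (hq : ‖q‖ < 1) (m : ℕ) (n : ℤ) : ‖F q m n‖ ≤ B q * ‖q‖^((n^2).toNat) := by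
  rw [F]
  by_cases h : n < -(m:ℤ)
  · rw [if_pos h, norm_zero]
    exact mul_nonneg (B_pos q).le (pow_nonneg (norm_nonneg q) _)
  · rw [if_neg h, norm_mul, norm_pow]
    apply mul_le_mul_of_nonneg_right _ (pow_nonneg (norm_nonneg q) _)
    by_cases hk : ((n + m : ℤ)).toNat ≤ 2*m
    · exact norm_g_le hq m _ hk
    · rw [g_eq_zero q (2*m) _ (by omega), norm_zero]
      exact (B_pos q).le

lemma main_limit (hq : ‖q‖ < 1) :
    Tendsto (fun m => ∑ k ∈ range (2*m+1), g q (2*m) k * q^((((k:ℤ) - m)^2).toNat))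
      atTop
      (𝓝 ((∑' n : ℤ, q^((n^2).toNat)) * (∏' j : ℕ, (1 - q^(2*j+2)))⁻¹)) := by
  have hDC := tendsto_tsum_of_dominated_convergence
    (f := fun m (n : ℤ) => F q m n)
    (g := fun n : ℤ => q^((n^2).toNat) * (∏' j : ℕ, (1 - q^(2*j+2)))⁻¹)
    (bound := fun n : ℤ => B q * ‖q‖^((n^2).toNat))
    (summable_bound hq (B q)) (fun n => F_tendsto hq n)
    (Eventually.of_forall (fun m n => F_bound hq m n))
  have heq : (fun m => ∑' n : ℤ, F q m n)
      = fun m => ∑ k ∈ range (2*m+1), g q (2*m) k * q^((((k:ℤ) - m)^2).toNat) :=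
    funext (fun m => tsum_F_eq hq m)
  rw [heq] at hDC
  rwa [tsum_mul_right] at hDC

lemma mult_C (hq : ‖q‖ < 1) : Multipliable fun j : ℕ => 1 + q^(2*j+1) := by
  have h := mult_one_sub (fun j => -(q^(2*j+1)))
    (fun j => by rw [norm_neg]; exact norm_pow_lt_one hq _ (by omega))
    (by simpa only [norm_neg] using summable_norm_pow hq 2 1 (by omega) (by omega))
  exact (multipliable_congr (fun j => by rw [sub_neg_eq_add])).mp h

/-- Jacobi triple product, specialized: `Θ = (q²;q²)_∞ · (-q;q²)_∞²`. -/
lemma jacobi_key (hq : ‖q‖ < 1) (hq0 : q ≠ 0) :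
    ∑' n : ℤ, q^((n^2).toNat)
      = (∏' j : ℕ, (1 - q^(2*j+2))) * (∏' j : ℕ, (1 + q^(2*j+1)))^2 := by
  have hP2 := tprod_ne hq 2 2 (by omega) (by omega)
  have hlim1 : Tendsto (fun m => (∏ j ∈ range m, (1 + q^(2*j+1)))^2) atTop
      (𝓝 ((∏' j : ℕ, (1 + q^(2*j+1)))^2)) :=
    ((mult_C hq).hasProd.tendsto_prod_nat).pow 2
  have hlim2 := main_limit hq
  have heqfun : (fun m => (∏ j ∈ range m, (1 + q^(2*j+1)))^2)
      = fun m => ∑ k ∈ range (2*m+1), g q (2*m) k * q^((((k:ℤ) - m)^2).toNat) :=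
    funext (fun m => core q hq0 m)
  rw [heqfun] at hlim1
  have heq := tendsto_nhds_unique hlim1 hlim2
  field_simp at heq
  rw [← heq]
  ring

end QFixed

end JacobiAux

open JacobiAux in
/-- Jacobi's identity: for `‖q‖ < 1`,
`(q²;q²)_∞^5 / ((q;q)_∞² (q⁴;q⁴)_∞²) = ∑_{n ∈ ℤ} q^{n²}`. -/
theorem jacobi_theta_eta_quotient (q : ℂ) (hq : ‖q‖ < 1) :
    (∏' j : ℕ, (1 - (q ^ 2) ^ (j + 1))) ^ 5 /
        ((∏' j : ℕ, (1 - q ^ (j + 1))) ^ 2 * (∏' j : ℕ, (1 - (q ^ 4) ^ (j + 1))) ^ 2) =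
      ∑' n : ℤ, q ^ (n ^ 2).toNat := by
  by_cases hq0 : q = 0
  · subst hq0
    have h1 : ∀ j : ℕ, (1 - ((0:ℂ) ^ 2) ^ (j + 1)) = 1 := by
      intro j; rw [zero_pow (by omega), zero_pow (by omega)]; ring
    have h2 : ∀ j : ℕ, (1 - (0:ℂ) ^ (j + 1)) = 1 := by
      intro j; rw [zero_pow (by omega)]; ring
    have h3 : ∀ j : ℕ, (1 - ((0:ℂ) ^ 4) ^ (j + 1)) = 1 := by
      intro j; rw [zero_pow (by omega), zero_pow (by omega)]; ring
    rw [tprod_congr h1, tprod_congr h2, tprod_congr h3, tprod_one]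
    have h4 : ∑' n : ℤ, (0:ℂ) ^ (n ^ 2).toNat = 1 := by
      rw [tsum_eq_single 0 ?_]
      · norm_num
      · intro n hn
        have h1 : 0 < n^2 := by
          rcases lt_or_gt_of_ne hn with h | h <;> nlinarith
        rw [zero_pow (by omega)]
    rw [h4]
    norm_num
  · -- notation
    set C := ∏' j : ℕ, (1 + q^(2*j+1)) with hC
    set Codd := ∏' j : ℕ, (1 - q^(2*j+1)) with hCodd
    set P2 := ∏' j : ℕ, (1 - q^(2*j+2)) with hP2
    set M42 := ∏' j : ℕ, (1 - q^(4*j+2)) with hM42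
    set A4 := ∏' j : ℕ, (1 - q^(4*j+4)) with hA4
    -- normalize the statement's products
    have hA2n : (∏' j : ℕ, (1 - (q ^ 2) ^ (j + 1))) = P2 := by
      apply tprod_congr
      intro j
      rw [← pow_mul]
      congr 2
    have hA4n : (∏' j : ℕ, (1 - (q ^ 4) ^ (j + 1))) = A4 := by
      apply tprod_congr
      intro j
      rw [← pow_mul]
      congr 2
    -- split (q;q) into odd and even parts
    have hs1 : Codd * P2 = ∏' j : ℕ, (1 - q ^ (j + 1)) := by
      have he : Multipliable fun k : ℕ => 1 - q^(2*k+1) := mult_aux hq 2 1 (by omega) (by omega)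
      have ho : Multipliable fun k : ℕ => 1 - q^(2*k+1+1) :=
        mult_aux hq 2 2 (by omega) (by omega)
      have h := tprod_even_mul_odd (f := fun j => 1 - q^(j+1)) he ho
      rw [hCodd, hP2, ← h]
    -- split (q²;q²) into parts with exponents 2 mod 4 and 0 mod 4
    have hs2 : M42 * A4 = P2 := by
      have e1 : ∀ k : ℕ, 2*(2*k)+2 = 4*k+2 := fun k => by ring
      have e2 : ∀ k : ℕ, 2*(2*k+1)+2 = 4*k+4 := fun k => by ring
      have he : Multipliable fun k : ℕ => 1 - q^(2*(2*k)+2) := by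
        simp only [e1]
        exact mult_aux hq 4 2 (by omega) (by omega)
      have ho : Multipliable fun k : ℕ => 1 - q^(2*(2*k+1)+2) := by
        simp only [e2]
        exact mult_aux hq 4 4 (by omega) (by omega)
      have h := tprod_even_mul_odd (f := fun j => 1 - q^(2*j+2)) he ho
      simp only [e1, e2] at h
      rw [hM42, hA4, hP2, ← h]
    -- (1+x)(1-x) = 1-x²
    have hs3 : C * Codd = M42 := by
      rw [hC, hCodd, hM42, ← Multipliable.tprod_mul (mult_C hq) (mult_aux hq 2 1 (by omega) (by omega))]
      apply tprod_congr
      intro j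
      have h2 : (q^(2*j+1))*(q^(2*j+1)) = q^(4*j+2) := by
        rw [← pow_add]; congr 1; ring
      linear_combination -h2
    have hkey := jacobi_key hq hq0
    have hCodd_ne : Codd ≠ 0 := tprod_ne hq 2 1 (by omega) (by omega)
    have hA4_ne : A4 ≠ 0 := tprod_ne hq 4 4 (by omega) (by omega)
    have hP2_ne : P2 ≠ 0 := tprod_ne hq 2 2 (by omega) (by omega)
    rw [hA2n, hA4n, ← hs1, hkey, ← hP2, ← hC]
    have hP2eq : P2 = C * Codd * A4 := by rw [← hs2, ← hs3]
    rw [div_eq_iff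
      (mul_ne_zero (pow_ne_zero _ (mul_ne_zero hCodd_ne hP2_ne)) (pow_ne_zero _ hA4_ne))]
    rw [hP2eq]
    ring
end
end
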